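/- arXiv:1808.04220 — 12 statements merged into one kernel-verified Lean document; each statement's English description precedes it below -/
import Mathlib

section
/- Let V be a finite set, let V₀ ⊆ V, and let g be any function from subsets of V to ℚ satisfying g(W) = g(W ∩ V₀) for every W ⊆ V. Then (1/(|V|+1)) · Σ_{W ⊆ V} g(W)/C(|V|,|W|) = (1/(|V₀|+1)) · Σ_{W₀ ⊆ V₀} g(W₀)/C(|V₀|,|W₀|). (Taking g(W) = β̃_i(C[W]) for a simplicial complex C whose vertices all lie in V₀, this says that the τ-vector of C is independent of whether it is computed with respect to the ground set V or with respect to V₀.) -/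
/-!
Write `w(n, k) = 1 / ((n + 1) C(n, k)) = ∫₀¹ xᵏ (1 - x)ⁿ⁻ᵏ dx`. Then `∑_{W ⊆ V} g(W) w(|V|, |W|)` is
the average over `x ∈ [0, 1]` of the expectation of `g` on an `x`-random subset of `V`, and when `g`
only sees `W ∩ V₀` that expectation is the one for an `x`-random subset of `V₀`. Combinatorially,
adding one irrelevant element `a` splits each `W` into `W` and `insert a W`, and
`w(n + 1, k) + w(n + 1, k + 1) = w(n, k)`.
-/

open Finset Nat

def betaWeight (K : Type*) [Field K] (n k : ℕ) : K := ((n + 1 : K) * n.choose k)⁻¹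

section
variable {K : Type*} [Field K]

lemma inv_succ_mul_sum_div_choose {α : Type*} (V : Finset α) (g : Finset α → K) :
    ((#V : K) + 1)⁻¹ * ∑ W ∈ V.powerset, g W / ((#V).choose #W : K)
      = ∑ W ∈ V.powerset, g W * betaWeight K #V #W := by
  rw [mul_sum]
  refine sum_congr rfl fun W _ => ?_
  rw [betaWeight, mul_inv]
  ring

variable [CharZero K]

lemma betaWeight_eq_factorial {n k : ℕ} (hk : k ≤ n) :
    betaWeight K n k = k ! * (n - k)! / (n + 1)! := by
  rw [betaWeight, Nat.cast_choose K hk, Nat.factorial_succ]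
  push_cast
  field_simp

lemma betaWeight_succ_add_betaWeight_succ {n k : ℕ} (hk : k ≤ n) :
    betaWeight K (n + 1) k + betaWeight K (n + 1) (k + 1) = betaWeight K n k := by
  obtain ⟨d, rfl⟩ := Nat.exists_eq_add_of_le hk
  rw [betaWeight_eq_factorial (by omega), betaWeight_eq_factorial (by omega),
    betaWeight_eq_factorial hk, show k + d + 1 - k = d + 1 by omega,
    show k + d + 1 - (k + 1) = d by omega, show k + d - k = d by omega]
  have : (k + d + 1 : K) ≠ 0 := by norm_cast
  have : (k + d + 1 + 1 : K) ≠ 0 := by norm_cast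
  push_cast [Nat.factorial_succ]
  field_simp
  ring

variable {α : Type*} [DecidableEq α]

lemma sum_powerset_insert_mul_betaWeight {B : Finset α} {a : α} (ha : a ∉ B)
    {g : Finset α → K} (hg : ∀ W ⊆ B, g (insert a W) = g W) :
    ∑ W ∈ (insert a B).powerset, g W * betaWeight K #(insert a B) #W
      = ∑ W ∈ B.powerset, g W * betaWeight K #B #W := by
  rw [sum_powerset_insert ha, ← sum_add_distrib, card_insert_of_notMem ha]
  refine sum_congr rfl fun W hW => ?_
  have hWB := mem_powerset.mp hW
  rw [hg W hWB, card_insert_of_notMem (fun h => ha (hWB h)), ← mul_add,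
    betaWeight_succ_add_betaWeight_succ (card_le_card hWB)]

lemma sum_powerset_union_inter_mul_betaWeight (V₀ V : Finset α) (f : Finset α → K) :
    ∑ W ∈ (V₀ ∪ V).powerset, f (W ∩ V₀) * betaWeight K #(V₀ ∪ V) #W
      = ∑ W ∈ V₀.powerset, f W * betaWeight K #V₀ #W := by
  induction V using Finset.induction_on with
  | empty =>
    rw [union_empty]
    exact sum_congr rfl fun W hW => by rw [inter_eq_left.mpr (mem_powerset.mp hW)]
  | @insert a V _ ih =>
    rw [union_insert]
    by_cases ha : a ∈ V₀ ∪ V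
    · rw [insert_eq_of_mem ha, ih]
    · rw [sum_powerset_insert_mul_betaWeight ha fun W _ => ?_, ih]
      rw [insert_inter_of_notMem (fun h => ha (mem_union_left V h))]

end

/-- marginalization identity underlying the independence of the
τ-vector from the ground set. -/
theorem tau_ground_set_independent {α : Type*} [DecidableEq α]
    (V V₀ : Finset α) (hsub : V₀ ⊆ V)
    (g : Finset α → ℚ) (hg : ∀ W ⊆ V, g W = g (W ∩ V₀)) :
    ((V.card : ℚ) + 1)⁻¹ * ∑ W ∈ V.powerset, g W / (V.card.choose W.card : ℚ)
      = ((V₀.card : ℚ) + 1)⁻¹ *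
          ∑ W₀ ∈ V₀.powerset, g W₀ / (V₀.card.choose W₀.card : ℚ) := by
  rw [inv_succ_mul_sum_div_choose, inv_succ_mul_sum_div_choose,
    ← sum_powerset_union_inter_mul_betaWeight V₀ V g, union_eq_right.mpr hsub]
  exact sum_congr rfl fun W hW => by rw [hg W (mem_powerset.mp hW)]
end

section
/- Let G be a finite simple graph on n vertices with vertex ordering v₁,…,v_n and in-degree sequence (δ₁,…,δ_n). Then τ₀(G) ≤ 1/(n+1) + Σ_{i=1}^{n} 1/((δ_i+1)(δ_i+2)) − 1, with equality if and only if the ordering v₁,…,v_n is a perfect elimination ordering of G. -/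
open Finset

/-- `τ₀` of a finite simple graph. -/
noncomputable def tau0 {V : Type*} [Fintype V] (G : SimpleGraph V) : ℚ :=
  ((Fintype.card V : ℚ) + 1)⁻¹ *
    ∑ W : Finset V,
      (if W.Nonempty then (Nat.card (G.induce (↑W : Set V)).ConnectedComponent : ℚ) - 1 else 0) /
        ((Fintype.card V).choose W.card : ℚ)

/-!
Call `v ∈ W` a local minimum of `G[W]` if it has no smaller neighbour in `W`. The smallest vertex
of each component of `G[W]` is a local minimum, so `b₀(G, W) + 1 ≤ #(local minima of G[W])` for
`W ≠ ∅`. Summed with the weights `1 / C(n, |W|)`, the nonempty sets have total weight `n`, and the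
local minima contribute, for each `v`, the weight of the sets containing `v` but none of its `δ_v`
earlier neighbours, which is `(n + 1) / ((δ_v + 1) (δ_v + 2))`.

Equality holds iff in every induced subgraph each local minimum is the minimum of its component,
and this is the perfect elimination property: for a PEO, a walk from `v` to a smaller vertex can be
shortcut at its largest vertex until its first step goes to a smaller neighbour of `v`; conversely,
non-adjacent earlier neighbours `u < w` of `i` make `w` a local but not a component minimum of
`G[{u, w, i}]`.
-/

lemma inv_choose_succ_add_inv_choose_succ_succ {N k : ℕ} (hk : k ≤ N) :
    ((N + 1).choose k : ℚ)⁻¹ + ((N + 1).choose (k + 1) : ℚ)⁻¹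
      = (N + 2) / ((N + 1) * N.choose k) := by
  have h₁ : (N.choose k * (N + 1) : ℚ) = (N + 1).choose k * (N + 1 - k) := by
    rw [← Nat.cast_add_one, ← Nat.cast_sub (by omega)]
    exact_mod_cast Nat.choose_mul_succ_eq N k
  have h₂ : ((N + 1) * N.choose k : ℚ) = (N + 1).choose (k + 1) * (k + 1) := by
    exact_mod_cast Nat.add_one_mul_choose_eq N k
  have hN : (N.choose k : ℚ) ≠ 0 := by exact_mod_cast (Nat.choose_pos hk).ne'
  have hN₁ : ((N + 1).choose k : ℚ) ≠ 0 := by exact_mod_cast (Nat.choose_pos (by omega)).ne'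
  have hN₂ : ((N + 1).choose (k + 1) : ℚ) ≠ 0 := by exact_mod_cast (Nat.choose_pos (by omega)).ne'
  rw [inv_add_inv hN₁ hN₂, div_eq_div_iff (by positivity) (by positivity)]
  linear_combination ((N + 1).choose (k + 1) : ℚ) * h₁ + ((N + 1).choose k : ℚ) * h₂

lemma sum_choose_mul_inv_choose_add_succ (m t : ℕ) :
    ∑ j ∈ range (m + 1), (m.choose j : ℚ) * ((m + t + 1).choose (j + 1) : ℚ)⁻¹
      = (m + t + 2) / ((t + 1) * (t + 2)) := by
  induction m with
  | zero =>
    simp only [zero_add, sum_range_one, Nat.choose_zero_right, Nat.choose_one_right]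
    push_cast
    field_simp
    ring
  | succ m ih =>
    rw [sum_choose_succ_mul (fun j _ => ((m + 1 + t + 1).choose (j + 1) : ℚ)⁻¹) m,
      ← sum_add_distrib]
    calc ∑ j ∈ range (m + 1), ((m.choose j : ℚ) * ((m + 1 + t + 1).choose (j + 1) : ℚ)⁻¹
          + (m.choose j : ℚ) * ((m + 1 + t + 1).choose (j + 1 + 1) : ℚ)⁻¹)
        = ∑ j ∈ range (m + 1), (m.choose j : ℚ) * ((m + t + 1).choose (j + 1) : ℚ)⁻¹
            * ((m + t + 3) / (m + t + 2)) := by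
          refine sum_congr rfl fun j hj => ?_
          have hj : j + 1 ≤ m + t + 1 := by rw [mem_range] at hj; omega
          rw [← mul_add, show m + 1 + t + 1 = m + t + 1 + 1 by ring,
            inv_choose_succ_add_inv_choose_succ_succ hj]
          push_cast
          field_simp
          ring
      _ = _ := by
          rw [← sum_mul, ih]
          push_cast
          field_simp
          ring

section Weights

variable {V : Type*} [Fintype V]

lemma sum_inv_choose_card_of_mem_of_disjoint [DecidableEq V] {v : V} {T : Finset V} (hv : v ∉ T) :
    ∑ W with v ∈ W ∧ Disjoint W T, ((Fintype.card V).choose #W : ℚ)⁻¹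
      = (Fintype.card V + 1) / ((#T + 1) * (#T + 2)) := by
  set R := (insert v T)ᶜ
  have hcard : Fintype.card V = #R + #T + 1 := by
    have := card_le_univ (insert v T)
    rw [card_compl, card_insert_of_notMem hv] at *
    omega
  have hvR : ∀ U ∈ R.powerset, v ∉ U := fun U hU hvU => by
    simpa [R] using mem_powerset.1 hU hvU
  have himage : ({W | v ∈ W ∧ Disjoint W T} : Finset (Finset V)) = R.powerset.image (insert v) := by
    ext W
    simp only [mem_filter, mem_univ, true_and, mem_image, mem_powerset]
    constructor
    · rintro ⟨hvW, hWT⟩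
      refine ⟨W.erase v, fun x hx => ?_, insert_erase hvW⟩
      simp only [R, mem_erase, mem_compl, mem_insert, not_or] at hx ⊢
      exact ⟨hx.1, disjoint_left.1 hWT hx.2⟩
    · rintro ⟨U, hUR, rfl⟩
      refine ⟨mem_insert_self v U, disjoint_insert_left.2 ⟨hv, ?_⟩⟩
      exact disjoint_of_subset_left hUR (disjoint_compl_left.mono_right (subset_insert v T))
  rw [himage, sum_image fun U hU U' hU' h => by
      rw [← erase_insert (hvR U hU), h, erase_insert (hvR U' hU')],
    sum_congr rfl fun U hU => by rw [card_insert_of_notMem (hvR U hU)],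
    sum_powerset_apply_card (fun j => ((Fintype.card V).choose (j + 1) : ℚ)⁻¹)]
  simp only [nsmul_eq_mul, hcard, sum_choose_mul_inv_choose_add_succ]
  push_cast
  ring

lemma sum_inv_choose_card_of_nonempty :
    ∑ W : Finset V with W.Nonempty, ((Fintype.card V).choose #W : ℚ)⁻¹ = Fintype.card V := by
  classical
  have hall : ∑ W : Finset V, ((Fintype.card V).choose #W : ℚ)⁻¹ = Fintype.card V + 1 := by
    rw [← powerset_univ, sum_powerset_apply_card (fun j => ((Fintype.card V).choose j : ℚ)⁻¹),
      card_univ]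
    calc _ = ∑ _ ∈ range (Fintype.card V + 1), (1 : ℚ) := by
          refine sum_congr rfl fun j hj => ?_
          rw [nsmul_eq_mul, mul_inv_cancel₀]
          exact_mod_cast (Nat.choose_pos (Nat.lt_succ_iff.1 (mem_range.1 hj))).ne'
      _ = _ := by simp
  rw [← sum_filter_add_sum_filter_not univ Finset.Nonempty] at hall
  simpa [not_nonempty_iff_eq_empty, filter_eq'] using hall

end Weights

namespace SimpleGraph

variable {α : Type*} [LinearOrder α]

def IsPerfectEliminationOrder (H : SimpleGraph α) : Prop :=
  ∀ i, H.IsClique {j | j < i ∧ H.Adj j i}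

variable {H : SimpleGraph α}

theorem IsPerfectEliminationOrder.induce (hH : H.IsPerfectEliminationOrder) (s : Set α) :
    (H.induce s).IsPerfectEliminationOrder :=
  fun _ _ hj _ hk hjk => hH _ hj hk (Subtype.coe_injective.ne hjk)

theorem IsPerfectEliminationOrder.exists_lt_adj_of_walk (hH : H.IsPerfectEliminationOrder)
    {v u : α} (p : H.Walk v u) (huv : u < v) : ∃ w < v, H.Adj w v := by
  classical
  induction hp : p.length using Nat.strong_induction_on generalizing v u with
  | _ L ih =>
  obtain ⟨m, hm, hmax⟩ := p.support.toFinset.exists_max_image id ⟨v, by simp⟩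
  rw [List.mem_toFinset] at hm
  replace hmax : ∀ x ∈ p.support, x ≤ m := fun x hx => hmax x (List.mem_toFinset.2 hx)
  rcases (hmax v p.start_mem_support).eq_or_lt with rfl | hvm
  · have hp : ¬ p.Nil := Walk.not_nil_of_ne huv.ne'
    have hsnd := p.snd_mem_support_of_mem_edges (p.mk_start_snd_mem_edges hp)
    exact ⟨p.snd, (hmax _ hsnd).lt_of_ne (p.adj_snd hp).ne', (p.adj_snd hp).symm⟩
  · set q₁ := p.takeUntil m hm
    set q₂ := p.dropUntil m hm
    have hq₁ : ¬ q₁.Nil := Walk.not_nil_of_ne hvm.ne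
    have hq₂ : ¬ q₂.Nil := Walk.not_nil_of_ne (huv.trans hvm).ne'
    have ha := q₁.adj_penultimate hq₁
    have hb := q₂.adj_snd hq₂
    have ha_lt : q₁.penultimate < m := (hmax _ (p.fst_mem_support_of_mem_edges
      (p.edges_takeUntil_subset_edges hm (q₁.mk_penultimate_end_mem_edges hq₁)))).lt_of_ne ha.ne
    have hb_lt : q₂.snd < m := (hmax _ (p.snd_mem_support_of_mem_edges
      (p.edges_dropUntil_subset_edges hm (q₂.mk_start_snd_mem_edges hq₂)))).lt_of_ne hb.ne'
    have hlen : q₁.dropLast.length + 1 + (q₂.tail.length + 1) = L := by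
      rw [Walk.length_dropLast_add_one hq₁, Walk.length_tail_add_one hq₂, ← hp,
        ← Walk.length_append, p.take_spec hm]
    -- the neighbours of `m` just before and after it on `p` are equal or adjacent
    by_cases hab : q₁.penultimate = q₂.snd
    · refine ih _ ?_ (q₁.dropLast.append (q₂.tail.copy hab.symm rfl)) huv rfl
      simp only [Walk.length_append, Walk.length_copy]
      omega
    · refine ih _ ?_
        (q₁.dropLast.append (.cons (hH m ⟨ha_lt, ha⟩ ⟨hb_lt, hb.symm⟩ hab) q₂.tail)) huv rfl
      simp only [Walk.length_append, Walk.length_cons]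
      omega

section Minima

variable [Fintype α] (H)

open Classical in
noncomputable def componentMins : Finset α := {v | ∀ u, H.Reachable v u → v ≤ u}

open Classical in
noncomputable def localMins : Finset α := {v | ∀ u, H.Adj v u → v ≤ u}

variable {H}

theorem mem_componentMins {v : α} : v ∈ H.componentMins ↔ ∀ u, H.Reachable v u → v ≤ u := by
  simp [componentMins]

theorem mem_localMins {v : α} : v ∈ H.localMins ↔ ∀ u, H.Adj v u → v ≤ u := by
  simp [localMins]

theorem componentMins_subset_localMins : H.componentMins ⊆ H.localMins := fun _ hv =>
  mem_localMins.2 fun u huv => mem_componentMins.1 hv u huv.reachable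

theorem IsPerfectEliminationOrder.localMins_subset_componentMins
    (hH : H.IsPerfectEliminationOrder) : H.localMins ⊆ H.componentMins := fun _ hv =>
  mem_componentMins.2 fun _ ⟨p⟩ => le_of_not_gt fun huv =>
    have ⟨w, hwv, hw⟩ := hH.exists_lt_adj_of_walk p huv
    (mem_localMins.1 hv w hw.symm).not_gt hwv

theorem card_componentMins : #H.componentMins = Nat.card H.ConnectedComponent := by
  classical
  rw [← Nat.card_eq_finsetCard]
  refine Nat.card_eq_of_bijective (fun v => H.connectedComponentMk v) ⟨?_, fun c => ?_⟩
  · rintro ⟨v, hv⟩ ⟨w, hw⟩ hvw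
    have hr : H.Reachable v w := ConnectedComponent.exact hvw
    exact Subtype.ext ((mem_componentMins.1 hv w hr).antisymm (mem_componentMins.1 hw v hr.symm))
  · have hc : ({v | H.connectedComponentMk v = c} : Finset α).Nonempty := by
      obtain ⟨v, hv⟩ := c.exists_rep
      exact ⟨v, mem_filter.2 ⟨mem_univ v, hv⟩⟩
    obtain ⟨hmin, hmin_le⟩ := mem_filter.1 (min'_mem _ hc)
    refine ⟨⟨_, mem_componentMins.2 fun u hu => min'_le _ _ (mem_filter.2 ⟨mem_univ u, ?_⟩)⟩,
      hmin_le⟩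
    rw [← hmin_le, ConnectedComponent.eq]
    exact hu.symm

end Minima

variable {V : Type*} [LinearOrder V] {G : SimpleGraph V}

theorem isPerfectEliminationOrder_iff_forall_localMins_subset :
    G.IsPerfectEliminationOrder ↔
      ∀ W : Finset V, (G.induce (W : Set V)).localMins ⊆ (G.induce (W : Set V)).componentMins := by
  refine ⟨fun hG W => (hG.induce _).localMins_subset_componentMins, fun h i => ?_⟩
  intro u hu w hw huw
  by_contra hnadj
  wlog hlt : u < w generalizing u w
  · exact this hw hu huw.symm (fun h => hnadj h.symm) (huw.lt_or_gt.resolve_left hlt)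
  -- `w` has no smaller neighbour in `G[{u, w, i}]` but reaches `u < w` through `i`
  classical
  set W : Finset V := {u, w, i}
  have hw_loc : (⟨w, by simp [W]⟩ : (W : Set V)) ∈ (G.induce (W : Set V)).localMins := by
    refine mem_localMins.2 fun ⟨x, hx⟩ hwx => ?_
    simp only [W, coe_insert, coe_singleton, Set.mem_insert_iff, Set.mem_singleton_iff] at hx
    rcases hx with rfl | rfl | rfl
    · exact absurd hwx.symm hnadj
    · exact absurd hwx G.irrefl
    · exact hw.1.le
  have hwi : (G.induce (W : Set V)).Adj ⟨w, by simp [W]⟩ ⟨i, by simp [W]⟩ := hw.2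
  have hiu : (G.induce (W : Set V)).Adj ⟨i, by simp [W]⟩ ⟨u, by simp [W]⟩ := hu.2.symm
  exact (mem_componentMins.1 (h W hw_loc) _ (hwi.reachable.trans hiu.reachable)).not_gt hlt

variable [Fintype V] (G) [DecidableRel G.Adj]

def lowerNeighborFinset (v : V) : Finset V := {u | u < v ∧ G.Adj u v}

theorem card_localMins_induce (W : Finset V) :
    #(G.induce (W : Set V)).localMins = #{v | v ∈ W ∧ Disjoint W (G.lowerNeighborFinset v)} := by
  rw [← card_map (Function.Embedding.subtype _)]
  congr 1
  ext v
  simp only [mem_map, Function.Embedding.subtype_apply, mem_localMins, mem_filter, Subtype.exists,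
    Subtype.forall, comap_adj, Finset.mem_coe, exists_and_right, exists_eq_right, mem_univ,
    true_and, lowerNeighborFinset, Finset.disjoint_left, not_and]
  refine ⟨fun ⟨hv, hloc⟩ => ⟨hv, fun u hu hlt hadj => (hloc u hu hadj.symm).not_gt hlt⟩,
    fun ⟨hv, h⟩ => ⟨hv, fun u hu hadj => le_of_not_gt fun hlt => h hu hlt hadj.symm⟩⟩

end SimpleGraph

open SimpleGraph

variable {V : Type*} [LinearOrder V] [Fintype V] (G : SimpleGraph V)

lemma tau0_eq_sum_card_componentMins :
    tau0 G = (∑ W : Finset V, (#(G.induce (W : Set V)).componentMins : ℚ)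
      / (Fintype.card V).choose #W - Fintype.card V) / (Fintype.card V + 1) := by
  have hterm : ∀ W : Finset V,
      (if W.Nonempty then (Nat.card (G.induce (W : Set V)).ConnectedComponent : ℚ) - 1 else 0)
        / (Fintype.card V).choose #W
      = #(G.induce (W : Set V)).componentMins / (Fintype.card V).choose #W
        - if W.Nonempty then ((Fintype.card V).choose #W : ℚ)⁻¹ else 0 := by
    intro W
    split_ifs with hW
    · rw [card_componentMins, sub_div, one_div]
    · have : #(G.induce (W : Set V)).componentMins = 0 := by
        simpa [not_nonempty_iff_eq_empty.1 hW] using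
          card_le_univ (G.induce (W : Set V)).componentMins
      simp [this]
  rw [tau0, sum_congr rfl fun W _ => hterm W, sum_sub_distrib, ← sum_filter,
    sum_inv_choose_card_of_nonempty, inv_mul_eq_div]

lemma sum_card_localMins_induce [DecidableRel G.Adj] :
    ∑ W : Finset V, (#(G.induce (W : Set V)).localMins : ℚ) / (Fintype.card V).choose #W
      = ∑ v, ((Fintype.card V + 1) : ℚ) /
          ((#(G.lowerNeighborFinset v) + 1) * (#(G.lowerNeighborFinset v) + 2)) := by
  simp only [card_localMins_induce, card_filter, Nat.cast_sum, sum_div, Nat.cast_ite, ite_div,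
    Nat.cast_one, Nat.cast_zero, zero_div, one_div]
  rw [sum_comm]
  refine sum_congr rfl fun v _ => ?_
  rw [← sum_filter, sum_inv_choose_card_of_mem_of_disjoint]
  simp [lowerNeighborFinset]

lemma sum_card_componentMins_div_choose_le :
    ∑ W : Finset V, (#(G.induce (W : Set V)).componentMins : ℚ) / (Fintype.card V).choose #W
      ≤ ∑ W : Finset V, (#(G.induce (W : Set V)).localMins : ℚ) / (Fintype.card V).choose #W :=
  sum_le_sum fun _ _ => by gcongr; exact componentMins_subset_localMins

lemma sum_card_componentMins_div_choose_eq_iff :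
    ∑ W : Finset V, (#(G.induce (W : Set V)).componentMins : ℚ) / (Fintype.card V).choose #W
      = ∑ W : Finset V, (#(G.induce (W : Set V)).localMins : ℚ) / (Fintype.card V).choose #W
      ↔ G.IsPerfectEliminationOrder := by
  rw [sum_eq_sum_iff_of_le fun _ _ => by gcongr; exact componentMins_subset_localMins,
    isPerfectEliminationOrder_iff_forall_localMins_subset]
  simp only [mem_univ, true_implies]
  refine forall_congr' fun W => ?_
  have hC : ((Fintype.card V).choose #W : ℚ) ≠ 0 := by
    exact_mod_cast (Nat.choose_pos (card_le_univ W)).ne'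
  rw [div_left_inj' hC, Nat.cast_inj]
  exact ⟨fun h => (eq_of_subset_of_card_le componentMins_subset_localMins h.ge).ge,
    fun h => congrArg _ (componentMins_subset_localMins.antisymm h)⟩

/-- For a graph `G` on `n` vertices with ordering `v₁,…,vₙ` (here `Fin n` with its
natural ordering) and in-degree sequence `δ`,
`τ₀(G) ≤ 1/(n+1) + Σᵢ 1/((δᵢ+1)(δᵢ+2)) − 1`, with equality iff the ordering is a perfect
elimination ordering (for every `i` the earlier neighbors of `vᵢ` form a clique). -/
theorem tau0_le_peo_bound {n : ℕ} (G : SimpleGraph (Fin n)) (δ : Fin n → ℕ)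
    (hδ : ∀ i, δ i = Nat.card {j : Fin n // j < i ∧ G.Adj j i}) :
    tau0 G ≤ 1 / ((n : ℚ) + 1)
        + (∑ i : Fin n, 1 / (((δ i : ℚ) + 1) * ((δ i : ℚ) + 2))) - 1 ∧
      (tau0 G = 1 / ((n : ℚ) + 1)
          + (∑ i : Fin n, 1 / (((δ i : ℚ) + 1) * ((δ i : ℚ) + 2))) - 1
        ↔ ∀ i : Fin n, G.IsClique {j : Fin n | j < i ∧ G.Adj j i}) := by
  classical
  have hτ := tau0_eq_sum_card_componentMins G
  have hSl := sum_card_localMins_induce G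
  have hle := sum_card_componentMins_div_choose_le G
  have heq := sum_card_componentMins_div_choose_eq_iff G
  simp only [Fintype.card_fin] at hτ hSl hle heq
  set Sc := ∑ W : Finset (Fin n), (#(G.induce (W : Set (Fin n))).componentMins : ℚ) / n.choose #W
  set Sl := ∑ W : Finset (Fin n), (#(G.induce (W : Set (Fin n))).localMins : ℚ) / n.choose #W
  have hbound : 1 / ((n : ℚ) + 1) + (∑ i, 1 / (((δ i : ℚ) + 1) * ((δ i : ℚ) + 2))) - 1
      = (Sl - n) / (n + 1) := by
    have hδ' : ∀ i, (δ i : ℚ) = #(G.lowerNeighborFinset i) := fun i => by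
      rw [hδ, Nat.card_eq_fintype_card, Fintype.card_subtype]; rfl
    rw [hSl, sub_div, sum_div]
    simp only [hδ']
    field_simp
    ring
  rw [hτ, hbound, div_le_div_iff_of_pos_right (by positivity), sub_le_sub_iff_right,
    div_left_inj' (by positivity), sub_left_inj]
  exact ⟨hle, heq⟩
end

section
/- For all natural numbers n, a, b with a ≤ b, the following identity holds in ℚ: Σ_{k=0}^{n} C(n,k)/C(n+b, k+a) = (n+b+1)/((b+1)·C(b,a)). -/
open Finset

/-!
Pascal's rule splits the sum for `(n + 1, a, b)` into the sums for `(n, a, b + 1)` and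
`(n, a + 1, b + 1)`. By induction on `n` it then suffices that the right-hand side obeys the same
recurrence, which comes down to `1/C(b+1,a) + 1/C(b+1,a+1) = (b+2)/((b+1) C(b,a))`: the two
reciprocals are `(b+1-a)/((b+1) C(b,a))` and `(a+1)/((b+1) C(b,a))`.
-/

theorem inv_choose_add_inv_choose_succ {a b : ℕ} (hab : a ≤ b) :
    ((b + 1).choose a : ℚ)⁻¹ + ((b + 1).choose (a + 1) : ℚ)⁻¹
      = ((b : ℚ) + 2) / (((b : ℚ) + 1) * b.choose a) := by
  have hC : ((b : ℚ) + 1) * b.choose a ≠ 0 := by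
    have := Nat.choose_pos hab
    positivity
  have hlow : ((b + 1).choose a : ℚ)⁻¹ = ((b : ℚ) + 1 - a) / (((b : ℚ) + 1) * b.choose a) := by
    have h := congrArg (Nat.cast : ℕ → ℚ) (Nat.choose_mul_succ_eq b a)
    push_cast [Nat.cast_sub (hab.trans b.le_succ)] at h
    have := Nat.choose_pos (hab.trans b.le_succ)
    rw [inv_eq_one_div, div_eq_div_iff (by positivity) hC]
    linarith
  have hup : ((b + 1).choose (a + 1) : ℚ)⁻¹ = ((a : ℚ) + 1) / (((b : ℚ) + 1) * b.choose a) := by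
    have h : ((b : ℚ) + 1) * b.choose a = (b + 1).choose (a + 1) * ((a : ℚ) + 1) := by
      exact_mod_cast Nat.add_one_mul_choose_eq b a
    have := Nat.choose_pos (Nat.succ_le_succ hab)
    rw [inv_eq_one_div, div_eq_div_iff (by positivity) hC]
    linarith
  rw [hlow, hup, ← add_div]
  ring

theorem sum_choose_div_choose_succ (n a b : ℕ) :
    ∑ k ∈ range (n + 2), ((n + 1).choose k : ℚ) / ((n + 1 + b).choose (k + a) : ℚ)
      = ∑ k ∈ range (n + 1), (n.choose k : ℚ) / ((n + (b + 1)).choose (k + a) : ℚ)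
        + ∑ k ∈ range (n + 1), (n.choose k : ℚ) / ((n + (b + 1)).choose (k + (a + 1)) : ℚ) := by
  have h := sum_choose_succ_mul (R := ℚ) (fun i j ↦ ((i + j + b).choose (i + a) : ℚ)⁻¹) n
  simp only [div_eq_mul_inv]
  convert h using 1
  · refine sum_congr rfl fun k hk ↦ ?_
    have hk := mem_range.mp hk
    congr 4; omega
  · congr 1 <;> refine sum_congr rfl fun k hk ↦ ?_ <;> have hk := mem_range.mp hk
    · congr 4; omega
    · congr 4 <;> omega

/-- For natural numbers `n`, `a ≤ b`:
`Σ_{k=0}^{n} C(n,k)/C(n+b, k+a) = (n+b+1)/((b+1)·C(b,a))` in `ℚ`. -/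
theorem sum_choose_div_choose (n a b : ℕ) (hab : a ≤ b) :
    ∑ k ∈ Finset.range (n + 1), (n.choose k : ℚ) / ((n + b).choose (k + a) : ℚ)
      = ((n : ℚ) + b + 1) / (((b : ℚ) + 1) * (b.choose a : ℚ)) := by
  induction n generalizing a b with
  | zero =>
    have : (b : ℚ) + 1 ≠ 0 := by positivity
    simp [div_mul_cancel_left₀ this]
  | succ n ih =>
    rw [sum_choose_div_choose_succ, ih a (b + 1) (by omega), ih (a + 1) (b + 1) (by omega)]
    calc _ = ((n : ℚ) + b + 2) / ((b : ℚ) + 2)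
            * (((b + 1).choose a : ℚ)⁻¹ + ((b + 1).choose (a + 1) : ℚ)⁻¹) := by
          push_cast
          simp only [div_eq_mul_inv, mul_inv]
          ring
      _ = _ := by
          rw [inv_choose_add_inv_choose_succ hab]
          have : (b : ℚ) + 2 ≠ 0 := by positivity
          field_simp
          push_cast; ring
end

section
/- Let d ≥ 1 and let f₀, k, j be integers with d+1 ≤ k ≤ f₀−1 and d ≤ j ≤ k−1, and let G be the Billera–Lee graph with parameters (f₀, k, j, d). Then τ₀(G) = 1/(f₀+1) − 1/(k+1) + 1/((j+1)(j+2)) + (f₀−k−1)/((d+1)(d+2)). -/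
open Finset

/-- The Billera–Lee graph with parameters `(f₀, k, j, d)`, on the vertex set `Fin f₀`
(zero-indexed version of `{1,…,f₀}`): all pairs inside the first `k` vertices are edges;
vertex `k` (the `(k+1)`-st) is joined to the first `j` vertices; every vertex beyond that is
joined to the first `d` vertices. -/
def billeraLeeGraph (f₀ k j d : ℕ) : SimpleGraph (Fin f₀) :=
  SimpleGraph.fromRel (fun u v =>
    ((u : ℕ) < k ∧ (v : ℕ) < k) ∨
    ((u : ℕ) = k ∧ (v : ℕ) < j) ∨
    (k + 1 ≤ (u : ℕ) ∧ (v : ℕ) < d))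

/-!
The Billera–Lee graph is a split graph: its first `k` vertices form a clique `K` and the remaining
vertices are pairwise non-adjacent. In an induced subgraph `G[W]` that meets `K`, everything lies
in the component of `W ∩ K` except the vertices `v ∈ W \ K` with no neighbour in `W`, which are
isolated; if `W` misses `K`, every vertex of `W` is isolated. Hence
`b₀(W) + [W = ∅] = ∑_{v ∉ K} [v ∈ W, W ∩ N(v) = ∅] - [W ∩ K = ∅]`, and the weighted average only
needs `∑_{W ∩ S = ∅} 1 / C(n, #W) = (n + 1) / (#S + 1)`. This gives, for every split graph,
`τ₀(G) = 1/(n+1) - 1/(#K+1) + ∑_{v ∉ K} 1/((deg v + 1)(deg v + 2))`.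
-/

theorem Nat.choose_mul_choose_sub_comm (n m q : ℕ) :
    n.choose m * (n - m).choose q = n.choose q * (n - q).choose m := by
  calc n.choose m * (n - m).choose q = n.choose (m + q) * (m + q).choose m := by
        rw [Nat.choose_mul (Nat.le_add_right m q), Nat.add_sub_cancel_left]
    _ = n.choose (m + q) * (q + m).choose q := by rw [Nat.choose_symm_add, Nat.add_comm]
    _ = n.choose q * (n - q).choose m := by
        rw [Nat.add_comm q m, Nat.choose_mul (Nat.le_add_left q m), Nat.add_sub_cancel]

theorem Nat.sum_range_choose_sub {n q : ℕ} (hq : q ≤ n) :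
    ∑ m ∈ range (n - q + 1), (n - m).choose q = (n + 1).choose (q + 1) := by
  rw [← Nat.sum_Icc_choose]
  refine sum_nbij' (fun i => n - i) (fun i => n - i) ?_ ?_ ?_ ?_ ?_ <;> intro i hi <;>
    simp only [mem_range, mem_Icc] at hi ⊢ <;> omega

section SubsetSums

variable {V : Type*} [Fintype V] [DecidableEq V]

theorem sum_boole_disjoint_div_choose (S : Finset V) :
    ∑ W : Finset V, (if Disjoint W S then (1 : ℚ) else 0) / (Fintype.card V).choose #W
      = (Fintype.card V + 1) / (#S + 1) := by
  set n := Fintype.card V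
  have hS : #S ≤ n := card_le_univ S
  have hSpos : (0 : ℚ) < n.choose #S := by exact_mod_cast Nat.choose_pos hS
  have hsubsets : ∑ W : Finset V, (if Disjoint W S then (1 : ℚ) else 0) / n.choose #W
      = ∑ W ∈ Sᶜ.powerset, 1 / (n.choose #W : ℚ) := by
    simp only [ite_div, zero_div]
    rw [← sum_filter]
    congr 1
    ext W
    simp [subset_compl_iff_disjoint_right]
  have hterm : ∀ m ∈ range (n - #S + 1),
      (n - #S).choose m • (1 / (n.choose m : ℚ)) = (n - m).choose #S / n.choose #S := by
    intro m hm
    have hm : (0 : ℚ) < n.choose m := by exact_mod_cast Nat.choose_pos (by simp at hm; omega)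
    rw [nsmul_eq_mul, mul_one_div, div_eq_div_iff hm.ne' hSpos.ne', mul_comm,
      mul_comm ((n - m).choose #S : ℚ)]
    exact_mod_cast (Nat.choose_mul_choose_sub_comm n m #S).symm
  -- `C(n - q, m) / C(n, m) = C(n - m, q) / C(n, q)` turns the sum over sizes into a hockey stick
  rw [hsubsets, sum_powerset_apply_card (fun m => 1 / (n.choose m : ℚ)), card_compl,
    sum_congr rfl hterm, ← sum_div, ← Nat.cast_sum, Nat.sum_range_choose_sub hS,
    div_eq_div_iff hSpos.ne' (by positivity)]
  exact_mod_cast (Nat.add_one_mul_choose_eq n #S).symm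

theorem sum_boole_mem_disjoint_div_choose {S : Finset V} {x : V} (hx : x ∉ S) :
    ∑ W : Finset V, (if x ∈ W ∧ Disjoint W S then (1 : ℚ) else 0) / (Fintype.card V).choose #W
      = (Fintype.card V + 1) / ((#S + 1) * (#S + 2)) := by
  have hsplit : ∀ W : Finset V, (if x ∈ W ∧ Disjoint W S then (1 : ℚ) else 0)
      = (if Disjoint W S then 1 else 0) - (if Disjoint W (insert x S) then 1 else 0) := by
    intro W
    by_cases hxW : x ∈ W <;> by_cases hWS : Disjoint W S <;> simp [hxW, hWS, disjoint_insert_right]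
  simp only [hsplit, sub_div, sum_sub_distrib, sum_boole_disjoint_div_choose,
    card_insert_of_notMem hx]
  push_cast
  field_simp
  ring

end SubsetSums

theorem Finset.card_image_ite_none_some {α : Type*} [DecidableEq α] (s : Finset α)
    (p : α → Prop) [DecidablePred p] :
    #(s.image fun a => if p a then none else some a)
      = (if ∃ a ∈ s, p a then 1 else 0) + #(s.filter (¬ p ·)) := by
  set g : α → Option α := fun a => if p a then none else some a
  have hsplit : s.image g = (s.filter p).image g ∪ (s.filter (¬ p ·)).image g := by
    rw [← image_union, filter_union_filter_not_eq]
  have hcore : (s.filter p).image g = (s.filter p).image fun _ => none :=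
    image_congr fun a ha => if_pos (mem_filter.1 ha).2
  have hrest : (s.filter (¬ p ·)).image g = (s.filter (¬ p ·)).image some :=
    image_congr fun a ha => if_neg (mem_filter.1 ha).2
  rw [hsplit, card_union_of_disjoint, hcore, hrest,
    card_image_of_injective _ (Option.some_injective α)]
  · split_ifs with h
    · rw [image_const (filter_nonempty_iff.2 h), card_singleton]
    · simp_all
  · rw [hcore, hrest, disjoint_left]
    intro a ha hsome
    obtain ⟨x, -, rfl⟩ := mem_image.1 hsome
    simp at ha

namespace SimpleGraph

variable {V : Type*} (G : SimpleGraph V)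

theorem card_connectedComponent_eq_card_range {β : Type*} (f : V → β)
    (hadj : ∀ u v, G.Adj u v → f u = f v) (hreach : ∀ u v, f u = f v → G.Reachable u v) :
    Nat.card G.ConnectedComponent = Nat.card (Set.range f) := by
  have hwalk : ∀ u v (p : G.Walk u v), p.IsPath → f u = f v := by
    intro u v p _
    clear ‹p.IsPath›
    induction p with
    | nil => rfl
    | cons h _ ih => exact (hadj _ _ h).trans ih
  have hinj : Function.Injective (ConnectedComponent.lift f hwalk) := by
    refine ConnectedComponent.ind₂ fun u v huv => ?_
    exact ConnectedComponent.sound (hreach u v huv)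
  rw [← Nat.card_range_of_injective hinj]
  exact congrArg (fun s : Set β => Nat.card s)
    (Quot.mk_surjective.range_comp (ConnectedComponent.lift f hwalk)).symm

theorem card_connectedComponent_induce_eq_ite_add_card_filter [DecidableEq V] (W : Finset V)
    (p : V → Prop) [DecidablePred p] (hadj : ∀ u ∈ W, ∀ v ∈ W, G.Adj u v → p u)
    (hreach : ∀ u v : (W : Set V), p u → p v → (G.induce W).Reachable u v) :
    Nat.card (G.induce W).ConnectedComponent
      = (if ∃ v ∈ W, p v then 1 else 0) + #(W.filter (¬ p ·)) := by
  set g : V → Option V := fun a => if p a then none else some a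
  have hcore : ∀ u v : (W : Set V), (G.induce W).Adj u v → p u ∧ p v := fun u v h =>
    ⟨hadj u u.2 v v.2 h, hadj v v.2 u u.2 h.symm⟩
  rw [card_connectedComponent_eq_card_range _ (g ∘ Subtype.val), Set.range_comp,
    Subtype.range_coe, ← coe_image, Nat.card_coe_set_eq, Set.ncard_coe_finset,
    card_image_ite_none_some]
  · intro u v h
    simp [g, (hcore u v h).1, (hcore u v h).2]
  · intro u v huv
    by_cases hu : p u <;> by_cases hv : p v <;> simp [g, hu, hv] at huv
    · exact hreach u v hu hv
    · exact huv ▸ Reachable.refl u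

variable [Fintype V] [DecidableEq V] [DecidableRel G.Adj] {K : Finset V}

theorem card_connectedComponent_induce_of_isClique_of_isIndepSet
    (hK : G.IsClique (K : Set V)) (hKc : G.IsIndepSet (K : Set V)ᶜ) (W : Finset V) :
    Nat.card (G.induce W).ConnectedComponent
      = (if ¬ Disjoint W K then 1 else 0)
        + #(W.filter fun v => v ∉ K ∧ Disjoint W (G.neighborFinset v)) := by
  set p : V → Prop := fun v => v ∈ K ∨ ¬ Disjoint W (G.neighborFinset v)
  have hclique : ∀ u v : (W : Set V), ↑u ∈ K → ↑v ∈ K → (G.induce W).Reachable u v := by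
    intro u v hu hv
    by_cases huv : u = v
    · rw [huv]
    · exact Adj.reachable (hK hu hv (Subtype.coe_ne_coe.2 huv))
  have hneighbor : ∀ u ∉ K, ¬ Disjoint W (G.neighborFinset u) → ∃ x ∈ W, x ∈ K ∧ G.Adj u x := by
    intro u huK hu
    obtain ⟨x, hxW, hx⟩ := not_disjoint_iff.1 hu
    rw [mem_neighborFinset] at hx
    refine ⟨x, hxW, by_contra fun hxK => hKc huK hxK hx.ne hx, hx⟩
  have hhub : ∀ u : (W : Set V), p u → ∃ w : (W : Set V), ↑w ∈ K ∧ (G.induce W).Reachable u w := by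
    intro u hu
    by_cases huK : ↑u ∈ K
    · exact ⟨u, huK, Reachable.refl u⟩
    · obtain ⟨x, hxW, hxK, hux⟩ := hneighbor u huK (hu.resolve_left huK)
      exact ⟨⟨x, hxW⟩, hxK, Adj.reachable hux⟩
  have hadj : ∀ u ∈ W, ∀ v ∈ W, G.Adj u v → p u := fun u _ v hv huv =>
    or_iff_not_imp_left.2 fun _ => not_disjoint_iff.2 ⟨v, hv, (mem_neighborFinset ..).2 huv⟩
  have hreach : ∀ u v : (W : Set V), p u → p v → (G.induce W).Reachable u v := by
    intro u v hu hv
    obtain ⟨w, hwK, huw⟩ := hhub u hu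
    obtain ⟨w', hw'K, hvw'⟩ := hhub v hv
    exact huw.trans ((hclique w w' hwK hw'K).trans hvw'.symm)
  have hnonempty : (∃ v ∈ W, p v) ↔ ¬ Disjoint W K := by
    refine ⟨fun ⟨v, hvW, hv⟩ => ?_, fun h => ?_⟩
    · by_cases hvK : v ∈ K
      · exact not_disjoint_iff.2 ⟨v, hvW, hvK⟩
      · obtain ⟨x, hxW, hxK, -⟩ := hneighbor v hvK (hv.resolve_left hvK)
        exact not_disjoint_iff.2 ⟨x, hxW, hxK⟩
    · obtain ⟨x, hxW, hxK⟩ := not_disjoint_iff.1 h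
      exact ⟨x, hxW, Or.inl hxK⟩
  rw [card_connectedComponent_induce_eq_ite_add_card_filter G W p hadj hreach]
  simp only [hnonempty]
  congr 2
  exact filter_congr fun v _ => by simp [p, not_or]


theorem reducedBetti_induce_of_isClique_of_isIndepSet (hK : G.IsClique (K : Set V))
    (hKc : G.IsIndepSet (K : Set V)ᶜ) (W : Finset V) :
    (if W.Nonempty then (Nat.card (G.induce W).ConnectedComponent : ℚ) - 1 else 0)
      = ∑ v ∈ Kᶜ, (if v ∈ W ∧ Disjoint W (G.neighborFinset v) then (1 : ℚ) else 0)
        - (if Disjoint W K then 1 else 0) + (if W = ∅ then 1 else 0) := by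
  have hisolated : ∑ v ∈ Kᶜ, (if v ∈ W ∧ Disjoint W (G.neighborFinset v) then (1 : ℚ) else 0)
      = #(W.filter fun v => v ∉ K ∧ Disjoint W (G.neighborFinset v)) := by
    rw [sum_boole]
    congr 2
    ext v
    simp only [mem_filter, mem_compl]
    tauto
  rw [hisolated, card_connectedComponent_induce_of_isClique_of_isIndepSet G hK hKc W]
  rcases W.eq_empty_or_nonempty with rfl | hW
  · simp
  · rw [if_pos hW, if_neg hW.ne_empty]
    split_ifs <;> push_cast <;> ring

theorem tau0_of_isClique_of_isIndepSet (hK : G.IsClique (K : Set V))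
    (hKc : G.IsIndepSet (K : Set V)ᶜ) :
    tau0 G = 1 / (Fintype.card V + 1) - 1 / (#K + 1)
      + ∑ v ∈ Kᶜ, 1 / ((G.degree v + 1) * (G.degree v + 2) : ℚ) := by
  set n := Fintype.card V
  have hisolated : ∀ v, ∑ W : Finset V,
      (if v ∈ W ∧ Disjoint W (G.neighborFinset v) then (1 : ℚ) else 0) / n.choose #W
        = (n + 1) / ((G.degree v + 1) * (G.degree v + 2)) := fun v => by
    rw [sum_boole_mem_disjoint_div_choose (G.notMem_neighborFinset_self v),
      card_neighborFinset_eq_degree]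
  have hempty : ∑ W : Finset V, (if W = ∅ then (1 : ℚ) else 0) / n.choose #W = 1 := by
    simp [ite_div]
  unfold tau0
  simp only [reducedBetti_induce_of_isClique_of_isIndepSet G hK hKc, add_div, sub_div, sum_div,
    sum_add_distrib, sum_sub_distrib]
  rw [sum_comm, sum_congr rfl fun v _ => hisolated v, sum_boole_disjoint_div_choose, hempty]
  simp only [← mul_one_div ((n : ℚ) + 1), ← mul_sum]
  field_simp
  ring

end SimpleGraph

section BilleraLee

variable {f₀ k j d : ℕ}

theorem isClique_billeraLeeGraph (hk : k < f₀) :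
    (billeraLeeGraph f₀ k j d).IsClique (Iio (⟨k, hk⟩ : Fin f₀) : Set (Fin f₀)) := by
  intro u hu v hv huv
  simp only [coe_Iio, Set.mem_Iio, Fin.lt_def] at hu hv
  exact (SimpleGraph.fromRel_adj _ u v).2 ⟨huv, Or.inl (Or.inl ⟨hu, hv⟩)⟩

theorem isIndepSet_billeraLeeGraph (hk : k < f₀) (hjk : j ≤ k) (hdk : d ≤ k) :
    (billeraLeeGraph f₀ k j d).IsIndepSet (Iio (⟨k, hk⟩ : Fin f₀) : Set (Fin f₀))ᶜ := by
  intro u hu v hv _ huv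
  simp only [coe_Iio, Set.mem_compl_iff, Set.mem_Iio, Fin.lt_def, not_lt] at hu hv
  rw [billeraLeeGraph, SimpleGraph.fromRel_adj] at huv
  omega

variable [DecidableRel (billeraLeeGraph f₀ k j d).Adj]

theorem degree_billeraLeeGraph_apex (hk : k < f₀) (hjk : j ≤ k) (hdk : d ≤ k) :
    (billeraLeeGraph f₀ k j d).degree ⟨k, hk⟩ = j := by
  rw [← SimpleGraph.card_neighborFinset_eq_degree,
    show (billeraLeeGraph f₀ k j d).neighborFinset ⟨k, hk⟩ = Iio ⟨j, by omega⟩ by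
      ext u
      rw [SimpleGraph.mem_neighborFinset, billeraLeeGraph, SimpleGraph.fromRel_adj, mem_Iio,
        Fin.lt_def, ne_eq, Fin.ext_iff]
      dsimp only
      omega,
    Fin.card_Iio]

theorem degree_billeraLeeGraph_of_lt {v : Fin f₀} (hv : k < v) (hjk : j ≤ k) (hdk : d ≤ k) :
    (billeraLeeGraph f₀ k j d).degree v = d := by
  rw [← SimpleGraph.card_neighborFinset_eq_degree,
    show (billeraLeeGraph f₀ k j d).neighborFinset v = Iio ⟨d, by omega⟩ by
      ext u
      rw [SimpleGraph.mem_neighborFinset, billeraLeeGraph, SimpleGraph.fromRel_adj, mem_Iio,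
        Fin.lt_def, ne_eq, Fin.ext_iff]
      dsimp only
      omega,
    Fin.card_Iio]

theorem sum_compl_Iio_billeraLeeGraph_degree (g : ℕ → ℚ) (hk : k < f₀) (hjk : j ≤ k)
    (hdk : d ≤ k) :
    ∑ v ∈ (Iio (⟨k, hk⟩ : Fin f₀))ᶜ, g ((billeraLeeGraph f₀ k j d).degree v)
      = g j + (f₀ - k - 1 : ℕ) * g d := by
  have hcompl : (Iio (⟨k, hk⟩ : Fin f₀))ᶜ = insert ⟨k, hk⟩ (Ioi ⟨k, hk⟩) := by
    rw [Ioi_insert]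
    ext v
    simp
  have htail : ∀ v ∈ Ioi (⟨k, hk⟩ : Fin f₀), g ((billeraLeeGraph f₀ k j d).degree v) = g d :=
    fun v hv => by rw [degree_billeraLeeGraph_of_lt (Fin.lt_def.1 (mem_Ioi.1 hv)) hjk hdk]
  rw [hcompl, sum_insert notMem_Ioi_self, degree_billeraLeeGraph_apex hk hjk hdk,
    sum_congr rfl htail, sum_const, Fin.card_Ioi, nsmul_eq_mul, Fin.val_mk, Nat.sub_right_comm]

end BilleraLee

theorem tau0_billeraLee_general (f₀ k j d : ℕ)
    (hk₁ : d + 1 ≤ k) (hk₂ : k + 1 ≤ f₀) (hj₂ : j + 1 ≤ k) :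
    tau0 (billeraLeeGraph f₀ k j d)
      = 1 / ((f₀ : ℚ) + 1) - 1 / ((k : ℚ) + 1)
        + 1 / (((j : ℚ) + 1) * ((j : ℚ) + 2))
        + ((f₀ : ℚ) - (k : ℚ) - 1) / (((d : ℚ) + 1) * ((d : ℚ) + 2)) := by
  classical
  have hk : k < f₀ := by omega
  rw [SimpleGraph.tau0_of_isClique_of_isIndepSet _ (isClique_billeraLeeGraph hk)
      (isIndepSet_billeraLeeGraph hk (by omega) (by omega)),
    sum_compl_Iio_billeraLeeGraph_degree (fun m => 1 / ((m + 1) * (m + 2) : ℚ)) hk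
      (by omega) (by omega),
    Fintype.card_fin, Fin.card_Iio, Nat.sub_sub, Nat.cast_sub hk]
  push_cast
  ring

/-- `τ₀` of the Billera–Lee graph with parameters `(f₀, k, j, d)` equals
`1/(f₀+1) − 1/(k+1) + 1/((j+1)(j+2)) + (f₀−k−1)/((d+1)(d+2))`. -/
theorem tau0_billeraLee (f₀ k j d : ℕ) (hd : 1 ≤ d)
    (hk₁ : d + 1 ≤ k) (hk₂ : k + 1 ≤ f₀) (hj₁ : d ≤ j) (hj₂ : j + 1 ≤ k) :
    tau0 (billeraLeeGraph f₀ k j d)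
      = 1 / ((f₀ : ℚ) + 1) - 1 / ((k : ℚ) + 1)
        + 1 / (((j : ℚ) + 1) * ((j : ℚ) + 2))
        + ((f₀ : ℚ) - (k : ℚ) - 1) / (((d : ℚ) + 1) * ((d : ℚ) + 2)) :=
  tau0_billeraLee_general f₀ k j d hk₁ hk₂ hj₂
end

section
/- Every strongly connected pure d-dimensional simplicial complex on a finite vertex set V with |V| = n admits an enumeration v₁,…,v_n of V whose in-degree sequence (δ₁,…,δ_n) with respect to the graph of the complex satisfies δ_i = i−1 for 1 ≤ i ≤ d+1 and δ_i ≥ d for d+2 ≤ i ≤ n (a d-dimensional in-degree sequence). -/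
open Finset

/-- The graph (1-skeleton) of a pure simplicial complex given by its family `F` of facets:
two distinct vertices are adjacent iff they lie in a common facet. -/
def complexGraph {V : Type*} (F : Finset (Finset V)) : SimpleGraph V :=
  SimpleGraph.fromRel (fun u v => ∃ S ∈ F, u ∈ S ∧ v ∈ S)

/-- The dual (adjacency) graph of a pure `d`-dimensional complex with facet family `F`:
two facets are adjacent iff their intersection has `d` elements. -/
def dualGraph {V : Type*} [DecidableEq V] (F : Finset (Finset V)) (d : ℕ) :
    SimpleGraph {S // S ∈ F} :=
  SimpleGraph.fromRel (fun S T => ((S : Finset V) ∩ (T : Finset V)).card = d)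

/-! List the vertices of one facet first. While the listed set `A` is not all of `V`, some facet
lies outside `A` while the first one lies inside, so a path between them in the dual graph has a
step from a facet `S ⊆ A` to a facet `B ⊄ A`. As `|S ∩ B| = d` and `|B| = d + 1`, the facet `B`
consists of `d` listed vertices and one new vertex `w`; listing `w` next gives it `d` earlier
neighbours, while the first `d + 1` vertices are pairwise adjacent. -/

section InDegree

variable {V : Type*} {n : ℕ} (G : SimpleGraph V)

noncomputable def inDegree (e : Fin n → V) (i : Fin n) : ℕ :=
  Nat.card {j : Fin n // j < i ∧ G.Adj (e j) (e i)}

variable {G}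

lemma inDegree_eq_of_forall_lt_adj {e : Fin n → V} {i : Fin n}
    (h : ∀ j < i, G.Adj (e j) (e i)) : inDegree G e i = i := by
  rw [inDegree, Nat.card_congr (Equiv.subtypeEquivRight fun j => and_iff_left_of_imp (h j)),
    Nat.card_eq_fintype_card, Fintype.card_subtype, filter_gt_eq_Iio, Fin.card_Iio]

lemma card_le_inDegree (e : Fin n ≃ V) {i : Fin n} {X : Finset V}
    (hX : ∀ u ∈ X, e.symm u < i ∧ G.Adj u (e i)) : #X ≤ inDegree G e i := by
  rw [← Nat.card_eq_finsetCard]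
  refine Nat.card_le_card_of_injective (fun u => ⟨e.symm u, ?_⟩) ?_
  · simpa using hX u u.2
  · intro u v huv
    simpa using huv

end InDegree

lemma complexGraph_adj_of_mem {V : Type*} {F : Finset (Finset V)} {u v : V} {S : Finset V}
    (huv : u ≠ v) (hS : S ∈ F) (hu : u ∈ S) (hv : v ∈ S) : (complexGraph F).Adj u v := by
  simp only [complexGraph, SimpleGraph.fromRel_adj]
  exact ⟨huv, Or.inl ⟨S, hS, hu, hv⟩⟩

section Facets

variable {V : Type*} [DecidableEq V] {F : Finset (Finset V)} {d : ℕ}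

lemma exists_subset_insert_of_dualGraph_adj (hfacet : ∀ S ∈ F, #S = d + 1)
    {S T : {S // S ∈ F}} (h : (dualGraph F d).Adj S T) :
    ∃ w ∈ (T : Finset V), (T : Finset V) ⊆ insert w S := by
  have hST : #((S : Finset V) ∩ T) = d := by
    rcases (SimpleGraph.fromRel_adj _ _ _).mp h with ⟨-, h | h⟩
    · exact h
    · rwa [inter_comm]
  obtain ⟨w, hw⟩ : ∃ w, (T : Finset V) \ S = {w} := by
    rw [← card_eq_one, card_sdiff, hfacet T T.2, hST]
    omega
  refine ⟨w, (mem_sdiff.mp (hw ▸ mem_singleton_self w)).1, ?_⟩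
  rw [insert_eq, union_comm]
  exact sdiff_le_iff.mp hw.le

lemma exists_facet_subset_insert_of_not_subset (hfacet : ∀ S ∈ F, #S = d + 1)
    (hsc : (dualGraph F d).Connected) {A S T : Finset V} (hS : S ∈ F) (hSA : S ⊆ A)
    (hT : T ∈ F) (hTA : ¬T ⊆ A) : ∃ B ∈ F, ∃ w ∉ A, w ∈ B ∧ B ⊆ insert w A := by
  obtain ⟨⟨⟨X, B⟩, hXB⟩, -, hXA, hBA⟩ :=
    (hsc.preconnected ⟨S, hS⟩ ⟨T, hT⟩).some.exists_boundary_dart {X | (X : Finset V) ⊆ A} hSA hTA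
  obtain ⟨w, hwB, hBX⟩ := exists_subset_insert_of_dualGraph_adj hfacet hXB
  have hBwA : (B : Finset V) ⊆ insert w A := hBX.trans (insert_subset_insert w hXA)
  refine ⟨B, B.2, w, fun hwA => hBA ?_, hwB, hBwA⟩
  simpa [hwA] using hBwA

end Facets

section FacetOrder

variable {V : Type*} [DecidableEq V] {F : Finset (Finset V)} {S : Finset V} {L : List V}

variable (F S L) in
def IsFacetOrder : Prop :=
  L.Nodup ∧ S.toList <+: L ∧
    ∀ i (hi : i < L.length), #S ≤ i → ∃ B ∈ F, L[i] ∈ B ∧ B ⊆ insert L[i] (L.take i).toFinset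

lemma isFacetOrder_toList : IsFacetOrder F S S.toList :=
  ⟨S.nodup_toList, List.prefix_refl _, fun i hi hS => absurd hi (by simpa using hS)⟩

lemma IsFacetOrder.append_singleton {w : V} {B : Finset V} (hL : IsFacetOrder F S L)
    (hw : w ∉ L) (hB : B ∈ F) (hwB : w ∈ B) (hBL : B ⊆ insert w L.toFinset) :
    IsFacetOrder F S (L ++ [w]) := by
  obtain ⟨hnd, hpre, hlater⟩ := hL
  refine ⟨List.concat_eq_append ▸ hnd.concat hw, hpre.trans (List.prefix_append _ _),
    fun i hi hSi => ?_⟩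
  rw [List.length_append, List.length_singleton] at hi
  rcases (show i < L.length ∨ i = L.length by omega) with hi' | rfl
  · simpa [List.getElem_append_left hi', List.take_append_of_le_length hi'.le]
      using hlater i hi' hSi
  · simpa using ⟨B, hB, hwB, hBL⟩

variable {d : ℕ} [Fintype V]

lemma exists_isFacetOrder_length_eq (hfacet : ∀ S ∈ F, #S = d + 1)
    (hcover : ∀ v : V, ∃ S ∈ F, v ∈ S) (hsc : (dualGraph F d).Connected) (hS : S ∈ F)
    {m : ℕ} (hSm : #S ≤ m) (hm : m ≤ Fintype.card V) :
    ∃ L, IsFacetOrder F S L ∧ L.length = m := by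
  induction m, hSm using Nat.le_induction with
  | base => exact ⟨S.toList, isFacetOrder_toList, S.length_toList⟩
  | succ m hSm ih =>
    obtain ⟨L, hL, rfl⟩ := ih (by omega)
    obtain ⟨v, hv⟩ : ∃ v, v ∉ L.toFinset := by
      by_contra! h
      have := (card_le_card (s := univ) fun v _ => h v).trans L.toFinset_card_le
      rw [card_univ] at this
      omega
    obtain ⟨T, hT, hvT⟩ := hcover v
    obtain ⟨B, hB, w, hwL, hwB, hBL⟩ := exists_facet_subset_insert_of_not_subset hfacet hsc hS
      (fun x hx => List.mem_toFinset.mpr (hL.2.1.subset (mem_toList.mpr hx))) hT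
      (fun h => hv (h hvT))
    exact ⟨L ++ [w], hL.append_singleton (by simpa using hwL) hB hwB hBL, by simp⟩

lemma exists_equiv_facet_order (hfacet : ∀ S ∈ F, #S = d + 1)
    (hcover : ∀ v : V, ∃ S ∈ F, v ∈ S) (hsc : (dualGraph F d).Connected) (hS : S ∈ F) :
    ∃ e : Fin (Fintype.card V) ≃ V, (∀ i : Fin _, (i : ℕ) < #S → e i ∈ S) ∧
      ∀ i : Fin _, #S ≤ (i : ℕ) → ∃ B ∈ F, e i ∈ B ∧ ∀ u ∈ B, u ≠ e i → e.symm u < i := by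
  obtain ⟨L, ⟨hnd, hpre, hlater⟩, hlen⟩ :=
    exists_isFacetOrder_length_eq hfacet hcover hsc hS (card_le_univ S) le_rfl
  have hall : ∀ v, v ∈ L := by
    have : L.toFinset = univ := eq_univ_of_card _ (by rw [List.toFinset_card_of_nodup hnd, hlen])
    simpa [Finset.ext_iff] using this
  let e := (finCongr hlen.symm).trans (hnd.getEquivOfForallMemList L hall)
  have he : ∀ i, e i = L[(i : ℕ)] := fun _ => rfl
  refine ⟨e, fun i hi => ?_, fun i hi => ?_⟩
  · rw [he, ← hpre.getElem (by simpa using hi)]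
    exact mem_toList.mp (List.getElem_mem _)
  · obtain ⟨B, hB, hiB, hBL⟩ := hlater i (by omega) hi
    refine ⟨B, hB, hiB, fun u hu hui => ?_⟩
    obtain ⟨j, hj, rfl⟩ := List.mem_take_iff_getElem.mp
      (List.mem_toFinset.mp ((mem_insert.mp (hBL hu)).resolve_left hui))
    have hj' : j < Fintype.card V := by omega
    rw [show L[j] = e ⟨j, hj'⟩ from rfl, e.symm_apply_apply]
    exact Fin.lt_def.mpr (lt_min_iff.mp hj).1

end FacetOrder

-- Zero-indexed: the `i` here is the paper's `i + 1`.
theorem exists_ddimensional_indegree_sequence_general {V : Type*} [Fintype V] [DecidableEq V]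
    (d : ℕ) (F : Finset (Finset V))
    (hfacet : ∀ S ∈ F, S.card = d + 1)
    (hcover : ∀ v : V, ∃ S ∈ F, v ∈ S)
    (hsc : (dualGraph F d).Connected) :
    ∃ e : Fin (Fintype.card V) ≃ V,
      (∀ i : Fin (Fintype.card V), (i : ℕ) ≤ d →
        Nat.card {j : Fin (Fintype.card V) //
          j < i ∧ (complexGraph F).Adj (e j) (e i)} = (i : ℕ)) ∧
      (∀ i : Fin (Fintype.card V), d + 1 ≤ (i : ℕ) →
        d ≤ Nat.card {j : Fin (Fintype.card V) //
          j < i ∧ (complexGraph F).Adj (e j) (e i)}) := by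
  obtain ⟨⟨S, hS⟩⟩ := hsc.nonempty
  obtain ⟨e, hfirst, hlater⟩ := exists_equiv_facet_order hfacet hcover hsc hS
  rw [hfacet S hS] at hfirst hlater
  refine ⟨e, fun i hi => inDegree_eq_of_forall_lt_adj fun j hj => ?_, fun i hi => ?_⟩
  · exact complexGraph_adj_of_mem (e.injective.ne hj.ne) hS (hfirst j (by omega))
      (hfirst i (by omega))
  · obtain ⟨B, hB, hiB, hBlt⟩ := hlater i hi
    calc d = #(B.erase (e i)) := by rw [card_erase_of_mem hiB, hfacet B hB, Nat.add_sub_cancel]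
      _ ≤ inDegree (complexGraph F) e i := card_le_inDegree e fun u hu =>
        ⟨hBlt u (mem_of_mem_erase hu) (ne_of_mem_erase hu),
          complexGraph_adj_of_mem (ne_of_mem_erase hu) hB (mem_of_mem_erase hu) hiB⟩

/-- Every strongly connected pure `d`-dimensional simplicial complex on a finite
vertex set `V` with `|V| = n` admits an enumeration `v₁,…,vₙ` of `V` (here an equivalence
`e : Fin n ≃ V`, zero-indexed) whose in-degree sequence `δ` with respect to the graph of the
complex satisfies `δᵢ = i − 1` for `1 ≤ i ≤ d+1` and `δᵢ ≥ d` for `d+2 ≤ i ≤ n`. -/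
theorem exists_ddimensional_indegree_sequence {V : Type*} [Fintype V] [DecidableEq V]
    (d : ℕ) (hd : 1 ≤ d) (F : Finset (Finset V)) (hne : F.Nonempty)
    (hfacet : ∀ S ∈ F, S.card = d + 1)
    (hcover : ∀ v : V, ∃ S ∈ F, v ∈ S)
    (hsc : (dualGraph F d).Connected) :
    ∃ e : Fin (Fintype.card V) ≃ V,
      (∀ i : Fin (Fintype.card V), (i : ℕ) ≤ d →
        Nat.card {j : Fin (Fintype.card V) //
          j < i ∧ (complexGraph F).Adj (e j) (e i)} = (i : ℕ)) ∧
      (∀ i : Fin (Fintype.card V), d + 1 ≤ (i : ℕ) →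
        d ≤ Nat.card {j : Fin (Fintype.card V) //
          j < i ∧ (complexGraph F).Adj (e j) (e i)}) :=
  exists_ddimensional_indegree_sequence_general d F hfacet hcover hsc
end

section
/- Let d ≥ 1, and let G₁ and G₂ be finite simple graphs on vertex sets V₁ and V₂ with |V₁| = n₁, |V₂| = n₂, such that D := V₁ ∩ V₂ has exactly d+1 elements and D is a clique in both G₁ and G₂. Let G be the graph on V₁ ∪ V₂ whose edge set is the union of the edge sets of G₁ and G₂. Then τ₀(G) = τ₀(G₁) + τ₀(G₂) + 1/(d+2) − 1/(n₁+1) − 1/(n₂+1) + 1/(n₁+n₂−d), where the last summand equals 1/(n+1) for n = n₁+n₂−d−1 the number of vertices of G. (This is the i = 0 case of the connected-sum formula for the τ-vector: the graph of a simplicial connected sum M₁ # M₂ of d-manifolds, d ≥ 2, is exactly such a union of the graphs of M₁ and M₂ glued along the (d+1)-clique on the removed facet.) -/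
/-!
Write `τ₀(G) = ∑_W b̃₀(G[W]) · w(n, |W|)` with `w(n, k) = 1 / ((n + 1) · C(n, k))`, the probability
of `W` when a size is drawn uniformly from `0, …, n` and then a subset of that size uniformly.
Because `w(n, k) = w(n + 1, k) + w(n + 1, k + 1)`, this distribution on subsets of `V` pushes
forward under `W ↦ W ∩ U` to the same distribution on subsets of `U`, so
`∑_W g(W ∩ U) w(n, |W|) = ∑_{A ⊆ U} g(A) w(|U|, |A|)`.

The clique `D = V₁ ∩ V₂` separates `V₁ \ D` from `V₂ \ D`, so for every `W` the components of
`G[W]` are those of `G[W ∩ V₁]` and `G[W ∩ V₂]`, with the two (unique) components containing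
`W ∩ D` identified when `W ∩ D ≠ ∅`. Hence `b̃₀(G[W])` is `b̃₀(G₁[W ∩ V₁]) + b̃₀(G₂[W ∩ V₂])`
corrected by the emptiness indicators of `W ∩ D`, `W ∩ V₁`, `W ∩ V₂` and `W`; an emptiness
indicator restricted to `U` has weighted sum `1 / (|U| + 1)`.
-/

open Finset

section SubsetWeight

variable {α : Type*} [DecidableEq α]

noncomputable def subsetWeight (n k : ℕ) : ℚ := (((n : ℚ) + 1) * n.choose k)⁻¹

theorem subsetWeight_eq_add {n k : ℕ} (hk : k ≤ n) :
    subsetWeight n k = subsetWeight (n + 1) k + subsetWeight (n + 1) (k + 1) := by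
  have hc : (0 : ℚ) < n.choose k := by exact_mod_cast Nat.choose_pos hk
  have hk' : (0 : ℚ) < n + 1 - k := by
    have : (k : ℚ) ≤ n := by exact_mod_cast hk
    linarith
  have h₁ : ((n + 1).choose k : ℚ) = n.choose k * (n + 1) / (n + 1 - k) := by
    rw [eq_div_iff hk'.ne']
    have := congrArg (Nat.cast : ℕ → ℚ) (Nat.choose_mul_succ_eq n k)
    push_cast [Nat.cast_sub (by omega : k ≤ n + 1)] at this
    exact this.symm
  have h₂ : ((n + 1).choose (k + 1) : ℚ) = (n + 1) * n.choose k / (k + 1) := by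
    rw [eq_div_iff (by positivity)]
    exact_mod_cast (Nat.add_one_mul_choose_eq n k).symm
  simp only [subsetWeight]
  push_cast
  rw [h₁, h₂]
  field_simp
  ring

theorem sum_powerset_inter_mul_subsetWeight (g : Finset α → ℚ) {U S : Finset α} (hUS : U ⊆ S) :
    ∑ W ∈ S.powerset, g (W ∩ U) * subsetWeight #S #W =
      ∑ A ∈ U.powerset, g A * subsetWeight #U #A := by
  obtain ⟨T, hT, rfl⟩ : ∃ T, Disjoint U T ∧ S = U ∪ T :=
    ⟨S \ U, disjoint_sdiff, (union_sdiff_of_subset hUS).symm⟩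
  clear hUS
  induction T using Finset.induction_on with
  | empty =>
    rw [union_empty]
    exact sum_congr rfl fun W hW => by rw [inter_eq_left.2 (mem_powerset.1 hW)]
  | insert x T hxT ih =>
    have hxU : x ∉ U := disjoint_right.1 hT (mem_insert_self x T)
    have hxUT : x ∉ U ∪ T := by simp [hxU, hxT]
    rw [union_insert, sum_powerset_insert hxUT, card_insert_of_notMem hxUT,
      ← ih (hT.mono_right (subset_insert x T)), ← sum_add_distrib]
    refine sum_congr rfl fun W hW => ?_
    have hW := mem_powerset.1 hW
    rw [insert_inter_of_notMem hxU, card_insert_of_notMem (fun h => hxUT (hW h)),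
      subsetWeight_eq_add (card_le_card hW)]
    ring

theorem sum_powerset_ite_eq_empty_mul_subsetWeight (S : Finset α) :
    ∑ A ∈ S.powerset, (if A = ∅ then 1 else 0) * subsetWeight #S #A = ((#S : ℚ) + 1)⁻¹ := by
  rw [sum_eq_single_of_mem ∅ (empty_mem_powerset S) fun A _ hA => by simp [hA]]
  simp [subsetWeight]

theorem sum_powerset_inter_eq_empty_mul_subsetWeight {U S : Finset α} (hUS : U ⊆ S) :
    ∑ W ∈ S.powerset, (if W ∩ U = ∅ then 1 else 0) * subsetWeight #S #W = ((#U : ℚ) + 1)⁻¹ :=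
  (sum_powerset_inter_mul_subsetWeight (fun A => if A = ∅ then 1 else 0) hUS).trans
    (sum_powerset_ite_eq_empty_mul_subsetWeight U)

end SubsetWeight

namespace SimpleGraph

variable {V : Type*} {G : SimpleGraph V}

theorem Reachable.eq_of_forall_adj {β : Sort*} {f : V → β} (hf : ∀ ⦃u v⦄, G.Adj u v → f u = f v)
    {u v : V} (h : G.Reachable u v) : f u = f v := by
  obtain ⟨w⟩ := h
  induction w with
  | nil => rfl
  | cons hadj _ ih => exact (hf hadj).trans ih

theorem IsClique.subsingleton_image_connectedComponentMk {s : Set V} (hs : G.IsClique s) :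
    (G.connectedComponentMk '' s).Subsingleton := by
  rintro _ ⟨u, hu, rfl⟩ _ ⟨v, hv, rfl⟩
  rcases eq_or_ne u v with rfl | huv
  · rfl
  · exact ConnectedComponent.connectedComponentMk_eq_of_adj (hs hu hv huv)

theorem card_connectedComponent_induce_induce (s : Set V) (t : Set s) :
    Nat.card ((G.induce s).induce t).ConnectedComponent =
      Nat.card (G.induce (Subtype.val '' t)).ConnectedComponent := by
  let e := ((Embedding.induce (G := G) s).comp (Embedding.induce t)).isoInduceRange
  have hrange : Set.range ((Embedding.induce (G := G) s).comp (Embedding.induce t)) =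
      Subtype.val '' t := by
    ext x
    constructor
    · rintro ⟨y, rfl⟩
      exact ⟨y.1, y.2, rfl⟩
    · rintro ⟨y, hy, rfl⟩
      exact ⟨⟨y, hy⟩, rfl⟩
  rw [Nat.card_congr e.connectedComponentEquiv, hrange]

theorem induce_sup_eq_left_of_isClique_inter {G₁ G₂ : SimpleGraph V} {s t : Set V}
    (hG₂ : ∀ a b, G₂.Adj a b → a ∈ t ∧ b ∈ t) (hcl : G₁.IsClique (s ∩ t)) :
    (G₁ ⊔ G₂).induce s = G₁.induce s := by
  ext u v
  refine ⟨fun huv => huv.elim id fun h => ?_, Or.inl⟩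
  exact hcl ⟨u.2, (hG₂ u v h).1⟩ ⟨v.2, (hG₂ u v h).2⟩ h.ne

section CliqueSeparator

variable {A B : Set V}

open Classical in
/-- When every edge lies in `A` or in `B` and `A ∩ B` is a clique, this is constant along edges of
`G` (a vertex outside `A` only has neighbours in `A` inside the clique), so it detects
reachability in `G[A]`. -/
noncomputable def shadow (A B : Set V) (v : V) : Set (G.induce A).ConnectedComponent :=
  if hv : v ∈ A then {(G.induce A).connectedComponentMk ⟨v, hv⟩}
  else (G.induce A).connectedComponentMk '' {d | (d : V) ∈ B}

theorem shadow_eq_of_adj_of_mem_of_notMem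
    (hsep : ∀ u v, G.Adj u v → u ∈ A ∧ v ∈ A ∨ u ∈ B ∧ v ∈ B) (hcl : G.IsClique (A ∩ B))
    {u v : V} (huv : G.Adj u v) (hu : u ∈ A) (hv : v ∉ A) :
    G.shadow A B u = G.shadow A B v := by
  have huB : u ∈ B := ((hsep u v huv).resolve_left fun h => hv h.2).1
  have hclA : (G.induce A).IsClique {d | (d : V) ∈ B} := fun d hd d' hd' hne =>
    hcl ⟨d.2, hd⟩ ⟨d'.2, hd'⟩ (Subtype.coe_injective.ne hne)
  rw [shadow, dif_pos hu, shadow, dif_neg hv]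
  exact (hclA.subsingleton_image_connectedComponentMk.eq_singleton_of_mem ⟨⟨u, hu⟩, huB, rfl⟩).symm

theorem shadow_eq_of_adj
    (hsep : ∀ u v, G.Adj u v → u ∈ A ∧ v ∈ A ∨ u ∈ B ∧ v ∈ B) (hcl : G.IsClique (A ∩ B))
    ⦃u v : V⦄ (huv : G.Adj u v) : G.shadow A B u = G.shadow A B v := by
  by_cases hu : u ∈ A <;> by_cases hv : v ∈ A
  · rw [shadow, dif_pos hu, shadow, dif_pos hv]
    exact congrArg _ (ConnectedComponent.connectedComponentMk_eq_of_adj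
      (show (G.induce A).Adj ⟨u, hu⟩ ⟨v, hv⟩ from huv))
  · exact shadow_eq_of_adj_of_mem_of_notMem hsep hcl huv hu hv
  · exact (shadow_eq_of_adj_of_mem_of_notMem hsep hcl huv.symm hv hu).symm
  · rw [shadow, dif_neg hu, shadow, dif_neg hv]

theorem reachable_induce_of_reachable
    (hsep : ∀ u v, G.Adj u v → u ∈ A ∧ v ∈ A ∨ u ∈ B ∧ v ∈ B) (hcl : G.IsClique (A ∩ B))
    {u v : A} (h : G.Reachable u v) : (G.induce A).Reachable u v := by
  have := h.eq_of_forall_adj (shadow_eq_of_adj hsep hcl)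
  rw [shadow, dif_pos u.2, shadow, dif_pos v.2, Set.singleton_eq_singleton_iff] at this
  exact ConnectedComponent.exact this

theorem exists_mem_inter_reachable
    (hsep : ∀ u v, G.Adj u v → u ∈ A ∧ v ∈ A ∨ u ∈ B ∧ v ∈ B) (hcl : G.IsClique (A ∩ B))
    {a b : V} (ha : a ∈ A) (hb : b ∈ B) (h : G.Reachable a b) :
    ∃ d ∈ A ∩ B, G.Reachable a d := by
  by_cases hbA : b ∈ A
  · exact ⟨b, ⟨hbA, hb⟩, h⟩
  have := h.eq_of_forall_adj (shadow_eq_of_adj hsep hcl)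
  rw [shadow, dif_pos ha, shadow, dif_neg hbA] at this
  obtain ⟨d, hdB, hd⟩ := this ▸ Set.mem_singleton ((G.induce A).connectedComponentMk ⟨a, ha⟩)
  exact ⟨d, ⟨d.2, hdB⟩, (ConnectedComponent.exact hd).symm.map (Embedding.induce A).toHom⟩

theorem injective_map_induce
    (hsep : ∀ u v, G.Adj u v → u ∈ A ∧ v ∈ A ∨ u ∈ B ∧ v ∈ B) (hcl : G.IsClique (A ∩ B)) :
    Function.Injective (ConnectedComponent.map (Embedding.induce (G := G) A).toHom) := by
  refine ConnectedComponent.ind₂ fun u v h => ?_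
  rw [ConnectedComponent.map_mk, ConnectedComponent.map_mk, ConnectedComponent.eq] at h
  exact ConnectedComponent.sound (reachable_induce_of_reachable hsep hcl h)

open Classical in
theorem card_connectedComponent_add_ite_of_isClique_inter [Finite V]
    (hcover : ∀ v, v ∈ A ∨ v ∈ B)
    (hsep : ∀ u v, G.Adj u v → u ∈ A ∧ v ∈ A ∨ u ∈ B ∧ v ∈ B) (hcl : G.IsClique (A ∩ B)) :
    Nat.card G.ConnectedComponent + (if (A ∩ B).Nonempty then 1 else 0) =
      Nat.card (G.induce A).ConnectedComponent + Nat.card (G.induce B).ConnectedComponent := by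
  set ιA := ConnectedComponent.map (Embedding.induce (G := G) A).toHom
  set ιB := ConnectedComponent.map (Embedding.induce (G := G) B).toHom
  have hunion : Set.range ιA ∪ Set.range ιB = Set.univ := by
    refine Set.eq_univ_of_forall (ConnectedComponent.ind fun v => ?_)
    rcases hcover v with hv | hv
    · exact Or.inl ⟨(G.induce A).connectedComponentMk ⟨v, hv⟩, rfl⟩
    · exact Or.inr ⟨(G.induce B).connectedComponentMk ⟨v, hv⟩, rfl⟩
  have hinter : Set.range ιA ∩ Set.range ιB = G.connectedComponentMk '' (A ∩ B) := by
    ext c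
    constructor
    · rintro ⟨⟨ca, rfl⟩, ⟨cb, hcb⟩⟩
      induction ca using ConnectedComponent.ind with | h a => ?_
      induction cb using ConnectedComponent.ind with | h b => ?_
      simp only [ιA, ιB, ConnectedComponent.map_mk, ConnectedComponent.eq] at hcb
      obtain ⟨d, hd, had⟩ := exists_mem_inter_reachable hsep hcl a.2 b.2 hcb.symm
      exact ⟨d, hd, (ConnectedComponent.sound had).symm⟩
    · rintro ⟨d, hd, rfl⟩
      exact ⟨⟨(G.induce A).connectedComponentMk ⟨d, hd.1⟩, rfl⟩,
        ⟨(G.induce B).connectedComponentMk ⟨d, hd.2⟩, rfl⟩⟩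
  have hcard : (G.connectedComponentMk '' (A ∩ B)).ncard = if (A ∩ B).Nonempty then 1 else 0 := by
    split_ifs with hne
    · obtain ⟨d, hd⟩ := hne
      rw [hcl.subsingleton_image_connectedComponentMk.eq_singleton_of_mem ⟨d, hd, rfl⟩,
        Set.ncard_singleton]
    · rw [Set.not_nonempty_iff_eq_empty.1 hne, Set.image_empty, Set.ncard_empty]
  rw [← Set.ncard_univ, ← hunion, ← hcard, ← hinter, Set.ncard_union_add_ncard_inter,
    Set.ncard_range_of_injective (injective_map_induce hsep hcl),
    Set.ncard_range_of_injective (injective_map_induce (fun u v h => (hsep u v h).symm)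
      (Set.inter_comm A B ▸ hcl))]

end CliqueSeparator

end SimpleGraph

section ReducedBetti

variable {V : Type*}

noncomputable def reducedBetti0 (G : SimpleGraph V) (W : Finset V) : ℚ :=
  if W.Nonempty then (Nat.card (G.induce (↑W : Set V)).ConnectedComponent : ℚ) - 1 else 0

theorem tau0_eq_sum [Fintype V] (G : SimpleGraph V) :
    tau0 G = ∑ W : Finset V, reducedBetti0 G W * subsetWeight (Fintype.card V) #W := by
  rw [tau0, mul_sum]
  refine sum_congr rfl fun W _ => ?_
  rw [reducedBetti0, subsetWeight, mul_inv]
  ring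

theorem reducedBetti0_eq [DecidableEq V] (G : SimpleGraph V) (W : Finset V) :
    reducedBetti0 G W =
      Nat.card (G.induce (↑W : Set V)).ConnectedComponent - 1 + if W = ∅ then 1 else 0 := by
  rcases W.eq_empty_or_nonempty with rfl | hW
  · simp [reducedBetti0]
  · simp [reducedBetti0, hW, hW.ne_empty]

theorem reducedBetti0_induce (G : SimpleGraph V) (s : Set V) (W : Finset s) :
    reducedBetti0 (G.induce s) W = reducedBetti0 G (W.map (Function.Embedding.subtype _)) := by
  simp only [reducedBetti0, map_nonempty]
  rw [SimpleGraph.card_connectedComponent_induce_induce, coe_map]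
  rfl

theorem tau0_induce [DecidableEq V] (G : SimpleGraph V) (s : Finset V) :
    tau0 (G.induce (s : Set V)) = ∑ A ∈ s.powerset, reducedBetti0 G A * subsetWeight #s #A := by
  rw [tau0_eq_sum, show Fintype.card (s : Set V) = #s by
    simp only [SetLike.coe_sort_coe, Fintype.card_coe]]
  refine sum_nbij (fun W => W.map (Function.Embedding.subtype _)) ?_ ?_ ?_ ?_
  · exact fun W _ => mem_powerset.2 fun x hx => map_subtype_subset W hx
  · exact fun W _ W' _ h => map_injective _ h
  · intro A hA
    exact ⟨A.subtype (· ∈ (s : Set V)), mem_coe.2 (mem_univ _),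
      subtype_map_of_mem fun x hx => mem_powerset.1 hA hx⟩
  · intro W _
    rw [reducedBetti0_induce, card_map]

theorem reducedBetti0_eq_add [DecidableEq V] {G : SimpleGraph V} {V₁ V₂ : Finset V}
    (hcover : ∀ v, v ∈ V₁ ∨ v ∈ V₂)
    (hsep : ∀ u v, G.Adj u v → u ∈ V₁ ∧ v ∈ V₁ ∨ u ∈ V₂ ∧ v ∈ V₂)
    (hcl : G.IsClique (↑(V₁ ∩ V₂) : Set V)) (W : Finset V) :
    reducedBetti0 G W = reducedBetti0 G (W ∩ V₁) + reducedBetti0 G (W ∩ V₂)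
      + (if W ∩ (V₁ ∩ V₂) = ∅ then 1 else 0) - (if W ∩ V₁ = ∅ then 1 else 0)
      - (if W ∩ V₂ = ∅ then 1 else 0) + (if W = ∅ then 1 else 0) := by
  let side (U : Finset V) : Set (W : Set V) := {x | (x : V) ∈ U}
  have himage (U : Finset V) : Subtype.val '' side U = ↑(W ∩ U) := by
    ext; simp [side, and_comm]
  have hinter : (side V₁ ∩ side V₂).Nonempty ↔ (W ∩ (V₁ ∩ V₂)).Nonempty := by
    simp [side, Set.Nonempty, Finset.Nonempty, and_left_comm]
  have key := (G.induce (W : Set V)).card_connectedComponent_add_ite_of_isClique_inter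
    (A := side V₁) (B := side V₂) (fun v => hcover v) (fun u v h => hsep u v h)
    (fun u hu v hv huv => hcl (mem_inter.2 ⟨hu.1, hu.2⟩) (mem_inter.2 ⟨hv.1, hv.2⟩)
      (Subtype.coe_injective.ne huv))
  rw [SimpleGraph.card_connectedComponent_induce_induce, himage,
    SimpleGraph.card_connectedComponent_induce_induce, himage, hinter] at key
  have hkey := congrArg (Nat.cast : ℕ → ℚ) key
  push_cast at hkey
  rw [reducedBetti0_eq, reducedBetti0_eq, reducedBetti0_eq]
  rcases (W ∩ (V₁ ∩ V₂)).eq_empty_or_nonempty with h | h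
  · simp only [h, Finset.not_nonempty_empty, if_false, if_true] at hkey ⊢
    linarith
  · simp only [h, h.ne_empty, if_false, if_true] at hkey ⊢
    linarith

end ReducedBetti

theorem tau0_connected_sum_general {α : Type*} [Fintype α] [DecidableEq α] (d : ℕ)
    (V₁ V₂ : Finset α) (hunion : V₁ ∪ V₂ = Finset.univ)
    (hD : (V₁ ∩ V₂).card = d + 1)
    (G₁ G₂ : SimpleGraph α)
    (hG₁ : ∀ a b : α, G₁.Adj a b → a ∈ V₁ ∧ b ∈ V₁)
    (hG₂ : ∀ a b : α, G₂.Adj a b → a ∈ V₂ ∧ b ∈ V₂)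
    (hclique₁ : G₁.IsClique (↑(V₁ ∩ V₂) : Set α))
    (hclique₂ : G₂.IsClique (↑(V₁ ∩ V₂) : Set α)) :
    tau0 (G₁ ⊔ G₂)
      = tau0 (G₁.induce (↑V₁ : Set α)) + tau0 (G₂.induce (↑V₂ : Set α))
        + 1 / ((d : ℚ) + 2) - 1 / ((V₁.card : ℚ) + 1) - 1 / ((V₂.card : ℚ) + 1)
        + 1 / ((V₁.card : ℚ) + (V₂.card : ℚ) - (d : ℚ)) := by
  have hcover (v : α) : v ∈ V₁ ∨ v ∈ V₂ := mem_union.1 (hunion ▸ mem_univ v)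
  have hsep (u v : α) (h : (G₁ ⊔ G₂).Adj u v) : u ∈ V₁ ∧ v ∈ V₁ ∨ u ∈ V₂ ∧ v ∈ V₂ :=
    h.imp (hG₁ u v) (hG₂ u v)
  have hcl₁ : G₁.IsClique ((V₁ : Set α) ∩ V₂) := by rwa [← coe_inter]
  have hcl₂ : G₂.IsClique ((V₂ : Set α) ∩ V₁) := by rwa [Set.inter_comm, ← coe_inter]
  have hcard : (V₁.card : ℚ) + V₂.card - d = Fintype.card α + 1 := by
    have := card_union_add_card_inter V₁ V₂
    rw [hunion, hD, card_univ] at this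
    have : (V₁.card : ℚ) + V₂.card = Fintype.card α + d + 1 := by exact_mod_cast this.symm
    linarith
  rw [← SimpleGraph.induce_sup_eq_left_of_isClique_inter hG₂ hcl₁,
    ← SimpleGraph.induce_sup_eq_left_of_isClique_inter hG₁ hcl₂, sup_comm G₂ G₁,
    tau0_induce, tau0_induce, tau0_eq_sum, ← powerset_univ, ← card_univ,
    sum_congr rfl fun W _ => by
      rw [reducedBetti0_eq_add hcover hsep (hclique₁.mono le_sup_left) W]]
  simp only [add_mul, sub_mul, sum_add_distrib, sum_sub_distrib]
  rw [sum_powerset_inter_mul_subsetWeight _ (subset_univ V₁),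
    sum_powerset_inter_mul_subsetWeight _ (subset_univ V₂),
    sum_powerset_inter_eq_empty_mul_subsetWeight (subset_univ _),
    sum_powerset_inter_eq_empty_mul_subsetWeight (subset_univ V₁),
    sum_powerset_inter_eq_empty_mul_subsetWeight (subset_univ V₂),
    sum_powerset_ite_eq_empty_mul_subsetWeight, hD, hcard, card_univ]
  push_cast
  ring

/-- the `i = 0` case of the connected-sum formula: let `G₁`, `G₂` be graphs
supported on vertex sets `V₁`, `V₂` with `V₁ ∪ V₂` the whole vertex set,
`D = V₁ ∩ V₂` a `(d+1)`-element set that is a clique in both graphs, and let `G = G₁ ∪ G₂`.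
Then `τ₀(G) = τ₀(G₁) + τ₀(G₂) + 1/(d+2) − 1/(n₁+1) − 1/(n₂+1) + 1/(n₁+n₂−d)`,
where `τ₀(Gᵢ)` is computed with respect to the vertex set `Vᵢ`. -/
theorem tau0_connected_sum {α : Type*} [Fintype α] [DecidableEq α] (d : ℕ) (hd : 1 ≤ d)
    (V₁ V₂ : Finset α) (hunion : V₁ ∪ V₂ = Finset.univ)
    (hD : (V₁ ∩ V₂).card = d + 1)
    (G₁ G₂ : SimpleGraph α)
    (hG₁ : ∀ a b : α, G₁.Adj a b → a ∈ V₁ ∧ b ∈ V₁)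
    (hG₂ : ∀ a b : α, G₂.Adj a b → a ∈ V₂ ∧ b ∈ V₂)
    (hclique₁ : G₁.IsClique (↑(V₁ ∩ V₂) : Set α))
    (hclique₂ : G₂.IsClique (↑(V₁ ∩ V₂) : Set α)) :
    tau0 (G₁ ⊔ G₂)
      = tau0 (G₁.induce (↑V₁ : Set α)) + tau0 (G₂.induce (↑V₂ : Set α))
        + 1 / ((d : ℚ) + 2) - 1 / ((V₁.card : ℚ) + 1) - 1 / ((V₂.card : ℚ) + 1)
        + 1 / ((V₁.card : ℚ) + (V₂.card : ℚ) - (d : ℚ)) :=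
  tau0_connected_sum_general d V₁ V₂ hunion hD G₁ G₂ hG₁ hG₂ hclique₁ hclique₂
end

section
/- Let d ≥ 1 and n ≥ d+2, and let G be any graph obtained from the complete graph on d+2 vertices by successively adding n−d−2 new vertices, each joined by edges precisely to the d+1 vertices of some (d+1)-clique of the graph constructed so far. Then τ₀(G) = (n−2d−4)/((d+2)(d+3)) + 1/(n+1). (Such graphs are exactly the graphs of stacked d-spheres with n vertices, so a stacked d-sphere S satisfies τ₀(S) = τ_{d−1}(S) = (n−2d−4)/((d+2)(d+3)) + 1/(n+1).) -/
open Finset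

/-!
Order the vertices as they were added. The earlier neighbours of every vertex form a clique, so
adding the vertices of `W` in increasing order shows that `G[W]` has exactly as many components as
`W` has vertices without an earlier neighbour in `W`. With weights `1 / C(n, |W|)`, the sets `W`
avoiding a fixed set of size `a` have total weight `(n + 1) / (a + 1)`, so a vertex with `s` earlier
neighbours contributes `(n + 1) / ((s + 1) (s + 2))`. In a stacked sphere vertex `t` has
`s = min t (d + 1)`.
-/

namespace SimpleGraph

variable {V : Type*} {G : SimpleGraph V}

def ConnectedComponent.liftAdj {β : Sort*} (f : V → β) (h : ∀ v w, G.Adj v w → f v = f w) :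
    G.ConnectedComponent → β :=
  ConnectedComponent.lift f fun _ _ p hp => by
    clear hp
    induction p with
    | nil => rfl
    | cons hadj _ ih => exact (h _ _ hadj).trans ih

section InsertVertex

variable {s : Set V} {a : V}

def ConnectedComponent.inclInsert (s : Set V) (a : V) :
    (G.induce s).ConnectedComponent → (G.induce (insert a s)).ConnectedComponent :=
  ConnectedComponent.map (G.induceHomOfLE (Set.subset_insert a s)).toHom

/- The retraction sending `x ∈ s` to `{[x]}` and `a` to the set of components of its neighbours
in `s` is constant along edges as soon as those neighbours all lie in one component. -/
lemma ConnectedComponent.inclInsert_injective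
    (hN : ∀ u v : s, G.Adj a u → G.Adj a v → (G.induce s).Reachable u v) :
    Function.Injective (ConnectedComponent.inclInsert (G := G) s a) := by
  classical
  let f : ↥(insert a s) → Set (G.induce s).ConnectedComponent := fun x =>
    if hx : x.1 ∈ s then {(G.induce s).connectedComponentMk ⟨x, hx⟩}
    else (G.induce s).connectedComponentMk '' {w | G.Adj a w}
  have hnbr : ∀ x : s, G.Adj a x → {(G.induce s).connectedComponentMk x}
      = (G.induce s).connectedComponentMk '' {w | G.Adj a w} := by
    intro x hax
    ext c
    constructor
    · rintro rfl
      exact ⟨x, hax, rfl⟩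
    · rintro ⟨w, haw, rfl⟩
      exact ConnectedComponent.sound (hN w x haw hax)
  have hf : ∀ x y, (G.induce (insert a s)).Adj x y → f x = f y := by
    rintro ⟨x, hx⟩ ⟨y, hy⟩ hxy
    simp only [f]
    split_ifs with hxs hys hys
    · exact congrArg _ (ConnectedComponent.connectedComponentMk_eq_of_adj
        (G := G.induce s) (v := ⟨x, hxs⟩) (w := ⟨y, hys⟩) hxy)
    · obtain rfl := hy.resolve_right hys
      exact hnbr ⟨x, hxs⟩ hxy.symm
    · obtain rfl := hx.resolve_right hxs
      exact (hnbr ⟨y, hys⟩ hxy).symm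
    · rfl
  have hret : ∀ c, ConnectedComponent.liftAdj f hf (ConnectedComponent.inclInsert s a c) = {c} :=
    ConnectedComponent.ind fun x => show f _ = _ from dif_pos x.2
  intro c c' hcc'
  simpa [hret] using congrArg (ConnectedComponent.liftAdj f hf) hcc'

lemma card_connectedComponent_induce_insert_of_forall_not_adj [Finite s] (ha : a ∉ s)
    (hiso : ∀ w ∈ s, ¬G.Adj a w) :
    Nat.card (G.induce (insert a s)).ConnectedComponent
      = Nat.card (G.induce s).ConnectedComponent + 1 := by
  set ι := ConnectedComponent.inclInsert (G := G) s a
  have hι : Function.Injective ι :=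
    ConnectedComponent.inclInsert_injective fun u _ hu => absurd hu (hiso u u.2)
  let va : ↥(insert a s) := ⟨a, Set.mem_insert a s⟩
  have hι_ne : ∀ c, ι c ≠ (G.induce (insert a s)).connectedComponentMk va := by
    refine ConnectedComponent.ind fun x hx => ?_
    obtain ⟨p⟩ := (ConnectedComponent.exact hx).symm
    have hax : va ≠ (G.induceHomOfLE (Set.subset_insert a s)).toHom x := fun h => by
      have : a = x.1 := congrArg Subtype.val h
      exact ha (this ▸ x.2)
    have hadj := p.adj_snd (p.not_nil_of_ne hax)
    rcases p.snd.2 with h | h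
    · exact hadj.ne (Subtype.ext h.symm)
    · exact hiso _ h hadj
  have hbij : Function.Bijective fun o : Option _ => o.elim
      ((G.induce (insert a s)).connectedComponentMk va) ι := by
    constructor
    · rintro (_ | c) (_ | c') h
      · rfl
      · exact absurd h.symm (hι_ne c')
      · exact absurd h (hι_ne c)
      · exact congrArg some (hι h)
    · refine ConnectedComponent.ind fun x => ?_
      by_cases hx : x.1 ∈ s
      · exact ⟨some ((G.induce s).connectedComponentMk ⟨x, hx⟩), rfl⟩
      · exact ⟨none, congrArg _ (Subtype.ext ((x.2.resolve_right hx).symm))⟩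
  rw [← Nat.card_eq_of_bijective _ hbij, Finite.card_option]

lemma card_connectedComponent_induce_insert_of_isClique {w₀ : V} (hw₀ : w₀ ∈ s)
    (haw₀ : G.Adj a w₀) (hcl : G.IsClique {w ∈ s | G.Adj a w}) :
    Nat.card (G.induce (insert a s)).ConnectedComponent
      = Nat.card (G.induce s).ConnectedComponent := by
  refine (Nat.card_eq_of_bijective (ConnectedComponent.inclInsert s a) ⟨?_, ?_⟩).symm
  · refine ConnectedComponent.inclInsert_injective fun u v hu hv => ?_
    obtain rfl | huv := eq_or_ne u v
    · rfl
    · exact Adj.reachable (hcl ⟨u.2, hu⟩ ⟨v.2, hv⟩ (Subtype.coe_ne_coe.2 huv))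
  · refine ConnectedComponent.ind fun x => ?_
    by_cases hx : x.1 ∈ s
    · exact ⟨(G.induce s).connectedComponentMk ⟨x, hx⟩, rfl⟩
    · refine ⟨(G.induce s).connectedComponentMk ⟨w₀, hw₀⟩, ConnectedComponent.sound ?_⟩
      refine Adj.reachable (?_ : G.Adj w₀ x)
      rw [x.2.resolve_right hx]
      exact haw₀.symm

end InsertVertex

section EarlierNeighbors

variable [Fintype V] [LinearOrder V] (G) [DecidableRel G.Adj]

def earlierNeighborFinset (t : V) : Finset V := {j | j < t ∧ G.Adj j t}

variable {G}

@[simp]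
lemma mem_earlierNeighborFinset {t j : V} :
    j ∈ G.earlierNeighborFinset t ↔ j < t ∧ G.Adj j t := by
  simp [earlierNeighborFinset]

@[simp]
lemma coe_earlierNeighborFinset (t : V) :
    (G.earlierNeighborFinset t : Set V) = {j | j < t ∧ G.Adj j t} := by
  ext
  simp

lemma card_connectedComponent_induce_eq_card_filter
    (hcl : ∀ t, G.IsClique (G.earlierNeighborFinset t : Set V)) (W : Finset V) :
    Nat.card (G.induce (W : Set V)).ConnectedComponent
      = #{t ∈ W | Disjoint (G.earlierNeighborFinset t) W} := by
  induction W using Finset.induction_on_max with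
  | empty => simp
  | insert a s hlt ih =>
    have ha : a ∉ s := fun h => lt_irrefl a (hlt a h)
    have hfilter : {t ∈ insert a s | Disjoint (G.earlierNeighborFinset t) (insert a s)}
        = {t ∈ insert a s | Disjoint (G.earlierNeighborFinset t) s} := by
      refine Finset.filter_congr fun t ht => ?_
      have hta : t ≤ a := by
        rcases Finset.mem_insert.1 ht with rfl | ht
        exacts [le_rfl, (hlt t ht).le]
      rw [Finset.disjoint_insert_right, mem_earlierNeighborFinset]
      simp [hta.not_gt]
    rw [hfilter, Finset.filter_insert, Finset.coe_insert]
    by_cases hdis : Disjoint (G.earlierNeighborFinset a) s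
    · rw [if_pos hdis, Finset.card_insert_of_notMem fun h => ha (Finset.mem_filter.1 h).1,
        ← ih, card_connectedComponent_induce_insert_of_forall_not_adj (by exact_mod_cast ha)]
      intro w hw haw
      exact Finset.disjoint_left.1 hdis (mem_earlierNeighborFinset.2 ⟨hlt w hw, haw.symm⟩) hw
    · rw [if_neg hdis, ← ih]
      obtain ⟨w₀, hw₀a, hw₀s⟩ := Finset.not_disjoint_iff.1 hdis
      refine card_connectedComponent_induce_insert_of_isClique (Finset.mem_coe.2 hw₀s)
        (mem_earlierNeighborFinset.1 hw₀a).2.symm ((hcl a).subset ?_)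
      rintro w ⟨hw, haw⟩
      exact mem_earlierNeighborFinset.2 ⟨hlt w hw, haw.symm⟩

end EarlierNeighbors

end SimpleGraph

lemma sum_range_choose_sub_eq_choose (a b : ℕ) :
    ∑ j ∈ range (b + 1), (a + b - j).choose a = (a + b + 1).choose (a + 1) := by
  induction b with
  | zero => simp
  | succ b ih =>
    rw [Finset.sum_range_succ', ← add_assoc]
    simp only [Nat.add_sub_add_right, Nat.sub_zero, ih]
    rw [add_comm]
    exact (Nat.choose_succ_succ _ _).symm

lemma choose_div_choose_eq {a b j : ℕ} (hj : j ≤ b) :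
    (b.choose j : ℚ) / (a + b).choose j = ((a + b - j).choose a : ℚ) / (a + b).choose a := by
  have hj' : ((a + b).choose (a + j) * (a + j).choose j : ℚ)
      = (a + b).choose j * (a + b - j).choose a := by
    exact_mod_cast (Nat.choose_mul (by omega)).trans (by simp)
  have ha' : ((a + b).choose (a + j) * (a + j).choose a : ℚ)
      = (a + b).choose a * b.choose j := by
    exact_mod_cast (Nat.choose_mul (by omega)).trans (by simp)
  have hpos : ∀ k ≤ a + b, ((a + b).choose k : ℚ) ≠ 0 := fun k hk =>
    Nat.cast_ne_zero.2 (Nat.choose_pos hk).ne'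
  have hsymm : ((a + j).choose j : ℚ) = (a + j).choose a := by rw [Nat.choose_symm_add]
  rw [div_eq_div_iff (hpos j (by omega)) (hpos a (by omega))]
  refine mul_left_cancel₀ (hpos (a + j) (by omega)) ?_
  linear_combination ((a + b).choose (a + j) : ℚ) * (hj' - ha')
    - ((a + b).choose (a + j) : ℚ) ^ 2 * hsymm

lemma sum_range_choose_div_choose (a b : ℕ) :
    ∑ j ∈ range (b + 1), (b.choose j : ℚ) / (a + b).choose j = (a + b + 1) / (a + 1) := by
  rw [Finset.sum_congr rfl fun j hj =>
    choose_div_choose_eq (Nat.lt_succ_iff.1 (mem_range.1 hj)), ← Finset.sum_div]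
  have h := Nat.add_one_mul_choose_eq (a + b) a
  rw [← sum_range_choose_sub_eq_choose] at h
  have hpos : ((a + b).choose a : ℚ) ≠ 0 := Nat.cast_ne_zero.2 (Nat.choose_pos (by omega)).ne'
  rw [div_eq_div_iff hpos (by positivity)]
  exact_mod_cast h.symm

section SubsetSums

variable {α : Type*} [Fintype α] [DecidableEq α]

lemma sum_disjoint_inv_choose (A : Finset α) :
    ∑ W : Finset α with Disjoint A W, ((Fintype.card α).choose #W : ℚ)⁻¹
      = (Fintype.card α + 1) / (#A + 1) := by
  have hfilter : univ.filter (Disjoint A) = Aᶜ.powerset := by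
    ext W
    simp [Finset.subset_compl_iff_disjoint_left]
  have hcard : Fintype.card α = #A + #Aᶜ := (Finset.card_add_card_compl A).symm
  have hslice : ∀ j ∈ range (#Aᶜ + 1), ∑ W ∈ powersetCard j Aᶜ,
      ((Fintype.card α).choose #W : ℚ)⁻¹ = ((#Aᶜ).choose j : ℚ) / (Fintype.card α).choose j :=
    fun j _ => by
      rw [Finset.sum_congr rfl fun W hW => by rw [(Finset.mem_powersetCard.1 hW).2],
        Finset.sum_const, Finset.card_powersetCard, nsmul_eq_mul, div_eq_mul_inv]
  rw [hfilter, Finset.sum_powerset, Finset.sum_congr rfl hslice, hcard,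
    sum_range_choose_div_choose]
  push_cast
  ring

lemma sum_nonempty_inv_choose :
    ∑ W : Finset α with W.Nonempty, ((Fintype.card α).choose #W : ℚ)⁻¹ = Fintype.card α := by
  have hall := sum_disjoint_inv_choose (∅ : Finset α)
  rw [← Finset.sum_filter_add_sum_filter_not _ Finset.Nonempty] at hall
  simpa [Finset.filter_eq'] using hall

lemma sum_mem_disjoint_inv_choose {A : Finset α} {t : α} (ht : t ∉ A) :
    ∑ W : Finset α with t ∈ W ∧ Disjoint A W, ((Fintype.card α).choose #W : ℚ)⁻¹
      = (Fintype.card α + 1) / ((#A + 1) * (#A + 2)) := by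
  have h := Finset.sum_filter_add_sum_filter_not (univ.filter (Disjoint A))
    (t ∈ ·) fun W => ((Fintype.card α).choose #W : ℚ)⁻¹
  have hout : univ.filter (fun W : Finset α => Disjoint A W ∧ t ∉ W)
      = univ.filter (Disjoint (insert t A)) :=
    Finset.filter_congr fun W _ => by rw [Finset.disjoint_insert_left, and_comm]
  have hin : univ.filter (fun W : Finset α => Disjoint A W ∧ t ∈ W)
      = univ.filter (fun W => t ∈ W ∧ Disjoint A W) :=
    Finset.filter_congr fun W _ => and_comm
  rw [Finset.filter_filter, Finset.filter_filter, hout, hin, sum_disjoint_inv_choose,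
    sum_disjoint_inv_choose, Finset.card_insert_of_notMem ht, ← eq_sub_iff_add_eq] at h
  rw [h]
  push_cast
  field_simp
  ring

end SubsetSums

open SimpleGraph in
theorem tau0_eq_sum_of_isClique_earlierNeighborFinset {V : Type*} [Fintype V] [LinearOrder V]
    {G : SimpleGraph V} [DecidableRel G.Adj]
    (hcl : ∀ t, G.IsClique (G.earlierNeighborFinset t : Set V)) :
    tau0 G = ∑ t, 1 / (((#(G.earlierNeighborFinset t) : ℚ) + 1)
        * (#(G.earlierNeighborFinset t) + 2))
      - Fintype.card V / (Fintype.card V + 1) := by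
  set n := Fintype.card V
  have hterm : ∀ W : Finset V,
      (if W.Nonempty then (Nat.card (G.induce (W : Set V)).ConnectedComponent : ℚ) - 1 else 0)
        / n.choose #W
      = ∑ t, (if t ∈ W ∧ Disjoint (G.earlierNeighborFinset t) W
            then (n.choose #W : ℚ)⁻¹ else 0)
        - if W.Nonempty then (n.choose #W : ℚ)⁻¹ else 0 := by
    intro W
    rw [card_connectedComponent_induce_eq_card_filter hcl, ← Finset.sum_filter,
      Finset.sum_const, nsmul_eq_mul, div_eq_mul_inv]
    rcases W.eq_empty_or_nonempty with rfl | hW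
    · simp
    · rw [if_pos hW, if_pos hW, sub_mul, one_mul]
      congr 4
      ext t
      simp
  have hroot : ∀ t, ∑ W : Finset V with t ∈ W ∧ Disjoint (G.earlierNeighborFinset t) W,
      (n.choose #W : ℚ)⁻¹
      = (n + 1) / ((#(G.earlierNeighborFinset t) + 1) * (#(G.earlierNeighborFinset t) + 2)) :=
    fun t => sum_mem_disjoint_inv_choose (by simp)
  rw [tau0, Finset.sum_congr rfl fun W _ => hterm W, Finset.sum_sub_distrib,
    Finset.sum_comm, ← Finset.sum_filter, sum_nonempty_inv_choose]
  simp_rw [← Finset.sum_filter, hroot]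
  rw [mul_sub, Finset.mul_sum]
  congr 1
  · refine Finset.sum_congr rfl fun t _ => ?_
    field_simp
    rfl
  · field_simp
    ring

lemma sum_range_min {M : Type*} [AddCommMonoid M] (g : ℕ → M) {m n : ℕ} (hmn : m ≤ n) :
    ∑ t ∈ range n, g (min t m) = ∑ t ∈ range m, g t + (n - m) • g m := by
  obtain ⟨k, rfl⟩ := Nat.exists_eq_add_of_le hmn
  rw [Finset.sum_range_add, Nat.add_sub_cancel_left]
  congr 1
  · exact Finset.sum_congr rfl fun t ht => by rw [min_eq_left (mem_range.1 ht).le]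
  · simp

lemma sum_range_one_div_succ_mul_succ (m : ℕ) :
    ∑ t ∈ range m, 1 / (((t : ℚ) + 1) * (t + 2)) = m / (m + 1) := by
  induction m with
  | zero => simp
  | succ m ih =>
    rw [Finset.sum_range_succ, ih]
    push_cast
    field_simp
    ring

section StackedSphere

open SimpleGraph

variable {d n : ℕ} {G : SimpleGraph (Fin n)} [DecidableRel G.Adj]

lemma earlierNeighborFinset_eq_Iio
    (hbase : ∀ u v : Fin n, (u : ℕ) < d + 2 → (v : ℕ) < d + 2 → (G.Adj u v ↔ u ≠ v))
    {t : Fin n} (ht : (t : ℕ) < d + 2) : G.earlierNeighborFinset t = Iio t := by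
  ext j
  simp only [mem_earlierNeighborFinset, Finset.mem_Iio, and_iff_left_iff_imp]
  intro hj
  exact (hbase j t (lt_trans hj ht) ht).2 hj.ne

lemma isClique_earlierNeighborFinset_of_stacked
    (hbase : ∀ u v : Fin n, (u : ℕ) < d + 2 → (v : ℕ) < d + 2 → (G.Adj u v ↔ u ≠ v))
    (hstack : ∀ i : Fin n, d + 2 ≤ (i : ℕ) → G.IsClique {j : Fin n | j < i ∧ G.Adj j i})
    (t : Fin n) : G.IsClique (G.earlierNeighborFinset t : Set (Fin n)) := by
  rcases lt_or_ge (t : ℕ) (d + 2) with ht | ht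
  · rw [earlierNeighborFinset_eq_Iio hbase ht]
    intro u hu v hv huv
    simp only [coe_Iio, Set.mem_Iio] at hu hv
    exact (hbase u v (lt_trans hu ht) (lt_trans hv ht)).2 huv
  · simpa using hstack t ht

lemma card_earlierNeighborFinset_of_stacked
    (hbase : ∀ u v : Fin n, (u : ℕ) < d + 2 → (v : ℕ) < d + 2 → (G.Adj u v ↔ u ≠ v))
    (hstack : ∀ i : Fin n, d + 2 ≤ (i : ℕ) → ({j : Fin n | j < i ∧ G.Adj j i}).ncard = d + 1)
    (t : Fin n) : #(G.earlierNeighborFinset t) = min (t : ℕ) (d + 1) := by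
  rcases lt_or_ge (t : ℕ) (d + 2) with ht | ht
  · rw [earlierNeighborFinset_eq_Iio hbase ht, Fin.card_Iio]
    omega
  · rw [← Set.ncard_coe_finset, coe_earlierNeighborFinset, hstack t ht]
    omega

end StackedSphere

theorem tau0_stacked_sphere_general (d n : ℕ) (hn : d + 2 ≤ n)
    (G : SimpleGraph (Fin n))
    (hbase : ∀ u v : Fin n, (u : ℕ) < d + 2 → (v : ℕ) < d + 2 → (G.Adj u v ↔ u ≠ v))
    (hstack : ∀ i : Fin n, d + 2 ≤ (i : ℕ) →
      ({j : Fin n | j < i ∧ G.Adj j i}).ncard = d + 1 ∧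
        G.IsClique {j : Fin n | j < i ∧ G.Adj j i}) :
    tau0 G = ((n : ℚ) - 2 * (d : ℚ) - 4) / (((d : ℚ) + 2) * ((d : ℚ) + 3))
      + 1 / ((n : ℚ) + 1) := by
  classical
  rw [tau0_eq_sum_of_isClique_earlierNeighborFinset
    (isClique_earlierNeighborFinset_of_stacked hbase fun i hi => (hstack i hi).2)]
  simp only [card_earlierNeighborFinset_of_stacked hbase (fun i hi => (hstack i hi).1),
    Fintype.card_fin]
  rw [Fin.sum_univ_eq_sum_range (fun t => 1 / ((((min t (d + 1) : ℕ) : ℚ) + 1) *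
      (((min t (d + 1) : ℕ) : ℚ) + 2))),
    sum_range_min (fun k : ℕ => 1 / (((k : ℚ) + 1) * (k + 2))) (by omega : d + 1 ≤ n),
    sum_range_one_div_succ_mul_succ, nsmul_eq_mul, Nat.cast_sub (by omega : d + 1 ≤ n)]
  push_cast
  field_simp
  ring

/-- let `G` (the graph of a stacked `d`-sphere) be a graph on `n ≥ d+2` vertices
obtained from the complete graph on the first `d+2` vertices by successively adding the
remaining `n−d−2` vertices, each joined by edges precisely to the `d+1` vertices of some
`(d+1)`-clique of the graph constructed so far (i.e. each vertex `i ≥ d+2` has exactly `d+1`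
earlier neighbors and these form a clique). Then
`τ₀(G) = (n−2d−4)/((d+2)(d+3)) + 1/(n+1)`. -/
theorem tau0_stacked_sphere (d n : ℕ) (hd : 1 ≤ d) (hn : d + 2 ≤ n)
    (G : SimpleGraph (Fin n))
    (hbase : ∀ u v : Fin n, (u : ℕ) < d + 2 → (v : ℕ) < d + 2 → (G.Adj u v ↔ u ≠ v))
    (hstack : ∀ i : Fin n, d + 2 ≤ (i : ℕ) →
      ({j : Fin n | j < i ∧ G.Adj j i}).ncard = d + 1 ∧
        G.IsClique {j : Fin n | j < i ∧ G.Adj j i}) :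
    tau0 G = ((n : ℚ) - 2 * (d : ℚ) - 4) / (((d : ℚ) + 2) * ((d : ℚ) + 3))
      + 1 / ((n : ℚ) + 1) :=
  tau0_stacked_sphere_general d n hn G hbase hstack
end

section
/- For every m ≥ 3, the cycle graph C_m on m vertices satisfies τ₀(C_m) = (m−2)(m−3)/(6(m+1)). -/
/-!
For a proper subset `W` of the vertices of the cycle `C_m`, the components of `C_m[W]` are the
maximal runs of consecutive vertices of `W`, and each run has exactly one last vertex, i.e. one
`i ∈ W` with `i + 1 ∉ W`; for `W = univ` there is a single component. Walking forward from a
vertex to the last vertex of its run is constant along the edges of `C_m[W]` and fixes last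
vertices, which identifies the components with the last vertices. Hence
`(m + 1) τ₀(C_m) = ∑ᵢ ∑_W [i ∈ W, i + 1 ∉ W] / C(m, |W|) - m + 1`. The inner sum only sees the
two distinct vertices `i` and `i + 1` and equals `∑ₖ C(m - 2, k - 1) / C(m, k) = (m + 1) / 6`, so
`(m + 1) τ₀(C_m) = m (m + 1) / 6 - m + 1 = (m - 2) (m - 3) / 6`.
-/

open Finset

open SimpleGraph
open scoped Fin.NatCast Fin.CommRing

theorem Finset.sum_univ_finset_apply_card {V M : Type*} [Fintype V] [AddCommMonoid M]
    (f : ℕ → M) :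
    ∑ W : Finset V, f #W = ∑ k ∈ range (Fintype.card V + 1), (Fintype.card V).choose k • f k := by
  classical
  rw [← powerset_univ, sum_powerset_apply_card, card_univ]

theorem sum_nonempty_div_choose_card (V : Type*) [Fintype V] :
    ∑ W : Finset V, (if W.Nonempty then 1 else 0 : ℚ) / (Fintype.card V).choose #W
      = Fintype.card V := by
  simp_rw [← card_pos]
  rw [sum_univ_finset_apply_card fun k => (if 0 < k then 1 else 0 : ℚ) / (Fintype.card V).choose k]
  have hterm (k : ℕ) (hk : k ∈ range (Fintype.card V + 1)) :
      (Fintype.card V).choose k • ((if 0 < k then 1 else 0 : ℚ) / (Fintype.card V).choose k)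
        = if 0 < k then 1 else 0 := by
    have hchoose : ((Fintype.card V).choose k : ℚ) ≠ 0 := by
      exact_mod_cast (Nat.choose_pos (by simpa [Nat.lt_succ_iff] using hk)).ne'
    rw [nsmul_eq_mul, mul_div_cancel₀ _ hchoose]
  rw [sum_congr rfl hterm, sum_range_succ']
  simp

theorem cast_choose_div_choose_add_two {N k : ℕ} (hk : k ≤ N) :
    (N.choose k : ℚ) / (N + 2).choose (k + 1) = (k + 1) * (N + 1 - k) / ((N + 2) * (N + 1)) := by
  have h₁ := congrArg (Nat.cast : ℕ → ℚ) (Nat.add_one_mul_choose_eq (N + 1) k)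
  have h₂ := congrArg (Nat.cast : ℕ → ℚ) (Nat.choose_mul_succ_eq N k)
  push_cast [Nat.cast_sub (by omega : k ≤ N + 1)] at h₁ h₂
  have hchoose : ((N + 2).choose (k + 1) : ℚ) ≠ 0 := by
    exact_mod_cast (Nat.choose_pos (by omega)).ne'
  rw [div_eq_div_iff hchoose (by positivity)]
  linear_combination (N + 2 : ℚ) * h₂ + (N + 1 - k : ℚ) * h₁

theorem sum_range_add_one_mul_sub (M : ℕ) :
    ∑ k ∈ range M, ((k : ℚ) + 1) * (M - k) = M * (M + 1) * (M + 2) / 6 := by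
  have gauss (M : ℕ) : ∑ k ∈ range M, ((k : ℚ) + 1) = M * (M + 1) / 2 := by
    induction M with
    | zero => simp
    | succ M ih => rw [sum_range_succ, ih]; push_cast; ring
  induction M with
  | zero => simp
  | succ M ih =>
    have hsplit (k : ℕ) : ((k : ℚ) + 1) * ((M + 1 : ℕ) - k) = (k + 1) * (M - k) + (k + 1) := by
      push_cast; ring
    rw [sum_congr rfl fun k _ => hsplit k, sum_add_distrib, gauss, sum_range_succ, ih]
    push_cast
    ring

theorem sum_mem_notMem_div_choose_card {V : Type*} [Fintype V] [DecidableEq V] {a b : V}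
    (hab : a ≠ b) :
    ∑ W : Finset V, (if a ∈ W ∧ b ∉ W then 1 else 0 : ℚ) / (Fintype.card V).choose #W
      = (Fintype.card V + 1) / 6 := by
  set s : Finset V := univ \ {a, b}
  obtain ⟨N, hN⟩ : ∃ N, Fintype.card V = N + 2 := by
    have := card_le_univ ({a, b} : Finset V)
    rw [card_pair hab] at this
    exact ⟨Fintype.card V - 2, by omega⟩
  have hs : #s = N := by
    rw [card_sdiff_of_subset (subset_univ _), card_univ, card_pair hab]
    omega
  have hreindex : ∑ W ∈ univ.filter (fun W : Finset V => a ∈ W ∧ b ∉ W),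
      ((N + 2).choose #W : ℚ)⁻¹ = ∑ U ∈ s.powerset, ((N + 2).choose (#U + 1) : ℚ)⁻¹ := by
    refine sum_nbij' (fun W => W.erase a) (insert a) ?_ ?_ ?_ ?_ ?_
    all_goals intro W hW
    all_goals simp only [mem_filter, mem_univ, true_and, mem_powerset, subset_iff, s, mem_sdiff,
      mem_insert, mem_singleton] at hW ⊢
    all_goals grind [card_erase_of_mem, card_pos]
  have hterm (k : ℕ) (hk : k ∈ range (N + 1)) : N.choose k • ((N + 2).choose (k + 1) : ℚ)⁻¹
      = ((k : ℚ) + 1) * ((N + 1 : ℕ) - k) / ((N + 2) * (N + 1)) := by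
    rw [nsmul_eq_mul, ← div_eq_mul_inv,
      cast_choose_div_choose_add_two (by simpa [Nat.lt_succ_iff] using hk)]
    push_cast
    ring
  simp_rw [ite_div, one_div, zero_div, hN]
  rw [← sum_filter, hreindex, sum_powerset_apply_card fun k => ((N + 2).choose (k + 1) : ℚ)⁻¹, hs,
    sum_congr rfl hterm, ← sum_div, sum_range_add_one_mul_sub]
  push_cast
  field_simp
  ring

theorem SimpleGraph.Reachable.eq_of_forall_adj_s10 {V β : Type*} {G : SimpleGraph V} {f : V → β}
    (hf : ∀ u v, G.Adj u v → f u = f v) {u v : V} (h : G.Reachable u v) : f u = f v := by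
  rw [reachable_iff_reflTransGen] at h
  induction h with
  | refl => rfl
  | tail _ hadj ih => exact ih.trans (hf _ _ hadj)

theorem SimpleGraph.Connected.natCard_connectedComponent_induce_univ {V : Type*}
    {G : SimpleGraph V} (h : G.Connected) :
    Nat.card (G.induce Set.univ).ConnectedComponent = 1 := by
  have := h.nonempty
  have := h.preconnected.subsingleton_connectedComponent
  rw [Nat.card_congr (induceUnivIso G).connectedComponentEquiv, Nat.card_eq_one_iff_unique]
  exact ⟨inferInstance, inferInstance⟩

namespace Finset

variable {n : ℕ} {W : Finset (Fin (n + 2))}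

/-- Walking forward from `v`, the number of steps to the last vertex of the run of `W` through `v`
(junk value `0` when `W = univ`, where no run ends). -/
noncomputable def exitTime (W : Finset (Fin (n + 2))) (v : Fin (n + 2)) : ℕ :=
  sInf {t : ℕ | v + t + 1 ∉ W}

theorem exists_add_add_one_notMem (hW : W ≠ univ) (v : Fin (n + 2)) : ∃ t : ℕ, v + t + 1 ∉ W := by
  obtain ⟨u, hu⟩ : ∃ u, u ∉ W := by simpa [eq_univ_iff_forall] using hW
  exact ⟨(u - v - 1).val, by rwa [Fin.cast_val_eq_self, show v + (u - v - 1) + 1 = u by ring]⟩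

theorem add_exitTime_add_one_notMem (hW : W ≠ univ) (v : Fin (n + 2)) :
    v + W.exitTime v + 1 ∉ W :=
  Nat.sInf_mem (exists_add_add_one_notMem hW v)

theorem exitTime_eq_zero {v : Fin (n + 2)} (hv : v + 1 ∉ W) : W.exitTime v = 0 :=
  Nat.sInf_eq_zero.2 (Or.inl (by simpa using hv))

theorem exitTime_eq_exitTime_add_one_add_one (hW : W ≠ univ) {v : Fin (n + 2)}
    (hv : v + 1 ∈ W) : W.exitTime v = W.exitTime (v + 1) + 1 := by
  have hpos : 1 ≤ W.exitTime v := by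
    refine Nat.one_le_iff_ne_zero.2 fun h => ?_
    have := add_exitTime_add_one_notMem hW v
    simp_all
  rw [exitTime, exitTime, ← Nat.sInf_add hpos]
  congr 2
  ext t
  push_cast
  ring_nf

theorem add_one_add_exitTime (hW : W ≠ univ) {v : Fin (n + 2)} (hv : v + 1 ∈ W) :
    v + 1 + W.exitTime (v + 1) = v + W.exitTime v := by
  rw [exitTime_eq_exitTime_add_one_add_one hW hv]
  push_cast
  ring

theorem add_exitTime_mem {v : Fin (n + 2)} (hv : v ∈ W) : v + W.exitTime v ∈ W := by
  rcases h : W.exitTime v with _ | t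
  · simpa using hv
  · have := Nat.notMem_of_lt_sInf (h ▸ Nat.lt_succ_self t : t < W.exitTime v)
    simp only [Set.mem_ofPred_eq, not_not] at this
    push_cast
    rwa [← add_assoc]

end Finset

namespace SimpleGraph

variable {n : ℕ} {W : Finset (Fin (n + 2))}

theorem add_exitTime_eq_of_induce_cycleGraph_adj (hW : W ≠ univ) {u v : (W : Set (Fin (n + 2)))}
    (h : ((cycleGraph (n + 2)).induce (W : Set (Fin (n + 2)))).Adj u v) :
    (u : Fin (n + 2)) + W.exitTime u = v + W.exitTime v := by
  obtain ⟨u, hu⟩ := u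
  obtain ⟨v, hv⟩ := v
  rcases cycleGraph_adj.1 (induce_adj.1 h) with h | h
  · obtain rfl : u = v + 1 := by rw [← h]; ring
    exact add_one_add_exitTime hW hu
  · obtain rfl : v = u + 1 := by rw [← h]; ring
    exact (add_one_add_exitTime hW hv).symm

theorem reachable_add_exitTime_induce_cycleGraph (hW : W ≠ univ) {v : Fin (n + 2)} (hv : v ∈ W) :
    ((cycleGraph (n + 2)).induce (W : Set (Fin (n + 2)))).Reachable
      ⟨v, hv⟩ ⟨v + W.exitTime v, add_exitTime_mem hv⟩ := by
  obtain ⟨t, h⟩ : ∃ t, W.exitTime v = t := ⟨_, rfl⟩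
  induction t generalizing v with
  | zero => simp_rw [h, Nat.cast_zero, add_zero]; rfl
  | succ t ih =>
    have hv₁ : v + 1 ∈ W := by
      by_contra hv₁
      simp [exitTime_eq_zero hv₁] at h
    have hadj : ((cycleGraph (n + 2)).induce (W : Set (Fin (n + 2)))).Adj ⟨v, hv⟩ ⟨v + 1, hv₁⟩ :=
      cycleGraph_adj.2 (Or.inr (add_sub_cancel_left v 1))
    have hend : (⟨v + W.exitTime v, add_exitTime_mem hv⟩ : (W : Set (Fin (n + 2))))
        = ⟨v + 1 + W.exitTime (v + 1), add_exitTime_mem hv₁⟩ :=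
      Subtype.ext (add_one_add_exitTime hW hv₁).symm
    rw [exitTime_eq_exitTime_add_one_add_one hW hv₁, Nat.add_right_cancel_iff] at h
    rw [hend]
    exact hadj.reachable.trans (ih hv₁ h)

theorem natCard_connectedComponent_induce_cycleGraph (hW : W ≠ univ) :
    Nat.card ((cycleGraph (n + 2)).induce (W : Set (Fin (n + 2)))).ConnectedComponent
      = #{i ∈ W | i + 1 ∉ W} := by
  set G := (cycleGraph (n + 2)).induce (W : Set (Fin (n + 2)))
  let φ : {i // i ∈ ({i ∈ W | i + 1 ∉ W} : Finset _)} → G.ConnectedComponent :=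
    fun i => G.connectedComponentMk ⟨i, (mem_filter.1 i.2).1⟩
  have hinj : φ.Injective := by
    rintro ⟨i, hi⟩ ⟨j, hj⟩ hij
    have := (ConnectedComponent.exact hij).eq_of_forall_adj_s10
      (f := fun u : (W : Set (Fin (n + 2))) => (u : Fin (n + 2)) + W.exitTime u)
      fun _ _ => add_exitTime_eq_of_induce_cycleGraph_adj hW
    simpa [exitTime_eq_zero (mem_filter.1 hi).2, exitTime_eq_zero (mem_filter.1 hj).2] using this
  have hsurj : φ.Surjective := by
    intro c
    induction c using ConnectedComponent.ind with | h v => ?_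
    obtain ⟨v, hv⟩ := v
    exact ⟨⟨v + W.exitTime v, mem_filter.2 ⟨add_exitTime_mem hv, add_exitTime_add_one_notMem hW v⟩⟩,
      ConnectedComponent.sound (reachable_add_exitTime_induce_cycleGraph hW hv).symm⟩
  rw [← Nat.card_eq_of_bijective φ ⟨hinj, hsurj⟩, Nat.card_eq_fintype_card, Fintype.card_coe]

end SimpleGraph

theorem sum_card_filter_add_one_notMem_div_choose (n : ℕ) :
    ∑ W : Finset (Fin (n + 2)), (#{i ∈ W | i + 1 ∉ W} : ℚ) / (n + 2).choose #W
      = (n + 2) * (n + 3) / 6 := by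
  have hcard (W : Finset (Fin (n + 2))) :
      (#{i ∈ W | i + 1 ∉ W} : ℚ) = ∑ i, if i ∈ W ∧ i + 1 ∉ W then 1 else 0 := by
    rw [sum_boole]
    congr 2
    ext i
    simp
  have hpair (i : Fin (n + 2)) :
      ∑ W : Finset (Fin (n + 2)), (if i ∈ W ∧ i + 1 ∉ W then 1 else 0 : ℚ) / (n + 2).choose #W
        = (n + 3) / 6 := by
    have := sum_mem_notMem_div_choose_card (left_ne_add.2 one_ne_zero : i ≠ i + 1)
    push_cast [Fintype.card_fin] at this
    rw [this]
    ring
  simp_rw [hcard, sum_div]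
  rw [sum_comm, sum_congr rfl fun i _ => hpair i, sum_const, card_univ, Fintype.card_fin,
    nsmul_eq_mul]
  push_cast
  ring

/-- for `m ≥ 3`, the cycle graph `C_m` on `m` vertices satisfies
`τ₀(C_m) = (m−2)(m−3)/(6(m+1))`. -/
theorem tau0_cycle (m : ℕ) (hm : 3 ≤ m) :
    tau0 (SimpleGraph.cycleGraph m)
      = ((m : ℚ) - 2) * ((m : ℚ) - 3) / (6 * ((m : ℚ) + 1)) := by
  obtain ⟨n, rfl⟩ : ∃ n, m = n + 2 := ⟨m - 2, by omega⟩
  have hsummand (W : Finset (Fin (n + 2))) :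
      (if W.Nonempty then
          (Nat.card ((cycleGraph (n + 2)).induce (W : Set (Fin (n + 2)))).ConnectedComponent : ℚ)
            - 1
        else 0)
        = #{i ∈ W | i + 1 ∉ W} + (if W = univ then 1 else 0) - (if W.Nonempty then 1 else 0) := by
    rcases eq_or_ne W univ with rfl | hW
    · rw [coe_univ, cycleGraph_connected.natCard_connectedComponent_induce_univ]
      simp
    · rw [natCard_connectedComponent_induce_cycleGraph hW]
      split_ifs with hne
      · ring
      · simp [not_nonempty_iff_eq_empty.1 hne]
  have huniv : ∑ W : Finset (Fin (n + 2)), (if W = univ then 1 else 0 : ℚ) / (n + 2).choose #W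
      = 1 := by
    simp [ite_div]
  have hnonempty := sum_nonempty_div_choose_card (Fin (n + 2))
  rw [Fintype.card_fin] at hnonempty
  simp only [tau0, Fintype.card_fin, hsummand, add_div, sub_div, sum_add_distrib, sum_sub_distrib,
    sum_card_filter_add_one_notMem_div_choose, huniv, hnonempty]
  push_cast
  field_simp
  ring
end

section
/- Let d ≥ 3 and m ≥ 3, and let G be the graph on m + d vertices consisting of an m-cycle on m of the vertices together with d further vertices each adjacent to all other m + d − 1 vertices. Then τ₀(G) = (m−3)/((d+3)(d+2)) + 1/(m+d+1) + 1/((d+1)·C(d+m+1, d+1)) − 1/(d+4) − 1/((d+1)·C(d+4, 3)). (G is the 1-skeleton of the d-sphere C_m ∗ ∂Δ_{d−1}, the join of an m-gon with the boundary of a (d−1)-simplex, so this computes τ₀ = τ_{d−1} of that sphere.) -/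
/-!
An induced subgraph containing one of the `d` apex vertices is connected, and so is the whole
`m`-cycle `C`. A proper subset `W ⊂ C` induces a disjoint union of arcs, one ending at each
`v ∈ W` whose cycle successor lies outside `W`; hence
`b₀(W) = #{v ∈ W | succ v ∉ W} - 1 + [W = ∅] + [W = C]`.
Summing against the weights `1 / C(n, |W|)` with `n = m + d`, each of the `m` pairs
`(v, succ v)` contributes `∑ⱼ C(m - 2, j) / C(n, j + 1)` and the constant term contributes
`∑ⱼ C(m, j) / C(n, j)`. Both are evaluated (the first after Pascal's rule) by
`∑ₖ C(a, k) / C(n, k) = (n + 1) / (n + 1 - a)`, which is the hockey-stick identity in disguise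
since `C(a, k) / C(n, k) = C(n - k, n - a) / C(n, a)`.
-/

open Finset

/-- The graph on `m + d` vertices consisting of an `m`-cycle on the first `m` vertices
together with `d` further vertices each adjacent to all other vertices
(the 1-skeleton of the `d`-sphere `C_m ∗ ∂Δ_{d−1}`). -/
def cycleJoinGraph (m d : ℕ) : SimpleGraph (Fin (m + d)) :=
  SimpleGraph.fromRel (fun u v =>
    ((u : ℕ) < m ∧ (v : ℕ) < m ∧ ((u : ℕ) + 1) % m = (v : ℕ)) ∨ m ≤ (u : ℕ))

namespace Nat

theorem sum_range_choose_sub_choose {n a : ℕ} (h : a ≤ n) :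
    ∑ k ∈ range (a + 1), (n - k).choose (n - a) = (n + 1).choose a := by
  rw [← sum_range_reflect, choose_symm_of_eq_add (by omega : n + 1 = a + (n - a + 1)),
    show n + 1 = a + (n - a) + 1 by omega, ← sum_range_add_choose a (n - a)]
  refine sum_congr rfl fun k hk ↦ ?_
  have := mem_range.mp hk
  congr 1
  omega

theorem cast_choose_div_cast_choose {n a k : ℕ} (h : a ≤ n) (hk : k ≤ a) :
    (a.choose k : ℚ) / n.choose k = (n - k).choose (n - a) / n.choose a := by
  have hmul := choose_mul (n := n) hk
  rw [choose_symm_of_eq_add (by omega : n - k = a - k + (n - a))] at hmul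
  rw [div_eq_div_iff (by positivity [choose_pos (hk.trans h)]) (by positivity [choose_pos h])]
  exact_mod_cast
    (by linarith [hmul] : a.choose k * n.choose a = (n - k).choose (n - a) * n.choose k)

theorem sum_range_cast_choose_div_cast_choose {n a : ℕ} (h : a ≤ n) :
    ∑ k ∈ range (a + 1), (a.choose k : ℚ) / n.choose k = (n + 1) / (n + 1 - a) := by
  have hratio := congrArg (Nat.cast : ℕ → ℚ) (choose_mul_succ_eq n a)
  push_cast [Nat.cast_sub (by omega : a ≤ n + 1)] at hratio
  have ha : (a : ℚ) ≤ n := by exact_mod_cast h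
  rw [sum_congr rfl fun k hk ↦ cast_choose_div_cast_choose h (by have := mem_range.mp hk; omega),
    ← sum_div, ← Nat.cast_sum, sum_range_choose_sub_choose h,
    div_eq_div_iff (by positivity [choose_pos h]) (by linarith)]
  linarith

theorem sum_range_cast_choose_div_cast_choose_succ {n a : ℕ} (h : a < n) :
    ∑ j ∈ range (a + 1), (a.choose j : ℚ) / n.choose (j + 1)
      = (n + 1) / (n - a) - (n + 1) / (n + 1 - a) := by
  have hsucc := sum_range_cast_choose_div_cast_choose (show a + 1 ≤ n by omega)
  have ha : ∑ k ∈ range (a + 2), (a.choose k : ℚ) / n.choose k = (n + 1) / (n + 1 - a) := by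
    rw [sum_range_succ, choose_succ_self, cast_zero, zero_div, add_zero]
    exact sum_range_cast_choose_div_cast_choose h.le
  rw [sum_range_succ'] at hsucc ha
  -- Pascal's rule splits the `a + 1` instance into the sum at hand plus the `a` instance.
  simp only [choose_succ_succ', Nat.cast_add, add_div, sum_add_distrib] at hsucc
  simp only [choose_zero_right] at hsucc ha
  push_cast at hsucc
  linear_combination hsucc - ha

end Nat

namespace Finset

variable {α β : Type*} [DecidableEq α] [AddCommMonoid β]

theorem sum_powerset_ite_mem_and_notMem {C : Finset α} {a b : α} (ha : a ∈ C) (hb : b ∈ C)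
    (hab : a ≠ b) (g : ℕ → β) :
    ∑ W ∈ C.powerset, (if a ∈ W ∧ b ∉ W then g #W else 0)
      = ∑ j ∈ range (#C - 1), (#C - 2).choose j • g (j + 1) := by
  set s := (C.erase a).erase b
  have hbC : b ∈ C.erase a := mem_erase.mpr ⟨hab.symm, hb⟩
  have has : a ∉ insert b s := by simp [s, hab]
  have hbs : b ∉ s := by simp [s]
  have hcard : #C - 2 = #s := by
    rw [card_erase_of_mem hbC, card_erase_of_mem ha]; omega
  have hcard' : #C - 1 = #s + 1 := by
    have : 1 < #C := one_lt_card.mpr ⟨a, ha, b, hb, hab⟩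
    omega
  have has' : a ∉ s := fun h ↦ has (mem_insert_of_mem h)
  rw [hcard, hcard', ← sum_powerset_apply_card, ← insert_erase ha, ← insert_erase hbC,
    sum_powerset_insert has, sum_eq_zero fun t ht ↦ if_neg fun h ↦ has (mem_powerset.mp ht h.1),
    zero_add, sum_powerset_insert hbs, ← add_zero (∑ t ∈ s.powerset, g (#t + 1))]
  congr 1
  · refine sum_congr rfl fun t ht ↦ ?_
    have hbt : b ∉ t := fun h ↦ hbs (mem_powerset.mp ht h)
    rw [if_pos ⟨mem_insert_self a t, by simp [hab.symm, hbt]⟩,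
      card_insert_of_notMem fun h ↦ has' (mem_powerset.mp ht h)]
  · exact sum_eq_zero fun t _ ↦ if_neg fun h ↦ h.2 (by simp)

theorem sum_powerset_card_filter_apply_notMem_smul {C : Finset α} {σ : α → α}
    (hσ : ∀ v ∈ C, σ v ∈ C) (hne : ∀ v ∈ C, σ v ≠ v) (g : ℕ → β) :
    ∑ W ∈ C.powerset, #{v ∈ W | σ v ∉ W} • g #W
      = #C • ∑ j ∈ range (#C - 1), (#C - 2).choose j • g (j + 1) := by
  have hcount : ∀ W ∈ C.powerset,
      #{v ∈ W | σ v ∉ W} • g #W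
        = ∑ v ∈ C, if v ∈ W ∧ σ v ∉ W then g #W else 0 := by
    intro W hW
    rw [← sum_const, ← sum_filter]
    congr 1
    ext v
    simp only [mem_filter]
    exact ⟨fun h ↦ ⟨mem_powerset.mp hW h.1, h⟩, And.right⟩
  rw [sum_congr rfl hcount, sum_comm, sum_congr rfl fun v hv ↦
    sum_powerset_ite_mem_and_notMem hv (hσ v hv) (hne v hv).symm g, sum_const]

end Finset

namespace SimpleGraph

variable {V : Type*}

theorem Connected.card_connectedComponent {G : SimpleGraph V} (h : G.Connected) :
    Nat.card G.ConnectedComponent = 1 :=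
  have := h.preconnected.subsingleton_connectedComponent
  have : Nonempty G.ConnectedComponent := ⟨G.connectedComponentMk h.nonempty.some⟩
  Nat.card_eq_one_iff_unique.mpr ⟨inferInstance, inferInstance⟩

theorem Reachable.eq_of_forall_adj_s11 {β : Type*} {G : SimpleGraph V} {φ : V → β}
    (hφ : ∀ a b, G.Adj a b → φ a = φ b) {a b : V} (h : G.Reachable a b) : φ a = φ b := by
  obtain ⟨p⟩ := h
  induction p with
  | nil => rfl
  | cons hadj _ ih => exact (hφ _ _ hadj).trans ih

theorem card_connectedComponent_eq_of_retraction {G : SimpleGraph V} (E : Set V) (φ : V → V)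
    (hadj : ∀ a b, G.Adj a b → φ a = φ b) (hmem : ∀ v, φ v ∈ E)
    (hreach : ∀ v, G.Reachable v (φ v)) (hfix : ∀ e ∈ E, φ e = e) :
    Nat.card G.ConnectedComponent = Nat.card E := by
  refine (Nat.card_congr
    (Equiv.ofBijective (fun e : E ↦ G.connectedComponentMk e) ⟨?_, ?_⟩)).symm
  · rintro ⟨e₁, he₁⟩ ⟨e₂, he₂⟩ h
    have := (ConnectedComponent.exact h).eq_of_forall_adj_s11 hadj
    rw [hfix e₁ he₁, hfix e₂ he₂] at this
    exact Subtype.ext this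
  · rintro ⟨v⟩
    exact ⟨⟨φ v, hmem v⟩, ConnectedComponent.sound (hreach v).symm⟩

theorem induce_connected_of_forall_adj {G : SimpleGraph V} {s : Set V} {u : V} (hu : u ∈ s)
    (hadj : ∀ v ∈ s, v ≠ u → G.Adj u v) : (G.induce s).Connected := by
  rw [connected_iff_exists_forall_reachable]
  refine ⟨⟨u, hu⟩, fun ⟨v, hv⟩ ↦ ?_⟩
  by_cases h : v = u
  · subst h; rfl
  · exact Adj.reachable (by simpa using hadj v hv h)

theorem reachable_induce_iterate {G : SimpleGraph V} {σ : V → V} {s : Set V}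
    (hsucc : ∀ v ∈ s, σ v ∈ s → G.Adj v (σ v)) {v : V} {i : ℕ}
    (hs : ∀ j ≤ i, σ^[j] v ∈ s) :
    (G.induce s).Reachable ⟨v, hs 0 i.zero_le⟩ ⟨σ^[i] v, hs i le_rfl⟩ := by
  induction i with
  | zero => rfl
  | succ i ih =>
    refine (ih fun j hj ↦ hs j (hj.trans i.le_succ)).trans (Adj.reachable ?_)
    have hσ := hs (i + 1) le_rfl
    rw [Function.iterate_succ_apply'] at hσ
    simp only [induce_adj, Function.iterate_succ_apply']
    exact hsucc _ (hs i i.le_succ) hσ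

end SimpleGraph

namespace Function

variable {V : Type*} (σ : V → V) (W : Set V)

/-- Following `σ` from `v`, the last point before the orbit first leaves `W`
(`v` itself if it never leaves). -/
noncomputable def arcEnd (v : V) : V := σ^[sInf {n | σ^[n + 1] v ∉ W}] v

variable {σ W} {v : V}

theorem iterate_mem_of_le_sInf (hv : v ∈ W) {i : ℕ} (hi : i ≤ sInf {n | σ^[n + 1] v ∉ W}) :
    σ^[i] v ∈ W := by
  cases i with
  | zero => exact hv
  | succ i => simpa using Nat.notMem_of_lt_sInf hi

theorem arcEnd_mem (hv : v ∈ W) : arcEnd σ W v ∈ W := iterate_mem_of_le_sInf hv le_rfl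

theorem apply_arcEnd_notMem (h : ∃ n, σ^[n + 1] v ∉ W) : σ (arcEnd σ W v) ∉ W := by
  have : σ^[sInf {n | σ^[n + 1] v ∉ W} + 1] v ∉ W :=
    Nat.sInf_mem (s := {n | σ^[n + 1] v ∉ W}) h
  rwa [Function.iterate_succ_apply'] at this

theorem arcEnd_eq_self (h : σ v ∉ W) : arcEnd σ W v = v := by
  rw [arcEnd, Nat.sInf_eq_zero.mpr (Or.inl h), Function.iterate_zero_apply]

theorem arcEnd_apply (hσv : σ v ∈ W) (h : ∃ n, σ^[n + 1] v ∉ W) :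
    arcEnd σ W (σ v) = arcEnd σ W v := by
  have hpos : 1 ≤ sInf {n | σ^[n + 1] v ∉ W} := by
    rw [Nat.one_le_iff_ne_zero, Ne, Nat.sInf_eq_zero]
    rintro (h0 | hempty)
    · exact h0 (by simpa using hσv)
    · exact Set.eq_empty_iff_forall_notMem.mp hempty _ h.choose_spec
  rw [arcEnd, arcEnd, ← Nat.sInf_add hpos]
  rfl

end Function

namespace SimpleGraph

variable {V : Type*}

open Function in
/-- In an induced subgraph whose edges all come from a map `σ`, every component is an arc of
`σ`-steps, and it is determined by its last vertex, the one that `σ` maps out of `W`. -/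
theorem card_connectedComponent_induce_eq_card_filter_apply_notMem [DecidableEq V]
    {G : SimpleGraph V} {σ : V → V} {W : Finset V}
    (hsucc : ∀ v ∈ W, σ v ∈ W → G.Adj v (σ v))
    (hadj : ∀ u ∈ W, ∀ v ∈ W, G.Adj u v → v = σ u ∨ u = σ v)
    (hexit : ∀ v ∈ W, ∃ n, σ^[n + 1] v ∉ W) :
    Nat.card (G.induce (W : Set V)).ConnectedComponent = #{v ∈ W | σ v ∉ W} := by
  have hsub : Nat.card {x : (W : Set V) | σ x ∉ W} = #{v ∈ W | σ v ∉ W} := by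
    rw [← Nat.card_eq_finsetCard]
    exact Nat.card_congr ((Equiv.subtypeSubtypeEquivSubtypeInter (· ∈ W) (σ · ∉ W)).trans
      (Equiv.subtypeEquivRight (by simp)))
  rw [← hsub]
  refine card_connectedComponent_eq_of_retraction _ (fun x ↦ ⟨arcEnd σ W x, arcEnd_mem x.2⟩)
    ?_ (fun x ↦ apply_arcEnd_notMem (hexit x x.2))
    (fun x ↦ reachable_induce_iterate hsucc (fun _ hj ↦ iterate_mem_of_le_sInf x.2 hj))
    (fun x hx ↦ Subtype.ext (arcEnd_eq_self hx))
  rintro ⟨a, ha⟩ ⟨b, hb⟩ hab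
  rcases hadj a ha b hb (by simpa using hab) with rfl | rfl
  · exact Subtype.ext (arcEnd_apply hb (hexit a ha)).symm
  · exact Subtype.ext (arcEnd_apply ha (hexit b hb))

noncomputable def reducedBetti0 (G : SimpleGraph V) (W : Finset V) : ℚ :=
  if W.Nonempty then (Nat.card (G.induce (W : Set V)).ConnectedComponent : ℚ) - 1 else 0

theorem reducedBetti0_eq_zero_of_connected {G : SimpleGraph V} {W : Finset V}
    (h : (G.induce (W : Set V)).Connected) : G.reducedBetti0 W = 0 := by
  obtain ⟨⟨v, hv⟩⟩ := h.nonempty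
  rw [reducedBetti0, if_pos ⟨v, hv⟩, h.card_connectedComponent, Nat.cast_one, sub_self]

end SimpleGraph

theorem tau0_eq_sum_reducedBetti0 {V : Type*} [Fintype V] (G : SimpleGraph V) :
    tau0 G = ((Fintype.card V : ℚ) + 1)⁻¹ *
      ∑ W : Finset V, G.reducedBetti0 W / ((Fintype.card V).choose #W : ℚ) :=
  rfl

def cycleSucc (m d : ℕ) (v : Fin (m + d)) : Fin (m + d) :=
  if h : 0 < m then ⟨(v + 1) % m, (Nat.mod_lt _ h).trans_le (Nat.le_add_right m d)⟩ else v

def cycleVerts (m d : ℕ) : Finset (Fin (m + d)) := {v | (v : ℕ) < m}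

namespace cycleJoinGraph

variable {m d : ℕ} {u v : Fin (m + d)} {W : Finset (Fin (m + d))}

theorem mem_cycleVerts : v ∈ cycleVerts m d ↔ (v : ℕ) < m := by simp [cycleVerts]

theorem card_cycleVerts : #(cycleVerts m d) = m := by
  rw [cycleVerts, Fin.card_filter_val_lt]
  omega

theorem cycleVerts_nonempty (hm : 0 < m) : (cycleVerts m d).Nonempty :=
  ⟨⟨0, by omega⟩, mem_cycleVerts.mpr hm⟩

theorem val_cycleSucc (hm : 0 < m) (v : Fin (m + d)) : (cycleSucc m d v : ℕ) = (v + 1) % m := by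
  simp [cycleSucc, hm]

theorem cycleSucc_mem (hm : 0 < m) (v : Fin (m + d)) : cycleSucc m d v ∈ cycleVerts m d :=
  mem_cycleVerts.mpr (val_cycleSucc hm v ▸ Nat.mod_lt _ hm)

theorem val_iterate_cycleSucc (hm : 0 < m) (hv : v ∈ cycleVerts m d) (i : ℕ) :
    ((cycleSucc m d)^[i] v : ℕ) = (v + i) % m := by
  induction i with
  | zero => simp [Nat.mod_eq_of_lt (mem_cycleVerts.mp hv)]
  | succ i ih => rw [Function.iterate_succ_apply', val_cycleSucc hm, ih, Nat.mod_add_mod, add_assoc]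

theorem iterate_cycleSucc_mem (hm : 0 < m) (hv : v ∈ cycleVerts m d) (i : ℕ) :
    (cycleSucc m d)^[i] v ∈ cycleVerts m d :=
  mem_cycleVerts.mpr (val_iterate_cycleSucc hm hv i ▸ Nat.mod_lt _ hm)

theorem exists_iterate_cycleSucc_eq (hm : 0 < m) (hv : v ∈ cycleVerts m d)
    (hu : u ∈ cycleVerts m d) : ∃ n, (cycleSucc m d)^[n + 1] v = u := by
  refine ⟨u + m - v - 1, Fin.ext ?_⟩
  rw [val_iterate_cycleSucc hm hv]
  rw [mem_cycleVerts] at hu hv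
  rw [show (v : ℕ) + (u + m - v - 1 + 1) = u + m by omega, Nat.add_mod_right, Nat.mod_eq_of_lt hu]

theorem cycleSucc_ne (hm : 2 ≤ m) (hv : v ∈ cycleVerts m d) : cycleSucc m d v ≠ v := by
  intro h
  have hval := congrArg Fin.val h
  rw [val_cycleSucc (by omega)] at hval
  rw [mem_cycleVerts] at hv
  rcases (by omega : (v : ℕ) + 1 < m ∨ (v : ℕ) + 1 = m) with hlt | heq
  · rw [Nat.mod_eq_of_lt hlt] at hval; omega
  · rw [heq, Nat.mod_self] at hval; omega

theorem adj_cycleSucc (hm : 2 ≤ m) (hv : v ∈ cycleVerts m d) :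
    (cycleJoinGraph m d).Adj v (cycleSucc m d v) := by
  rw [cycleJoinGraph, SimpleGraph.fromRel_adj]
  exact ⟨(cycleSucc_ne hm hv).symm, Or.inl (Or.inl ⟨mem_cycleVerts.mp hv,
    mem_cycleVerts.mp (cycleSucc_mem (by omega) v), (val_cycleSucc (by omega) v).symm⟩)⟩

theorem eq_cycleSucc_of_adj (hm : 0 < m) (hu : u ∈ cycleVerts m d) (hv : v ∈ cycleVerts m d)
    (h : (cycleJoinGraph m d).Adj u v) : v = cycleSucc m d u ∨ u = cycleSucc m d v := by
  rw [mem_cycleVerts] at hu hv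
  rw [cycleJoinGraph, SimpleGraph.fromRel_adj] at h
  rcases h.2 with (⟨_, _, h⟩ | h) | (⟨_, _, h⟩ | h)
  · exact Or.inl (Fin.ext (by rw [val_cycleSucc hm, h]))
  · omega
  · exact Or.inr (Fin.ext (by rw [val_cycleSucc hm, h]))
  · omega

theorem adj_of_notMem (hu : u ∉ cycleVerts m d) (h : u ≠ v) : (cycleJoinGraph m d).Adj u v := by
  rw [cycleJoinGraph, SimpleGraph.fromRel_adj]
  exact ⟨h, Or.inl (Or.inr (by simpa [mem_cycleVerts] using hu))⟩

theorem connected_induce_cycleVerts (hm : 2 ≤ m) :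
    ((cycleJoinGraph m d).induce (cycleVerts m d : Set (Fin (m + d)))).Connected := by
  obtain ⟨v₀, h₀⟩ := cycleVerts_nonempty (d := d) (by omega : 0 < m)
  rw [SimpleGraph.connected_iff_exists_forall_reachable]
  refine ⟨⟨v₀, h₀⟩, fun ⟨w, hw⟩ ↦ ?_⟩
  obtain ⟨n, rfl⟩ := exists_iterate_cycleSucc_eq (by omega) h₀ hw
  exact SimpleGraph.reachable_induce_iterate (fun v hv _ ↦ adj_cycleSucc hm hv)
    (fun j _ ↦ iterate_cycleSucc_mem (by omega) h₀ j)

theorem connected_induce_of_not_subset (hW : ¬W ⊆ cycleVerts m d) :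
    ((cycleJoinGraph m d).induce (W : Set (Fin (m + d)))).Connected := by
  obtain ⟨u, huW, hu⟩ := not_subset.mp hW
  exact SimpleGraph.induce_connected_of_forall_adj huW fun v _ hvu ↦ adj_of_notMem hu hvu.symm

theorem card_connectedComponent_induce_of_ssubset (hm : 2 ≤ m) (hW : W ⊂ cycleVerts m d) :
    Nat.card ((cycleJoinGraph m d).induce (W : Set (Fin (m + d)))).ConnectedComponent
      = #{v ∈ W | cycleSucc m d v ∉ W} := by
  obtain ⟨g, hg, hgW⟩ := exists_of_ssubset hW
  refine SimpleGraph.card_connectedComponent_induce_eq_card_filter_apply_notMem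
    (fun v hv _ ↦ adj_cycleSucc hm (hW.subset hv))
    (fun u hu v hv ↦ eq_cycleSucc_of_adj (by omega) (hW.subset hu) (hW.subset hv))
    (fun v hv ↦ ?_)
  obtain ⟨n, hn⟩ := exists_iterate_cycleSucc_eq (by omega) (hW.subset hv) hg
  exact ⟨n, hn ▸ hgW⟩

theorem reducedBetti0_of_subset (hm : 2 ≤ m) (hW : W ⊆ cycleVerts m d) :
    (cycleJoinGraph m d).reducedBetti0 W
      = #{v ∈ W | cycleSucc m d v ∉ W} - 1 + (if W = ∅ then 1 else 0)
          + (if W = cycleVerts m d then 1 else 0) := by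
  have hne := cycleVerts_nonempty (d := d) (by omega : 0 < m)
  rcases hW.eq_or_ssubset with rfl | hss
  · rw [SimpleGraph.reducedBetti0_eq_zero_of_connected (connected_induce_cycleVerts hm),
      filter_false_of_mem fun v _ ↦ not_not.mpr (cycleSucc_mem (by omega) v), if_neg hne.ne_empty,
      if_pos rfl]
    simp
  rcases W.eq_empty_or_nonempty with rfl | hWne
  · simp [SimpleGraph.reducedBetti0, hne.ne_empty.symm]
  · rw [SimpleGraph.reducedBetti0, if_pos hWne, card_connectedComponent_induce_of_ssubset hm hss,
      if_neg hWne.ne_empty, if_neg hss.ne]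
    ring

theorem sum_reducedBetti0_div (hm : 2 ≤ m) (f : ℕ → ℚ) :
    ∑ W : Finset (Fin (m + d)), (cycleJoinGraph m d).reducedBetti0 W / f #W
      = m * ∑ j ∈ range (m - 1), ((m - 2).choose j : ℚ) / f (j + 1)
        - ∑ j ∈ range (m + 1), (m.choose j : ℚ) / f j + 1 / f 0 + 1 / f m := by
  rw [← sum_subset (subset_univ (cycleVerts m d).powerset) fun W _ hW ↦ by
    rw [SimpleGraph.reducedBetti0_eq_zero_of_connected
      (connected_induce_of_not_subset (mt mem_powerset.mpr hW)), zero_div]]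
  rw [sum_congr rfl fun W hW ↦ by rw [reducedBetti0_of_subset hm (mem_powerset.mp hW)]]
  have hexits := sum_powerset_card_filter_apply_notMem_smul (C := cycleVerts m d)
    (fun v _ ↦ cycleSucc_mem (by omega) v) (fun v hv ↦ cycleSucc_ne hm hv) (1 / f ·)
  simp only [card_cycleVerts, nsmul_eq_mul, mul_one_div] at hexits
  simp only [add_div, sub_div, ite_div, zero_div, sum_add_distrib, sum_sub_distrib, hexits,
    sum_powerset_apply_card (1 / f ·), card_cycleVerts, nsmul_eq_mul, mul_one_div]
  simp [card_cycleVerts]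

theorem tau0_eq (hm : 2 ≤ m) :
    tau0 (cycleJoinGraph m d)
      = m / ((d + 2) * (d + 3)) - 1 / (d + 1) + (1 + 1 / (m + d).choose m) / (m + d + 1) := by
  have hsum := sum_reducedBetti0_div (d := d) hm fun k ↦ ((m + d).choose k : ℚ)
  rw [tau0_eq_sum_reducedBetti0, Fintype.card_fin, hsum, show m - 1 = m - 2 + 1 by omega,
    Nat.sum_range_cast_choose_div_cast_choose_succ (by omega : m - 2 < m + d),
    Nat.sum_range_cast_choose_div_cast_choose (by omega : m ≤ m + d)]
  push_cast [Nat.cast_sub hm, Nat.choose_zero_right]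
  rw [show (m : ℚ) + d - (m - 2) = d + 2 by ring,
    show (m : ℚ) + d + 1 - (m - 2) = d + 3 by ring, show (m : ℚ) + d + 1 - m = d + 1 by ring]
  field_simp
  ring

end cycleJoinGraph

theorem tau0_cycle_join_general (d m : ℕ) (hm : 3 ≤ m) :
    tau0 (cycleJoinGraph m d)
      = ((m : ℚ) - 3) / (((d : ℚ) + 3) * ((d : ℚ) + 2))
        + 1 / ((m : ℚ) + (d : ℚ) + 1)
        + 1 / (((d : ℚ) + 1) * ((d + m + 1).choose (d + 1) : ℚ))
        - 1 / ((d : ℚ) + 4)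
        - 1 / (((d : ℚ) + 1) * ((d + 4).choose 3 : ℚ)) := by
  have hsucc : ((d : ℚ) + 1) * (d + m + 1).choose (d + 1) = (m + d + 1) * (m + d).choose m := by
    have h := Nat.add_one_mul_choose_eq (m + d) d
    rw [Nat.choose_symm_add, show d + m + 1 = m + d + 1 by omega]
    qify at h
    linarith
  have hthree : ((d + 4).choose 3 : ℚ) = (d + 4) * (d + 3) * (d + 2) / 6 := by
    rw [Nat.cast_choose_eq_descPochhammer_div]
    simp only [Nat.cast_add, Nat.cast_ofNat, descPochhammer_succ_eval, descPochhammer_one,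
      Polynomial.eval_X, Nat.factorial, Nat.cast_one, mul_one]
    ring
  have hpos : (0 : ℚ) < (m + d).choose m := by exact_mod_cast Nat.choose_pos (by omega)
  rw [cycleJoinGraph.tau0_eq (by omega), hsucc, hthree]
  field_simp
  ring

/-- for `d ≥ 3` and `m ≥ 3`, the graph of `C_m ∗ ∂Δ_{d−1}` has
`τ₀ = (m−3)/((d+3)(d+2)) + 1/(m+d+1) + 1/((d+1)·C(d+m+1,d+1)) − 1/(d+4) − 1/((d+1)·C(d+4,3))`. -/
theorem tau0_cycle_join (d m : ℕ) (hd : 3 ≤ d) (hm : 3 ≤ m) :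
    tau0 (cycleJoinGraph m d)
      = ((m : ℚ) - 3) / (((d : ℚ) + 3) * ((d : ℚ) + 2))
        + 1 / ((m : ℚ) + (d : ℚ) + 1)
        + 1 / (((d : ℚ) + 1) * ((d + m + 1).choose (d + 1) : ℚ))
        - 1 / ((d : ℚ) + 4)
        - 1 / (((d : ℚ) + 1) * ((d + 4).choose 3 : ℚ)) :=
  tau0_cycle_join_general d m hm
end

section
/- Let d ≥ 1 and let C be a strongly connected pure d-dimensional simplicial complex on n vertices with f₁ edges, where C(n−1,2) + d + 1 ≤ f₁ < C(n,2). Let k be the largest integer with k ≤ n and C(k,2) + (n−k)·(d+1) ≤ f₁, and set j = f₁ − C(k,2) − (n−k−1)·(d+1). Then τ₀(C) ≤ 1/(n+1) − 1/(k+1) + 1/((j+1)(j+2)) + (n−k−1)/((d+2)(d+3)); that is, τ₀(C) is at most τ₀ of the Billera–Lee graph with parameters (n, f₁, d+1), which is the graph of the n-vertex Billera–Lee d-sphere with f₁ edges. (This proves the conjectured upper bound for τ₀ for nearly 2-neighborly triangulations, in particular for combinatorial d-manifolds with at most n−d−2 missing edges.) -/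
/-!
Let `G` be a graph on `n` vertices with `m` missing edges and `n = m + 1 + j`. Order the vertices.
Every component of `G[W]` other than the one of `min W` contributes `1` to `b₀(G, W)`; for its
least vertex `v` and vertex set `P`, the `|W| - 1` non-edges `v b` (`b ∈ W \ P`) and `(min W) p`
(`p ∈ P \ {v}`) determine `(W, v)`. Hence `∑_{|W| = s} b₀(G, W) ≤ C(m, s - 1)` for `s ≥ 2`, and
`∑_{s ≥ 2} C(m, s - 1) / C(n, s) = (n + 1) / ((j + 1)(j + 2)) - 1 / n` (a Beta integral), which
gives `τ₀(G) ≤ 1/(n+1) - 1/n + 1/((j+1)(j+2))`, the value for `K_{n-1}` plus a vertex of degree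
`j`. When `f₁ ≥ C(n-1, 2) + d + 1` the Billera–Lee parameters are `k = n - 1` and
`j = f₁ - C(n-1, 2) = n - 1 - m`, so this is the claimed bound.
-/

open Finset

open scoped Nat

/- `1 / C(n, k) = (n + 1) ∫₀¹ xᵏ (1 - x)ⁿ⁻ᵏ dx`, so the sum is `(n + 1) ∫₀¹ xʳ (1 - x)^q dx`. -/
theorem sum_choose_div_choose_eq_factorial {m r q n : ℕ} (hn : n = m + r + q) :
    ∑ t ∈ range (m + 1), (m.choose t : ℚ) / n.choose (t + r) =
      (n + 1) * r ! * q ! / (r + q + 1)! := by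
  induction m generalizing r q with
  | zero =>
    subst hn
    rw [zero_add, sum_range_one, Nat.choose_zero_right, zero_add,
      Nat.cast_choose ℚ (Nat.le_add_right r q), Nat.add_sub_cancel_left, Nat.factorial_succ]
    push_cast
    field_simp
  | succ m ih =>
    have hpascal : ∑ i ∈ range (m + 1), ((m + 1).choose (i + 1) : ℚ) / n.choose (i + 1 + r) =
        ∑ i ∈ range (m + 1), (m.choose i : ℚ) / n.choose (i + (r + 1)) +
          ∑ i ∈ range (m + 1), (m.choose (i + 1) : ℚ) / n.choose (i + 1 + r) := by
      rw [← sum_add_distrib]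
      refine sum_congr rfl fun i _ => ?_
      rw [Nat.choose_succ_succ', Nat.cast_add, add_div, show i + (r + 1) = i + 1 + r by omega]
    have hshift : ∑ i ∈ range (m + 1), (m.choose (i + 1) : ℚ) / n.choose (i + 1 + r) +
        1 / n.choose r = ∑ t ∈ range (m + 1), (m.choose t : ℚ) / n.choose (t + r) := by
      rw [sum_range_succ _ m, Nat.choose_succ_self, Nat.cast_zero, zero_div, add_zero,
        sum_range_succ' (fun t => (m.choose t : ℚ) / n.choose (t + r)), Nat.choose_zero_right,
        zero_add, Nat.cast_one]
    rw [sum_range_succ', hpascal, Nat.choose_zero_right, zero_add, Nat.cast_one, add_assoc, hshift,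
      ih (r := r + 1) (q := q) (by omega), ih (r := r) (q := q + 1) (by omega),
      show r + 1 + q + 1 = r + q + 1 + 1 by ring, show r + (q + 1) + 1 = r + q + 1 + 1 by ring]
    simp only [Nat.factorial_succ, Nat.cast_mul, Nat.cast_add, Nat.cast_one]
    field_simp
    ring

theorem sum_choose_succ_div_choose_add_two {m j n : ℕ} (hn : n = m + 1 + j) :
    ∑ i ∈ range (m + j), (m.choose (i + 1) : ℚ) / n.choose (i + 2) =
      (n + 1) / ((j + 1) * (j + 2)) - 1 / n := by
  have h := sum_choose_div_choose_eq_factorial (r := 1) (q := j) hn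
  rw [sum_range_succ', Nat.choose_zero_right, zero_add, Nat.choose_one_right, Nat.cast_one] at h
  have htail : ∑ i ∈ range j, (m.choose (m + i + 1) : ℚ) / n.choose (m + i + 2) = 0 :=
    sum_eq_zero fun i _ => by rw [Nat.choose_eq_zero_of_lt (by omega), Nat.cast_zero, zero_div]
  rw [sum_range_add, htail, add_zero, eq_sub_iff_add_eq]
  refine h.trans ?_
  rw [show 1 + j + 1 = j + 1 + 1 by ring]
  simp only [Nat.factorial_succ, Nat.factorial_zero, Nat.cast_mul, Nat.cast_add, Nat.cast_one]
  field_simp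
  ring

namespace SimpleGraph

section InducedComponent

open scoped Classical

variable {V : Type*} (G : SimpleGraph V) {W : Finset V} {r u v : V}

noncomputable def inducedComponent (W : Finset V) (v : V) : Finset V :=
  W.filter fun w => ∃ (hw : w ∈ W) (hv : v ∈ W),
    (G.induce (W : Set V)).Reachable ⟨w, hw⟩ ⟨v, hv⟩

lemma mem_inducedComponent : u ∈ G.inducedComponent W v ↔
    ∃ (hu : u ∈ W) (hv : v ∈ W), (G.induce (W : Set V)).Reachable ⟨u, hu⟩ ⟨v, hv⟩ :=
  mem_filter.trans ⟨And.right, fun h => ⟨h.1, h⟩⟩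

lemma inducedComponent_subset : G.inducedComponent W v ⊆ W := filter_subset _ _

lemma mem_inducedComponent_self (hv : v ∈ W) : v ∈ G.inducedComponent W v :=
  G.mem_inducedComponent.2 ⟨hv, hv, .rfl⟩

lemma inducedComponent_subset_of_mem (hu : u ∈ G.inducedComponent W v) :
    G.inducedComponent W u ⊆ G.inducedComponent W v := by
  obtain ⟨_, hv, huv⟩ := G.mem_inducedComponent.1 hu
  intro w hw
  obtain ⟨hw, _, hwu⟩ := G.mem_inducedComponent.1 hw
  exact G.mem_inducedComponent.2 ⟨hw, hv, hwu.trans huv⟩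

lemma not_adj_of_mem_inducedComponent {p b : V} (hp : p ∈ G.inducedComponent W v) (hb : b ∈ W)
    (hbv : b ∉ G.inducedComponent W v) : ¬ G.Adj p b := by
  obtain ⟨hp, hv, hpv⟩ := G.mem_inducedComponent.1 hp
  intro hpb
  have hbp : (G.induce (W : Set V)).Adj ⟨b, hb⟩ ⟨p, hp⟩ := by simpa using hpb.symm
  exact hbv (G.mem_inducedComponent.2 ⟨hb, hv, hbp.reachable.trans hpv⟩)

/-- For `v` whose component `P` in `G[W]` misses `r ∈ W`: `|W| - 1` non-edges of `G` from which
`W` (their vertices) and `P` (the neighbours of `r`) can be read off. -/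
noncomputable def nonEdgeCode (W : Finset V) (r v : V) : Finset (Sym2 V) :=
  (W \ G.inducedComponent W v).image (s(v, ·)) ∪
    ((G.inducedComponent W v).erase v).image (s(r, ·))

lemma coe_nonEdgeCode_subset (hv : v ∈ W) (hr : r ∈ W) (hrv : r ∉ G.inducedComponent W v) :
    ↑(G.nonEdgeCode W r v) ⊆ Gᶜ.edgeSet := by
  have hvP := G.mem_inducedComponent_self hv
  intro e he
  simp only [mem_coe, nonEdgeCode, mem_union, mem_image, mem_sdiff, mem_erase] at he
  rcases he with ⟨b, ⟨hb, hbP⟩, rfl⟩ | ⟨p, ⟨-, hpP⟩, rfl⟩ <;> rw [mem_edgeSet, compl_adj]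
  · exact ⟨fun h => hbP (h ▸ hvP), G.not_adj_of_mem_inducedComponent hvP hb hbP⟩
  · exact ⟨fun h => hrv (h ▸ hpP), fun h => G.not_adj_of_mem_inducedComponent hpP hr hrv h.symm⟩

lemma card_nonEdgeCode (hv : v ∈ W) (hrv : r ∉ G.inducedComponent W v) :
    #(G.nonEdgeCode W r v) = #W - 1 := by
  have hvP := G.mem_inducedComponent_self hv
  have hdisj : Disjoint ((W \ G.inducedComponent W v).image (s(v, ·)))
      (((G.inducedComponent W v).erase v).image (s(r, ·))) := by
    rw [Finset.disjoint_left]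
    intro e he he'
    obtain ⟨b, -, rfl⟩ := mem_image.1 he
    obtain ⟨p, hp, h⟩ := mem_image.1 he'
    obtain ⟨hpv, -⟩ := mem_erase.1 hp
    rcases Sym2.eq_iff.1 h with ⟨h, -⟩ | ⟨-, h⟩
    · exact hrv (h ▸ hvP)
    · exact hpv h
  rw [nonEdgeCode, card_union_of_disjoint hdisj,
    card_image_of_injective _ fun _ _ => Sym2.congr_right.1,
    card_image_of_injective _ fun _ _ => Sym2.congr_right.1,
    card_sdiff_of_subset G.inducedComponent_subset,
    card_erase_of_mem hvP]
  have := card_le_card (G.inducedComponent_subset (W := W) (v := v))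
  have := card_pos.2 ⟨v, hvP⟩
  omega

lemma mem_iff_exists_mem_nonEdgeCode (hv : v ∈ W) (hr : r ∈ W)
    (hrv : r ∉ G.inducedComponent W v) (u : V) : u ∈ W ↔ ∃ e ∈ G.nonEdgeCode W r v, u ∈ e := by
  simp only [nonEdgeCode, mem_union, mem_image, mem_sdiff, mem_erase]
  constructor
  · intro hu
    by_cases huP : u ∈ G.inducedComponent W v
    · by_cases huv : u = v
      · exact ⟨s(v, r), .inl ⟨r, ⟨hr, hrv⟩, rfl⟩, huv ▸ Sym2.mem_mk_left _ _⟩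
      · exact ⟨s(r, u), .inr ⟨u, ⟨huv, huP⟩, rfl⟩, Sym2.mem_mk_right _ _⟩
    · exact ⟨s(v, u), .inl ⟨u, ⟨hu, huP⟩, rfl⟩, Sym2.mem_mk_right _ _⟩
  · rintro ⟨e, ⟨b, ⟨hb, -⟩, rfl⟩ | ⟨p, ⟨-, hp⟩, rfl⟩, hue⟩ <;>
      rcases Sym2.mem_iff.1 hue with rfl | rfl
    exacts [hv, hb, hr, G.inducedComponent_subset hp]

lemma mem_inducedComponent_iff_mk_mem_nonEdgeCode (hv : v ∈ W) (hr : r ∈ W)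
    (hrv : r ∉ G.inducedComponent W v) (u : V) :
    u ∈ G.inducedComponent W v ↔ s(r, u) ∈ G.nonEdgeCode W r v := by
  have hvP := G.mem_inducedComponent_self hv
  simp only [nonEdgeCode, mem_union, mem_image, mem_sdiff, mem_erase]
  constructor
  · intro huP
    by_cases huv : u = v
    · exact .inl ⟨r, ⟨hr, hrv⟩, huv ▸ Sym2.eq_swap⟩
    · exact .inr ⟨u, ⟨huv, huP⟩, rfl⟩
  · rintro (⟨b, -, h⟩ | ⟨p, ⟨-, hp⟩, h⟩)
    · rcases Sym2.eq_iff.1 h with ⟨rfl, -⟩ | ⟨rfl, -⟩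
      exacts [absurd hvP hrv, hvP]
    · exact Sym2.congr_right.1 h ▸ hp

end InducedComponent

section NonrootLeaders

open scoped Classical

variable {V : Type*} [LinearOrder V] (G : SimpleGraph V) {W : Finset V} {v : V}

/-- The least vertex of every component of `G[W]` except the component of `min W`. -/
noncomputable def nonrootLeaders (W : Finset V) : Finset V :=
  W.filter fun v => (∀ w ∈ G.inducedComponent W v, v ≤ w) ∧ ∃ w ∈ W, w < v

lemma mem_nonrootLeaders : v ∈ G.nonrootLeaders W ↔
    v ∈ W ∧ (∀ w ∈ G.inducedComponent W v, v ≤ w) ∧ ∃ w ∈ W, w < v := mem_filter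

lemma nonrootLeaders_subset : G.nonrootLeaders W ⊆ W := filter_subset _ _

lemma nonrootLeaders_eq_empty_of_card_le_one (hW : #W ≤ 1) : G.nonrootLeaders W = ∅ :=
  eq_empty_of_forall_notMem fun v hv => by
    obtain ⟨hvW, -, w, hw, hwv⟩ := G.mem_nonrootLeaders.1 hv
    exact hwv.ne (card_le_one.1 hW w hw v hvW)

lemma card_connectedComponent_le (hW : W.Nonempty) :
    Nat.card (G.induce (W : Set V)).ConnectedComponent ≤ #(G.nonrootLeaders W) + 1 := by
  set r := W.min' hW
  set R : Finset V := insert r (G.nonrootLeaders W)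
  have hsub : R ⊆ W := insert_subset (W.min'_mem hW) G.nonrootLeaders_subset
  let f : R → (G.induce (W : Set V)).ConnectedComponent :=
    fun u => (G.induce (W : Set V)).connectedComponentMk ⟨u, hsub u.2⟩
  have hf : Function.Surjective f := by
    refine ConnectedComponent.ind fun ⟨x, hx⟩ => ?_
    set u := (G.inducedComponent W x).min' ⟨x, G.mem_inducedComponent_self hx⟩
    have hux : u ∈ G.inducedComponent W x := min'_mem _ _
    have hu : u ∈ R := by
      by_cases hur : u = r
      · exact hur ▸ mem_insert_self _ _
      have huW := G.inducedComponent_subset hux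
      refine mem_insert_of_mem (G.mem_nonrootLeaders.2 ⟨huW, fun w hw => ?_,
        r, W.min'_mem hW, lt_of_le_of_ne (W.min'_le _ huW) (Ne.symm hur)⟩)
      exact min'_le _ _ (G.inducedComponent_subset_of_mem hux hw)
    obtain ⟨_, _, hreach⟩ := G.mem_inducedComponent.1 hux
    exact ⟨⟨u, hu⟩, ConnectedComponent.sound hreach⟩
  calc Nat.card (G.induce (W : Set V)).ConnectedComponent
      ≤ Nat.card R := Nat.card_le_card_of_surjective f hf
    _ ≤ #(G.nonrootLeaders W) + 1 := by
      rw [Nat.card_eq_fintype_card, Fintype.card_coe]; exact card_insert_le _ _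

lemma min'_notMem_inducedComponent (hW : W.Nonempty) (hv : v ∈ G.nonrootLeaders W) :
    W.min' hW ∉ G.inducedComponent W v := by
  obtain ⟨-, hleast, w, hw, hwv⟩ := G.mem_nonrootLeaders.1 hv
  exact fun hr => (hleast _ hr).not_gt ((W.min'_le w hw).trans_lt hwv)

lemma injOn_nonEdgeCode_min' (hW : W.Nonempty) :
    Set.InjOn (G.nonEdgeCode W (W.min' hW)) (G.nonrootLeaders W) := by
  intro v hv v' hv' h
  have hvW : v ∈ W := G.nonrootLeaders_subset hv
  have hv'W : v' ∈ W := G.nonrootLeaders_subset hv'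
  have hP : G.inducedComponent W v = G.inducedComponent W v' := by
    ext u
    rw [G.mem_inducedComponent_iff_mk_mem_nonEdgeCode hvW (W.min'_mem hW)
        (G.min'_notMem_inducedComponent hW hv),
      G.mem_inducedComponent_iff_mk_mem_nonEdgeCode hv'W (W.min'_mem hW)
        (G.min'_notMem_inducedComponent hW hv'), h]
  refine le_antisymm ((G.mem_nonrootLeaders.1 hv).2.1 v' ?_)
    ((G.mem_nonrootLeaders.1 hv').2.1 v ?_)
  · exact hP ▸ G.mem_inducedComponent_self hv'W
  · exact hP.symm ▸ G.mem_inducedComponent_self hvW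

lemma sum_card_nonrootLeaders_le [Fintype V] (s : ℕ) :
    ∑ W ∈ powersetCard s univ, #(G.nonrootLeaders W) ≤ Gᶜ.edgeSet.ncard.choose (s - 1) := by
  rw [Set.ncard_eq_toFinset_card', ← card_powersetCard, ← card_sigma]
  refine card_le_card_of_injOn
    (fun x => if h : x.1.Nonempty then G.nonEdgeCode x.1 (x.1.min' h) x.2 else ∅) ?_ ?_
  · rintro ⟨W, v⟩ hx
    obtain ⟨hW, hv⟩ := mem_sigma.1 hx
    have hvW : v ∈ W := G.nonrootLeaders_subset hv
    have hne : W.Nonempty := ⟨v, hvW⟩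
    have hrv := G.min'_notMem_inducedComponent hne hv
    simp only [dif_pos hne, mem_coe, mem_powersetCard]
    refine ⟨Set.subset_toFinset.2 (G.coe_nonEdgeCode_subset hvW (W.min'_mem hne) hrv), ?_⟩
    rw [G.card_nonEdgeCode hvW hrv, (mem_powersetCard.1 hW).2]
  · rintro ⟨W, v⟩ hx ⟨W', v'⟩ hx' h
    obtain ⟨-, hv⟩ := mem_sigma.1 hx
    obtain ⟨-, hv'⟩ := mem_sigma.1 hx'
    have hvW : v ∈ W := G.nonrootLeaders_subset hv
    have hv'W : v' ∈ W' := G.nonrootLeaders_subset hv'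
    have hne : W.Nonempty := ⟨v, hvW⟩
    have hne' : W'.Nonempty := ⟨v', hv'W⟩
    simp only [dif_pos hne, dif_pos hne'] at h
    obtain rfl : W = W' := by
      ext u
      rw [G.mem_iff_exists_mem_nonEdgeCode hvW (W.min'_mem hne)
          (G.min'_notMem_inducedComponent hne hv),
        G.mem_iff_exists_mem_nonEdgeCode hv'W (W'.min'_mem hne')
          (G.min'_notMem_inducedComponent hne' hv'), h]
    obtain rfl := G.injOn_nonEdgeCode_min' hne hv hv' h
    rfl

end NonrootLeaders

theorem ncard_edgeSet_add_ncard_edgeSet_compl {V : Type*} [Fintype V] (G : SimpleGraph V) :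
    G.edgeSet.ncard + Gᶜ.edgeSet.ncard = (Fintype.card V).choose 2 := by
  classical
  rw [← Set.ncard_union_eq (G.disjoint_edgeSet.2 disjoint_compl_right), ← edgeSet_sup,
    sup_compl_eq_top, Set.ncard_eq_toFinset_card', ← edgeFinset,
    card_edgeFinset_top_eq_card_choose_two]

end SimpleGraph

theorem tau0_le_of_ncard_compl_edgeSet {V : Type*} [Fintype V] (G : SimpleGraph V) {m j : ℕ}
    (hm : Gᶜ.edgeSet.ncard = m) (hn : Fintype.card V = m + 1 + j) :
    tau0 G ≤ 1 / ((Fintype.card V : ℚ) + 1) - 1 / Fintype.card V + 1 / ((j + 1) * (j + 2)) := by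
  classical
  let : LinearOrder V := LinearOrder.lift' _ (Fintype.equivFin V).injective
  set n := Fintype.card V
  have hterm (W : Finset V) : (if W.Nonempty then
      (Nat.card (G.induce (W : Set V)).ConnectedComponent : ℚ) - 1 else 0) ≤
        #(G.nonrootLeaders W) := by
    split_ifs with hW
    · have := G.card_connectedComponent_le hW
      rw [sub_le_iff_le_add]
      exact_mod_cast this
    · positivity
  have hsmall (s : ℕ) (hs : s ≤ 1) : ∑ W ∈ powersetCard s univ, #(G.nonrootLeaders W) = 0 :=
    sum_eq_zero fun W hW => by
      rw [G.nonrootLeaders_eq_empty_of_card_le_one ((mem_powersetCard.1 hW).2.le.trans hs),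
        card_empty]
  calc tau0 G ≤ ((n : ℚ) + 1)⁻¹ * ∑ W : Finset V, (#(G.nonrootLeaders W) : ℚ) / n.choose #W := by
        unfold tau0
        gcongr with W
        exact hterm W
    _ = ((n : ℚ) + 1)⁻¹ * ∑ s ∈ range (n + 1),
          ((∑ W ∈ powersetCard s univ, #(G.nonrootLeaders W) : ℕ) : ℚ) / n.choose s := by
        rw [← sum_fiberwise_of_maps_to (g := card) (t := range (n + 1))
          fun W _ => mem_range.2 (Nat.lt_succ_of_le (card_le_univ W))]
        congr 1
        refine sum_congr rfl fun s _ => ?_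
        rw [Nat.cast_sum, sum_div, powersetCard_eq_filter, powerset_univ]
        exact sum_congr rfl fun W hW => by rw [(mem_filter.1 hW).2]
    _ ≤ ((n : ℚ) + 1)⁻¹ * ∑ i ∈ range (m + j), (m.choose (i + 1) : ℚ) / n.choose (i + 2) := by
        rw [show n + 1 = m + j + 1 + 1 by omega, sum_range_succ', sum_range_succ',
          hsmall _ le_rfl, hsmall _ zero_le_one]
        simp only [Nat.cast_zero, zero_div, add_zero]
        gcongr with i
        exact_mod_cast hm ▸ G.sum_card_nonrootLeaders_le (i + 1 + 1)
    _ = 1 / ((n : ℚ) + 1) - 1 / n + 1 / ((j + 1) * (j + 2)) := by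
        rw [sum_choose_succ_div_choose_add_two hn]
        have : (n : ℚ) ≠ 0 := Nat.cast_ne_zero.2 (by omega)
        field_simp
        ring

theorem tau0_le_billeraLee_sphere_bound_general {V : Type*} [Fintype V]
    (d : ℕ) (F : Finset (Finset V))
    (f₁ k j : ℕ)
    (hf₁ : f₁ = Nat.card (complexGraph F).edgeSet)
    (hf₁ge : (Fintype.card V - 1).choose 2 + d + 1 ≤ f₁)
    (hf₁lt : f₁ < (Fintype.card V).choose 2)
    (hk₁ : k.choose 2 + (Fintype.card V - k) * (d + 1) ≤ f₁)
    (hkmax : ∀ k', k' ≤ Fintype.card V →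
      k'.choose 2 + (Fintype.card V - k') * (d + 1) ≤ f₁ → k' ≤ k)
    (hj : (j : ℤ) = (f₁ : ℤ) - (k.choose 2 : ℤ)
      - ((Fintype.card V : ℤ) - (k : ℤ) - 1) * ((d : ℤ) + 1)) :
    tau0 (complexGraph F)
      ≤ 1 / ((Fintype.card V : ℚ) + 1) - 1 / ((k : ℚ) + 1)
        + 1 / (((j : ℚ) + 1) * ((j : ℚ) + 2))
        + ((Fintype.card V : ℚ) - (k : ℚ) - 1) / (((d : ℚ) + 2) * ((d : ℚ) + 3)) := by
  set n := Fintype.card V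
  have hn : 2 ≤ n := by
    by_contra h
    rw [Nat.choose_eq_zero_of_lt (by omega)] at hf₁lt
    omega
  have hk : k = n - 1 := by
    have hkn : k < n := lt_of_not_ge fun h =>
      (hf₁lt.trans_le (Nat.choose_le_choose 2 h)).not_ge ((Nat.le_add_right _ _).trans hk₁)
    have := hkmax (n - 1) (Nat.sub_le _ _) (by rw [Nat.sub_sub_self (by omega), one_mul]; omega)
    omega
  have hpascal : n.choose 2 = (n - 1).choose 2 + (n - 1) := by
    have := Nat.choose_succ_succ' (n - 1) 1
    rw [Nat.sub_add_cancel (by omega), Nat.choose_one_right] at this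
    rw [add_comm]
    exact this
  have hedges : f₁ + (complexGraph F)ᶜ.edgeSet.ncard = n.choose 2 := by
    rw [hf₁, Nat.card_coe_set_eq, SimpleGraph.ncard_edgeSet_add_ncard_edgeSet_compl]
  subst hk
  have hj' : (j : ℤ) = f₁ - (n - 1).choose 2 := by
    rw [hj, Nat.cast_sub (by omega : 1 ≤ n)]
    ring
  have hn' : n = (complexGraph F)ᶜ.edgeSet.ncard + 1 + j := by omega
  refine (tau0_le_of_ncard_compl_edgeSet _ rfl hn').trans_eq ?_
  rw [Nat.cast_sub (by omega : 1 ≤ n)]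
  push_cast
  ring

/-- a strongly connected pure `d`-complex on `n` vertices with
`C(n−1,2) + d + 1 ≤ f₁ < C(n,2)` edges satisfies `τ₀(C) ≤ τ₀` of the Billera–Lee graph with
parameters `(n, f₁, d+1)` (graph of the `n`-vertex Billera–Lee `d`-sphere with `f₁` edges),
where `k` is the largest integer with `k ≤ n` and `C(k,2) + (n−k)·(d+1) ≤ f₁`, and
`j = f₁ − C(k,2) − (n−k−1)·(d+1)`. -/
theorem tau0_le_billeraLee_sphere_bound {V : Type*} [Fintype V] [DecidableEq V]
    (d : ℕ) (hd : 1 ≤ d) (F : Finset (Finset V)) (hne : F.Nonempty)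
    (hfacet : ∀ S ∈ F, S.card = d + 1)
    (hcover : ∀ v : V, ∃ S ∈ F, v ∈ S)
    (hsc : (dualGraph F d).Connected)
    (f₁ k j : ℕ)
    (hf₁ : f₁ = Nat.card (complexGraph F).edgeSet)
    (hf₁ge : (Fintype.card V - 1).choose 2 + d + 1 ≤ f₁)
    (hf₁lt : f₁ < (Fintype.card V).choose 2)
    (hk₀ : k ≤ Fintype.card V)
    (hk₁ : k.choose 2 + (Fintype.card V - k) * (d + 1) ≤ f₁)
    (hkmax : ∀ k', k' ≤ Fintype.card V →
      k'.choose 2 + (Fintype.card V - k') * (d + 1) ≤ f₁ → k' ≤ k)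
    (hj : (j : ℤ) = (f₁ : ℤ) - (k.choose 2 : ℤ)
      - ((Fintype.card V : ℤ) - (k : ℤ) - 1) * ((d : ℤ) + 1)) :
    tau0 (complexGraph F)
      ≤ 1 / ((Fintype.card V : ℚ) + 1) - 1 / ((k : ℚ) + 1)
        + 1 / (((j : ℚ) + 1) * ((j : ℚ) + 2))
        + ((Fintype.card V : ℚ) - (k : ℚ) - 1) / (((d : ℚ) + 2) * ((d : ℚ) + 3)) :=
  tau0_le_billeraLee_sphere_bound_general d F f₁ k j hf₁ hf₁ge hf₁lt hk₁ hkmax hj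
end

section
/- Let C be a simplicial complex of dimension d on a finite vertex set V with |V| = n and f-vector (f_{−1}, f₀, …, f_d). Then (1/(n+1)) · Σ_{W ⊆ V} χ̃(C[W])/C(n,|W|) = Σ_{k=−1}^{d} (−1)^k f_k/(k+2). Since χ̃(C[W]) = Σ_{i=−1}^{d} (−1)^i β̃_i(C[W]) by the Euler–Poincaré formula, this is equivalent to the statement Σ_{i=−1}^{d} (−1)^i τ_i(C) = Σ_{k=−1}^{d} (−1)^k f_k/(k+2). -/
open Finset

/-!
Exchanging the two sums, a face `F` with `|F| = s` contributes `(-1)^(s+1)` times the weight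
`∑_{W ⊇ F} 1 / C(n, |W|)`. Grouping the supersets by size and using
`C(n, s+j) C(s+j, s) = C(n, s) C(n-s, j)`, the weight becomes `C(n, s)⁻¹ ∑_j C(s+j, s)`, which is
`C(n+1, s+1) / C(n, s) = (n+1)/(s+1)` by the hockey-stick identity.
-/

theorem sum_range_choose_div_choose_add {K : Type*} [Field K] [CharZero K] {n s : ℕ}
    (hs : s ≤ n) :
    ∑ j ∈ range (n - s + 1), ((n - s).choose j : K) / n.choose (s + j) = (n + 1) / (s + 1) := by
  have hterm : ∀ j ∈ range (n - s + 1),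
      ((n - s).choose j : K) / n.choose (s + j) = ((j + s).choose s : K) / n.choose s := by
    intro j hj
    have hsj : s + j ≤ n := by rw [mem_range] at hj; omega
    have hmul := Nat.choose_mul (n := n) (Nat.le_add_right s j)
    rw [Nat.add_sub_cancel_left] at hmul
    rw [div_eq_div_iff (by exact_mod_cast (Nat.choose_pos hsj).ne')
      (by exact_mod_cast (Nat.choose_pos hs).ne'), add_comm j s]
    exact_mod_cast by linarith [hmul]
  rw [sum_congr rfl hterm, ← sum_div, ← Nat.cast_sum, Nat.sum_range_add_choose,
    Nat.sub_add_cancel hs, div_eq_div_iff (by exact_mod_cast (Nat.choose_pos hs).ne')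
      (Nat.cast_add_one_ne_zero s)]
  exact_mod_cast (Nat.add_one_mul_choose_eq n s).symm

theorem sum_superset_inv_choose_card {α : Type*} [Fintype α] [DecidableEq α]
    {K : Type*} [Field K] [CharZero K] (F : Finset α) :
    ∑ W with F ⊆ W, ((Fintype.card α).choose W.card : K)⁻¹
      = (Fintype.card α + 1) / (F.card + 1) := by
  have hsupersets : ({W | F ⊆ W} : Finset (Finset α)) = (univ \ F).powerset.image (F ∪ ·) := by
    rw [← Icc_eq_image_powerset (subset_univ F), Icc_eq_filter_powerset, powerset_univ]
  have hdisj : ∀ S ∈ (univ \ F).powerset, Disjoint F S := fun S hS =>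
    disjoint_of_subset_right (mem_powerset.mp hS) disjoint_sdiff
  rw [hsupersets, sum_image fun S hS T hT hST => by
      rw [← union_sdiff_cancel_left (hdisj S hS), hST, union_sdiff_cancel_left (hdisj T hT)]]
  rw [sum_congr rfl fun S hS => by rw [card_union_of_disjoint (hdisj S hS)]]
  rw [sum_powerset_apply_card (fun m => ((Fintype.card α).choose (F.card + m) : K)⁻¹),
    card_univ_sdiff]
  simp_rw [nsmul_eq_mul, ← div_eq_mul_inv]
  exact sum_range_choose_div_choose_add F.card_le_univ

theorem tau_alternating_sum_fvector_general {α : Type*} [Fintype α] [DecidableEq α] (d : ℕ)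
    (K : Finset (Finset α))
    (hdim : ∀ F ∈ K, F.card ≤ d + 1) :
    ((Fintype.card α : ℚ) + 1)⁻¹ *
        ∑ W : Finset α,
          (∑ F ∈ K.filter (fun F => F ⊆ W), (-1 : ℚ) ^ (F.card + 1)) /
            ((Fintype.card α).choose W.card : ℚ)
      = ∑ s ∈ Finset.range (d + 2),
          (-1 : ℚ) ^ (s + 1) * ((K.filter fun F => F.card = s).card : ℚ) / ((s : ℚ) + 1) := by
  calc _ = ((Fintype.card α : ℚ) + 1)⁻¹ * ∑ F ∈ K,
          (-1 : ℚ) ^ (F.card + 1) * ∑ W with F ⊆ W, ((Fintype.card α).choose W.card : ℚ)⁻¹ := by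
        congr 1
        simp only [div_eq_mul_inv, sum_mul, mul_sum]
        exact sum_comm' fun W F => by simp [and_comm]
    _ = ∑ F ∈ K, (-1 : ℚ) ^ (F.card + 1) / (F.card + 1) := by
        simp only [sum_superset_inv_choose_card, mul_sum]
        exact sum_congr rfl fun F _ => by field_simp
    _ = _ := by
        rw [← sum_fiberwise_of_maps_to fun F hF => mem_range.mpr (Nat.lt_succ_of_le (hdim F hF))]
        refine sum_congr rfl fun s _ => ?_
        rw [sum_congr rfl fun F hF => by rw [(mem_filter.mp hF).2], sum_const, nsmul_eq_mul]
        ring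

/-- for a simplicial complex `C` of dimension `d` on a finite vertex set `V`
with `|V| = n`, `(1/(n+1)) · Σ_{W ⊆ V} χ̃(C[W])/C(n,|W|) = Σ_{k=−1}^{d} (−1)^k f_k/(k+2)`,
where `χ̃` is the reduced Euler characteristic (a face `F` contributes `(−1)^{|F|−1}`) and
`f_k` is the number of faces of size `k+1` (reindexed below by the size `s = k+1`). -/
theorem tau_alternating_sum_fvector {α : Type*} [Fintype α] [DecidableEq α] (d : ℕ)
    (K : Finset (Finset α))
    (hclosed : ∀ F ∈ K, ∀ F' ⊆ F, F' ∈ K)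
    (hempty : (∅ : Finset α) ∈ K)
    (hvert : ∀ v : α, {v} ∈ K)
    (hdim : ∀ F ∈ K, F.card ≤ d + 1)
    (hdim' : ∃ F ∈ K, F.card = d + 1) :
    ((Fintype.card α : ℚ) + 1)⁻¹ *
        ∑ W : Finset α,
          (∑ F ∈ K.filter (fun F => F ⊆ W), (-1 : ℚ) ^ (F.card + 1)) /
            ((Fintype.card α).choose W.card : ℚ)
      = ∑ s ∈ Finset.range (d + 2),
          (-1 : ℚ) ^ (s + 1) * ((K.filter fun F => F.card = s).card : ℚ) / ((s : ℚ) + 1) :=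
  tau_alternating_sum_fvector_general d K hdim
end

section
/- Let G be the graph obtained from the complete graph on n vertices by deleting exactly two distinct edges. If the two deleted edges are vertex-disjoint (so n ≥ 4), then τ₀(G) = 2/((n+1)·C(n,2)); if the two deleted edges share a vertex (so n ≥ 3), then τ₀(G) = (1/(n+1))·(2/C(n,2) + 1/C(n,3)). (This computes τ₀ of any combinatorial manifold from whose 1-skeleton exactly two edges are missing.) -/
open Finset

/-!
In `G = K_V` minus a set `E` of edges, the subgraph induced on `W` is connected as soon as the two
ends of every deleted edge inside `W` have a common neighbour in `W`. With two deleted edges this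
fails only when `W` is one of the deleted edges, or, if they share a vertex `a`, the path
`b - a - c` they span; each such `W` has exactly two components (`a` isolated, the rest
connected), so `τ₀` is a sum of `1 / C(n, |W|)` over these few sets.
-/

namespace SimpleGraph

variable {α : Type*} {G : SimpleGraph α}

theorem preconnected_of_exists_common_adj
    (h : ∀ p q, p ≠ q → ¬ G.Adj p q → ∃ m, G.Adj p m ∧ G.Adj m q) : G.Preconnected := by
  intro p q
  by_cases hpq : p = q
  · exact hpq ▸ Reachable.refl p
  by_cases hadj : G.Adj p q
  · exact hadj.reachable
  obtain ⟨m, hpm, hmq⟩ := h p q hpq hadj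
  exact hpm.reachable.trans hmq.reachable

theorem card_connectedComponent_eq_two {a b : α} (hab : a ≠ b) (ha : ∀ z, ¬ G.Adj a z)
    (hb : ∀ z, z ≠ a → G.Reachable b z) : Nat.card G.ConnectedComponent = 2 := by
  have hna : ∀ z, G.Reachable a z → z = a := by
    rintro z ⟨_ | ⟨hadj, _⟩⟩
    exacts [rfl, (ha _ hadj).elim]
  rw [Nat.card_eq_two_iff]
  refine ⟨G.connectedComponentMk a, G.connectedComponentMk b, ?_, ?_⟩
  · rw [Ne, ConnectedComponent.eq]
    exact fun h => hab (hna b h).symm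
  · refine Set.eq_univ_of_forall (ConnectedComponent.ind fun z => ?_)
    by_cases hz : z = a
    · exact Or.inl (hz ▸ rfl)
    · exact Or.inr (ConnectedComponent.sound (hb z hz).symm)

variable {V : Type*} {E : Set (Sym2 V)} {W : Set V}

theorem induce_deleteEdges_top_adj {p q : W} :
    (((⊤ : SimpleGraph V).deleteEdges E).induce W).Adj p q ↔ (p : V) ≠ q ∧ s((p : V), q) ∉ E := by
  simp

theorem preconnected_induce_deleteEdges_top
    (h : ∀ e ∈ E, (∀ z ∈ e, z ∈ W) → ∃ m ∈ W, m ∉ e ∧ ∀ z ∈ e, s(z, m) ∉ E) :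
    (((⊤ : SimpleGraph V).deleteEdges E).induce W).Preconnected := by
  refine preconnected_of_exists_common_adj fun ⟨p, hp⟩ ⟨q, hq⟩ hpq hadj => ?_
  simp only [induce_deleteEdges_top_adj, ne_eq, Subtype.mk.injEq, not_and, not_not] at hpq hadj ⊢
  obtain ⟨m, hmW, hm, hmE⟩ := h _ (hadj hpq) fun z hz => by
    rcases Sym2.mem_iff.1 hz with rfl | rfl <;> assumption
  simp only [Sym2.mem_iff, not_or] at hm
  refine ⟨⟨m, hmW⟩, ⟨fun h => hm.1 h.symm, hmE p (Sym2.mem_mk_left p q)⟩, hm.2, ?_⟩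
  rw [Sym2.eq_swap]
  exact hmE q (Sym2.mem_mk_right p q)

theorem card_connectedComponent_induce_deleteEdges_top_eq_two {a b : V} (ha : a ∈ W) (hb : b ∈ W)
    (hab : a ≠ b) (hE : ∀ z ∈ W, z ≠ a → s(a, z) ∈ E) (hbE : ∀ z ∈ W, z ≠ a → z ≠ b → s(b, z) ∉ E) :
    Nat.card (((⊤ : SimpleGraph V).deleteEdges E).induce W).ConnectedComponent = 2 := by
  refine card_connectedComponent_eq_two (a := ⟨a, ha⟩) (b := ⟨b, hb⟩) (by simpa using hab) ?_ ?_
  · rintro ⟨z, hz⟩ hadj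
    rw [induce_deleteEdges_top_adj] at hadj
    exact hadj.2 (hE z hz (Ne.symm hadj.1))
  · rintro ⟨z, hz⟩ hza
    by_cases hzb : z = b
    · subst hzb; rfl
    · refine Adj.reachable ?_
      rw [induce_deleteEdges_top_adj]
      exact ⟨Ne.symm hzb, hbE z hz (by simpa using hza) hzb⟩

end SimpleGraph

open SimpleGraph

theorem tau0_eq_sum_of_card_connectedComponent {V : Type*} [Fintype V] (G : SimpleGraph V)
    (S : Finset (Finset V))
    (hS : ∀ W ∈ S, Nat.card (G.induce (W : Set V)).ConnectedComponent = 2)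
    (hconn : ∀ W : Finset V, W.Nonempty → W ∉ S → (G.induce (W : Set V)).Preconnected) :
    tau0 G = ((Fintype.card V : ℚ) + 1)⁻¹ * ∑ W ∈ S, 1 / ((Fintype.card V).choose #W : ℚ) := by
  rw [tau0, ← sum_subset (subset_univ S)]
  · congr 1
    refine sum_congr rfl fun W hW => ?_
    have hne : W.Nonempty := by
      rw [nonempty_iff_ne_empty]
      rintro rfl
      have := hS ∅ hW
      rw [coe_empty, Nat.card_of_isEmpty] at this
      omega
    rw [if_pos hne, hS W hW]
    norm_num
  · intro W _ hW
    split_ifs with hne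
    · have : Nonempty (W : Set V) := hne.coe_sort
      rw [Nat.card_eq_one_iff_unique.mpr
        ⟨(hconn W hne hW).subsingleton_connectedComponent, inferInstance⟩]
      simp
    · simp

section

variable {V : Type*} [DecidableEq V]

theorem exists_common_neighbor_of_disjoint_edges {u v x y : V} (hd : Disjoint ({u, v} : Finset V) {x, y})
    {W : Finset V} (hsub : ∀ z ∈ s(u, v), z ∈ (W : Set V)) (hW : W ≠ {u, v}) :
    ∃ m ∈ (W : Set V), m ∉ s(u, v) ∧
      ∀ z ∈ s(u, v), s(z, m) ∉ ({s(u, v), s(x, y)} : Set (Sym2 V)) := by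
  have huvW : {u, v} ⊆ W := by
    intro z hz
    exact hsub z (by simpa [Sym2.mem_iff] using hz)
  obtain ⟨m, hmW, hm⟩ := exists_of_ssubset (huvW.ssubset_of_ne hW.symm)
  replace hm : m ∉ s(u, v) := by simpa [Sym2.mem_iff] using hm
  refine ⟨m, hmW, hm, fun z hz hE => ?_⟩
  rcases hE with hE | hE
  · exact hm (hE ▸ Sym2.mem_mk_right z m)
  · have hzxy : z ∈ s(x, y) := hE ▸ Sym2.mem_mk_left z m
    exact disjoint_left.mp hd (by simpa [Sym2.mem_iff] using hz)
      (by simpa [Sym2.mem_iff] using hzxy)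

theorem exists_common_neighbor_of_adjacent_edges {a b c : V} {W : Finset V}
    (hsub : ∀ z ∈ s(a, b), z ∈ (W : Set V)) (hW₂ : W ≠ {a, b}) (hW₃ : W ≠ {a, b, c}) :
    ∃ m ∈ (W : Set V), m ∉ s(a, b) ∧
      ∀ z ∈ s(a, b), s(z, m) ∉ ({s(a, b), s(a, c)} : Set (Sym2 V)) := by
  have habW : {a, b} ⊆ W := by
    intro z hz
    exact hsub z (by simpa [Sym2.mem_iff] using hz)
  obtain ⟨m, hmW, hm⟩ : ∃ m ∈ W, m ∉ ({a, b, c} : Finset V) := by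
    by_cases hc : c ∈ W
    · have habcW : {a, b, c} ⊆ W := by
        simp only [insert_subset_iff, singleton_subset_iff]
        exact ⟨habW (by simp), habW (by simp), hc⟩
      exact exists_of_ssubset (habcW.ssubset_of_ne hW₃.symm)
    · obtain ⟨m, hmW, hm⟩ := exists_of_ssubset (habW.ssubset_of_ne hW₂.symm)
      refine ⟨m, hmW, ?_⟩
      simp only [mem_insert, mem_singleton, not_or] at hm ⊢
      exact ⟨hm.1, hm.2, fun h => hc (h ▸ hmW)⟩
  have hm_off : ∀ e ∈ ({s(a, b), s(a, c)} : Set (Sym2 V)), m ∉ e := by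
    simp only [mem_insert, mem_singleton, not_or] at hm
    rintro e (rfl | rfl) <;> simp [Sym2.mem_iff, hm.1, hm.2.1, hm.2.2]
  exact ⟨m, hmW, hm_off _ (by simp), fun z _ hE => hm_off _ hE (Sym2.mem_mk_right z m)⟩

variable [Fintype V]

theorem tau0_deleteEdges_top_of_disjoint {u v x y : V} (huv : u ≠ v) (hxy : x ≠ y)
    (hd : Disjoint ({u, v} : Finset V) {x, y}) :
    tau0 ((⊤ : SimpleGraph V).deleteEdges {s(u, v), s(x, y)})
      = 2 / (((Fintype.card V : ℚ) + 1) * ((Fintype.card V).choose 2 : ℚ)) := by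
  have hne : ({u, v} : Finset V) ≠ {x, y} := fun h =>
    (insert_nonempty u {v}).ne_empty (disjoint_self_iff_empty _ |>.mp (h ▸ hd))
  rw [tau0_eq_sum_of_card_connectedComponent _ {{u, v}, {x, y}}, sum_pair hne, card_pair huv,
    card_pair hxy]
  · simp only [div_eq_mul_inv, mul_inv]
    ring
  · simp only [mem_insert, mem_singleton]
    rintro W (rfl | rfl)
    · exact card_connectedComponent_induce_deleteEdges_top_eq_two (a := u) (b := v)
        (by simp) (by simp) huv (by simp_all) (by simp_all)
    · exact card_connectedComponent_induce_deleteEdges_top_eq_two (a := x) (b := y)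
        (by simp) (by simp) hxy (by simp_all) (by simp_all)
  · simp only [mem_insert, mem_singleton, not_or]
    rintro W - ⟨hW₁, hW₂⟩
    refine preconnected_induce_deleteEdges_top ?_
    rintro e (rfl | rfl) he
    · exact exists_common_neighbor_of_disjoint_edges hd he hW₁
    · rw [Set.pair_comm]
      exact exists_common_neighbor_of_disjoint_edges hd.symm he hW₂

theorem tau0_deleteEdges_top_of_adjacent {a b c : V} (hab : a ≠ b) (hac : a ≠ c) (hbc : b ≠ c) :
    tau0 ((⊤ : SimpleGraph V).deleteEdges {s(a, b), s(a, c)})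
      = ((Fintype.card V : ℚ) + 1)⁻¹ *
          (2 / ((Fintype.card V).choose 2 : ℚ) + 1 / ((Fintype.card V).choose 3 : ℚ)) := by
  have hcard : #({a, b, c} : Finset V) = 3 := card_eq_three.mpr ⟨a, b, c, hab, hac, hbc, rfl⟩
  have hnotMem : ({a, b} : Finset V) ∉ ({{a, c}, {a, b, c}} : Finset (Finset V)) := by
    simp only [mem_insert, mem_singleton, not_or]
    refine ⟨fun h => ?_, fun h => ?_⟩
    · have : b ∈ ({a, c} : Finset V) := h ▸ by simp
      simp_all
    · simpa [card_pair hab, hcard] using congrArg card h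
  have hne : ({a, c} : Finset V) ≠ {a, b, c} := fun h => by
    simpa [card_pair hac, hcard] using congrArg card h
  rw [tau0_eq_sum_of_card_connectedComponent _ {{a, b}, {a, c}, {a, b, c}}, sum_insert hnotMem,
    sum_pair hne, card_pair hab, card_pair hac, hcard]
  · ring
  · simp only [mem_insert, mem_singleton]
    rintro W (rfl | rfl | rfl)
    · exact card_connectedComponent_induce_deleteEdges_top_eq_two (a := a) (b := b)
        (by simp) (by simp) hab (by simp_all) (by simp_all)
    · exact card_connectedComponent_induce_deleteEdges_top_eq_two (a := a) (b := c)
        (by simp) (by simp) hac (by simp_all) (by simp_all)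
    · exact card_connectedComponent_induce_deleteEdges_top_eq_two (a := a) (b := b)
        (by simp) (by simp) hab (by simp_all) (by aesop)
  · simp only [mem_insert, mem_singleton, not_or]
    rintro W - ⟨hW₁, hW₂, hW₃⟩
    refine preconnected_induce_deleteEdges_top ?_
    rintro e (rfl | rfl) he
    · exact exists_common_neighbor_of_adjacent_edges he hW₁ hW₃
    · rw [Set.pair_comm]
      exact exists_common_neighbor_of_adjacent_edges he hW₂ (by rwa [pair_comm c b])

end

/-- let `G` be the complete graph on `n` vertices minus two distinct edges
`{u,v}` and `{x,y}`. If the two deleted edges are vertex-disjoint then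
`τ₀(G) = 2/((n+1)·C(n,2))`; if they share a vertex then
`τ₀(G) = (1/(n+1))·(2/C(n,2) + 1/C(n,3))`. -/
theorem tau0_complete_minus_two_edges {V : Type*} [Fintype V] [DecidableEq V]
    (u v x y : V) (huv : u ≠ v) (hxy : x ≠ y) (hne : s(u, v) ≠ s(x, y)) :
    (Disjoint ({u, v} : Finset V) ({x, y} : Finset V) →
      tau0 ((⊤ : SimpleGraph V).deleteEdges {s(u, v), s(x, y)})
        = 2 / (((Fintype.card V : ℚ) + 1) * ((Fintype.card V).choose 2 : ℚ))) ∧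
    (¬ Disjoint ({u, v} : Finset V) ({x, y} : Finset V) →
      tau0 ((⊤ : SimpleGraph V).deleteEdges {s(u, v), s(x, y)})
        = ((Fintype.card V : ℚ) + 1)⁻¹ *
            (2 / ((Fintype.card V).choose 2 : ℚ) + 1 / ((Fintype.card V).choose 3 : ℚ))) := by
  refine ⟨tau0_deleteEdges_top_of_disjoint huv hxy, fun hadjacent => ?_⟩
  obtain ⟨a, hauv, haxy⟩ := not_disjoint_iff.mp hadjacent
  rw [← Sym2.toFinset_mk_eq, Sym2.mem_toFinset] at hauv haxy
  obtain ⟨b, hb⟩ : ∃ b, s(a, b) = s(u, v) := ⟨_, Sym2.other_spec hauv⟩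
  obtain ⟨c, hc⟩ : ∃ c, s(a, c) = s(x, y) := ⟨_, Sym2.other_spec haxy⟩
  have hab : a ≠ b := fun h => huv (Sym2.mk_isDiag_iff.mp (hb ▸ Sym2.mk_isDiag_iff.mpr h))
  have hac : a ≠ c := fun h => hxy (Sym2.mk_isDiag_iff.mp (hc ▸ Sym2.mk_isDiag_iff.mpr h))
  rw [← hb, ← hc] at hne ⊢
  exact tau0_deleteEdges_top_of_adjacent hab hac fun h => hne (h ▸ rfl)
end
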